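/- arXiv:math/9504224 — 9 statements merged into one kernel-verified Lean document; each statement's English description precedes it below -/
import Mathlib

section
/- For every subspace M of E and every vector x ∈ E, one has (M + Kx)^⊥⊥ = M^⊥⊥ + Kx. -/
/-- A (nondegenerate) Hermitian space: a division ring `K` with an involution,
a left `K`-vector space `E`, and a Hermitian form on `E`. -/
structure HermitianSpace (K E : Type*) [DivisionRing K] [AddCommGroup E] [Module K E] where
  star : K → K
  star_add : ∀ a b : K, star (a + b) = star a + star b
  star_mul : ∀ a b : K, star (a * b) = star b * star a
  star_star : ∀ a : K, star (star a) = a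
  form : E → E → K
  form_add_left : ∀ x y z : E, form (x + y) z = form x z + form y z
  form_add_right : ∀ x y z : E, form x (y + z) = form x y + form x z
  form_smul_left : ∀ (ρ : K) (x y : E), form (ρ • x) y = ρ * form x y
  form_smul_right : ∀ (ρ : K) (x y : E), form x (ρ • y) = form x y * star ρ
  nondeg : ∀ a : E, (∀ x : E, form a x = 0) → a = 0
  hermitian : ∀ x y : E, star (form x y) = form y x

namespace HermitianSpace

variable {K E : Type*} [DivisionRing K] [AddCommGroup E] [Module K E]

/-- The orthogonal companion `M^⊥` of a subspace `M`. -/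
def perp (h : HermitianSpace K E) (M : Submodule K E) : Submodule K E where
  carrier := {x : E | ∀ m ∈ M, h.form x m = 0}
  add_mem' := fun {a b} ha hb => by
    intro m hm
    rw [h.form_add_left, ha m hm, hb m hm, add_zero]
  zero_mem' := by
    intro m hm
    have h0 : h.form ((0 : K) • (0 : E)) m = 0 * h.form 0 m := h.form_smul_left 0 0 m
    simpa using h0
  smul_mem' := fun c a ha => by
    intro m hm
    rw [h.form_smul_left, ha m hm, mul_zero]

/-- The form is orthomodular when `M + M^⊥ = E` for every closed subspace `M`. -/
def Orthomodular (h : HermitianSpace K E) : Prop :=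
  ∀ M : Submodule K E, h.perp (h.perp M) = M → M ⊔ h.perp M = ⊤

/-- The form is anisotropic when `⟨x, x⟩ ≠ 0` for every nonzero `x`. -/
def Anisotropic (h : HermitianSpace K E) : Prop :=
  ∀ x : E, x ≠ 0 → h.form x x ≠ 0

end HermitianSpace

namespace HermitianSpace

variable {K E : Type*} [DivisionRing K] [AddCommGroup E] [Module K E]

lemma mem_perp (h : HermitianSpace K E) {M : Submodule K E} {v : E} :
    v ∈ h.perp M ↔ ∀ m ∈ M, h.form v m = 0 := Iff.rfl

lemma star_zero' (h : HermitianSpace K E) : h.star 0 = 0 := by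
  have := h.star_add 0 0
  simpa using this.symm

lemma form_zero_right (h : HermitianSpace K E) (v : E) : h.form v 0 = 0 := by
  have := h.form_smul_right 0 v (0 : E)
  simpa [h.star_zero'] using this

lemma le_biperp (h : HermitianSpace K E) (M : Submodule K E) :
    M ≤ h.perp (h.perp M) := by
  intro m hm u hu
  have := hu m hm
  have h2 : h.star (h.form u m) = h.form m u := h.hermitian u m
  rw [this, h.star_zero'] at h2
  exact h2.symm

lemma perp_antitone (h : HermitianSpace K E) {M N : Submodule K E} (hMN : M ≤ N) :
    h.perp N ≤ h.perp M := fun v hv m hm => hv m (hMN hm)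

lemma perp_perp_perp (h : HermitianSpace K E) (M : Submodule K E) :
    h.perp (h.perp (h.perp M)) = h.perp M :=
  le_antisymm (h.perp_antitone (h.le_biperp M)) (h.le_biperp (h.perp M))

lemma perp_sup (h : HermitianSpace K E) (A B : Submodule K E) :
    h.perp (A ⊔ B) = h.perp A ⊓ h.perp B := by
  apply le_antisymm
  · exact le_inf (h.perp_antitone le_sup_left) (h.perp_antitone le_sup_right)
  · rintro v ⟨hA, hB⟩ m hm
    rcases Submodule.mem_sup.mp hm with ⟨a, ha, b, hb, rfl⟩
    rw [h.form_add_right, hA a ha, hB b hb, add_zero]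

lemma form_zero_left (h : HermitianSpace K E) (v : E) : h.form 0 v = 0 := by
  have := h.form_smul_left 0 (0 : E) v
  simpa using this

lemma star_neg' (h : HermitianSpace K E) (a : K) : h.star (-a) = - h.star a := by
  have h1 := h.star_add a (-a)
  rw [add_neg_cancel, h.star_zero'] at h1
  exact eq_neg_of_add_eq_zero_right h1.symm

lemma form_neg_right (h : HermitianSpace K E) (v w : E) :
    h.form v (-w) = - h.form v w := by
  have h1 := h.form_add_right v w (-w)
  rw [add_neg_cancel, h.form_zero_right] at h1
  exact eq_neg_of_add_eq_zero_right h1.symm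

lemma form_neg_left (h : HermitianSpace K E) (v w : E) :
    h.form (-v) w = - h.form v w := by
  have h1 := h.form_add_left v (-v) w
  rw [add_neg_cancel, h.form_zero_left] at h1
  exact eq_neg_of_add_eq_zero_right h1.symm

lemma form_sub_right (h : HermitianSpace K E) (v w u : E) :
    h.form v (w - u) = h.form v w - h.form v u := by
  rw [sub_eq_add_neg, h.form_add_right, h.form_neg_right, sub_eq_add_neg]

lemma form_sub_left (h : HermitianSpace K E) (v w u : E) :
    h.form (v - w) u = h.form v u - h.form w u := by
  rw [sub_eq_add_neg, h.form_add_left, h.form_neg_left, sub_eq_add_neg]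

lemma biperp_closed_sup_span (h : HermitianSpace K E) (F : Submodule K E)
    (hF : h.perp (h.perp F) = F) (x : E) :
    h.perp (h.perp (F ⊔ Submodule.span K {x})) = F ⊔ Submodule.span K {x} := by
  refine le_antisymm ?_ (h.le_biperp _)
  by_cases hx : x ∈ F
  · have hspan : Submodule.span K {x} ≤ F := Submodule.span_le.mpr (by simpa using hx)
    rw [sup_eq_left.mpr hspan, hF]
  · have hx' : ¬ ∀ u ∈ h.perp F, h.form x u = 0 := fun hall => hx (hF ▸ hall)
    push_neg at hx'
    obtain ⟨y, hy, hxy⟩ := hx'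
    intro z hz
    set c : K := h.form z y * (h.form x y)⁻¹ with hc
    have key : z - c • x ∈ F := by
      rw [← hF]
      intro u hu
      set d : K := h.star ((h.form x y)⁻¹ * h.form x u) with hd
      have hstard : h.star d = (h.form x y)⁻¹ * h.form x u := h.star_star _
      have hxu' : h.form x (u - d • y) = 0 := by
        rw [h.form_sub_right, h.form_smul_right, hstard, ← mul_assoc,
          mul_inv_cancel₀ hxy, one_mul, sub_self]
      have hu' : u - d • y ∈ h.perp (F ⊔ Submodule.span K {x}) := by
        rw [h.perp_sup]
        refine ⟨sub_mem hu (Submodule.smul_mem _ _ hy), ?_⟩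
        intro m hm
        rcases Submodule.mem_span_singleton.mp hm with ⟨a, rfl⟩
        rw [h.form_smul_right]
        have : h.form (u - d • y) x = 0 := by
          rw [← h.hermitian x (u - d • y), hxu', h.star_zero']
        rw [this, zero_mul]
      have hzu' : h.form z (u - d • y) = 0 := hz _ hu'
      rw [h.form_sub_right, h.form_smul_right, hstard, sub_eq_zero] at hzu'
      rw [h.form_sub_left, h.form_smul_left, hzu', hc, mul_assoc, sub_self]
    have hzeq : z = (z - c • x) + c • x := by abel
    rw [hzeq]
    exact Submodule.add_mem _ (Submodule.mem_sup_left key)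
      (Submodule.mem_sup_right (Submodule.smul_mem _ _ (Submodule.mem_span_singleton_self x)))

end HermitianSpace

/-- For every subspace `M` and every vector `x`, `(M + Kx)^pp = M^pp + Kx`. -/
theorem biperp_sup_span_singleton {K E : Type*} [DivisionRing K] [AddCommGroup E] [Module K E]
    (h : HermitianSpace K E) (M : Submodule K E) (x : E) :
    h.perp (h.perp (M ⊔ Submodule.span K {x})) =
      h.perp (h.perp M) ⊔ Submodule.span K {x} := by
  have h1 : h.perp (M ⊔ Submodule.span K {x})
      = h.perp (h.perp (h.perp M) ⊔ Submodule.span K {x}) := by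
    rw [h.perp_sup, h.perp_sup, h.perp_perp_perp]
  rw [h1, h.biperp_closed_sup_span _ (h.perp_perp_perp (h.perp M)) x]
end

section
/- (Birkhoff–von Neumann, Hermitian case.) Suppose K has characteristic different from 2, E has dimension at least 3 over K (infinite dimension allowed), ⊥ is a polarity on E, and there exists e ∈ E with e ∉ (Ke)^⊥. Then there exist an involution ρ ↦ ρ* on K (an additive map with (ρσ)* = σ*ρ* and ρ** = ρ) and a form ⟨·,·⟩ : E × E → K which is additive in each variable, satisfies ⟨ρx, y⟩ = ρ⟨x, y⟩, ⟨x, ρy⟩ = ⟨x, y⟩ρ*, and ⟨x, y⟩* = ⟨y, x⟩ for all ρ ∈ K and x, y ∈ E, and is nondegenerate (⟨a, x⟩ = 0 for all x implies a = 0), such that for every subspace M of E, M^⊥ = {x ∈ E : ⟨x, m⟩ = 0 for all m ∈ M}. -/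
/-- A polarity on a left vector space `E` over a division ring `K`: an
inclusion-reversing map on subspaces with `E^⊥ = 0` such that the perp of every
line `Kx` (`x ≠ 0`) is a hyperplane and `(Kx)^⊥⊥ = Kx`. -/
structure Polarity (K E : Type*) [DivisionRing K] [AddCommGroup E] [Module K E] where
  perp : Submodule K E → Submodule K E
  perp_top : perp ⊤ = ⊥
  perp_antitone : ∀ {L M : Submodule K E}, L ≤ M → perp M ≤ perp L
  line_perp_ne_top : ∀ x : E, x ≠ 0 → perp (Submodule.span K {x}) ≠ ⊤
  line_perp_hyperplane :
    ∀ x : E, x ≠ 0 → ∃ v : E, perp (Submodule.span K {x}) ⊔ Submodule.span K {v} = ⊤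
  line_biperp : ∀ x : E, x ≠ 0 →
    perp (perp (Submodule.span K {x})) = Submodule.span K {x}

/-!
Write `y^⊥` for the polar of the line `K y`; orthogonality `x ∈ y^⊥` is symmetric. Normalize at
the non-isotropic vector `e`: for `e ∉ y^⊥` let `f_y` (`p.coord e y`) be the linear form with
kernel `y^⊥` and `f_y e = 1`, and work on the affine chart `{x | f_e x = 1}`. For chart points the
value `f_y x` determines `f_x y`: two pairs can be moved, without changing either value, to pairs
sharing a point (this needs a common nonzero vector of two hyperplanes, from `dim E ≥ 3`, and a
chart point off two hyperplanes, from `2 ≠ 0`). So `σ (f_y x) = f_x y` defines a map `σ`.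

The linear form `f_{e+a+b} - f_{e+a} - f_{e+b} + f_e` vanishes on `a^⊥` and on `b^⊥`, hence
everywhere if `K a ≠ K b`, so `w ↦ f_{e+w} - f_e` is additive on `e^⊥`. As `σ` exchanges the
affine map `y ↦ f_y x` with the linear form `f_x`, it is additive. Similarly `f_{e+ρw} - f_e` and
`f_{e+w} - f_e` both vanish on `w^⊥`, which gives `σ (ρ μ) = σ μ * σ ρ`. The form is
`B x y = f_y x` for chart points `y`, extended σ-semilinearly in `y`.
-/

open Submodule

namespace Submodule

variable {K E : Type*} [DivisionRing K] [AddCommGroup E] [Module K E]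

theorem not_le_span_singleton_of_isCoatom {H : Submodule K E} (hH : IsCoatom H)
    (hdim : 3 ≤ Module.rank K E) (a : E) : ¬ H ≤ K ∙ a := by
  classical
  intro hle
  obtain ⟨v, -, hv⟩ := SetLike.exists_of_lt hH.lt_top
  have htop : span K ((({a, v} : Finset E)) : Set E) = ⊤ := by
    rw [eq_top_iff, ← (isCompl_span_singleton_of_isCoatom_of_notMem hH hv).sup_eq_top,
      Finset.coe_pair, span_insert]
    exact sup_le_sup_right hle _
  have := (rank_span_finset_le (R := K) ({a, v} : Finset E)).trans
    (Nat.cast_le.mpr Finset.card_le_two)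
  rw [htop, rank_top] at this
  exact absurd (hdim.trans this) (by norm_num)

theorem exists_ne_zero_mem_inf_of_isCoatom {H₁ H₂ : Submodule K E} (h₁ : IsCoatom H₁)
    (h₂ : IsCoatom H₂) (hdim : 3 ≤ Module.rank K E) : ∃ w ∈ H₁ ⊓ H₂, w ≠ 0 := by
  obtain ⟨a, ha, ha0⟩ := SetLike.not_le_iff_exists.mp
    (not_le_span_singleton_of_isCoatom h₁ hdim 0)
  rw [span_zero_singleton, mem_bot] at ha0
  by_cases haH : a ∈ H₂
  · exact ⟨a, ⟨ha, haH⟩, ha0⟩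
  obtain ⟨b, hb, hba⟩ :=
    SetLike.not_le_iff_exists.mp (not_le_span_singleton_of_isCoatom h₁ hdim a)
  have hb' : b ∈ H₂ ⊔ K ∙ a := by
    rw [(isCompl_span_singleton_of_isCoatom_of_notMem h₂ haH).sup_eq_top]; trivial
  obtain ⟨w, hw, z, hz, rfl⟩ := mem_sup.mp hb'
  have hzH : z ∈ H₁ := (span_singleton_le_iff_mem a H₁).mpr ha hz
  refine ⟨w, ⟨by simpa using H₁.sub_mem hb hzH, hw⟩, ?_⟩
  rintro rfl
  exact hba (by simpa using hz)

-- The coordinate along `a` for `E = H ⊕ K a`; zero unless `H` is a hyperplane missing `a`.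
open Classical in
noncomputable def lineCoord (H : Submodule K E) (a : E) : E →ₗ[K] K :=
  if h : IsCoatom H ∧ a ∉ H then
    LinearEquiv.coord K E a (ne_of_mem_of_not_mem H.zero_mem h.2).symm ∘ₗ
      (K ∙ a).projectionOnto H (isCompl_span_singleton_of_isCoatom_of_notMem h.1 h.2).symm
  else 0

theorem sub_lineCoord_smul_mem {H : Submodule K E} {a : E} (hH : IsCoatom H) (ha : a ∉ H)
    (z : E) : z - lineCoord H a z • a ∈ H := by
  rw [lineCoord, dif_pos ⟨hH, ha⟩, LinearMap.comp_apply, LinearEquiv.coe_coe,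
    LinearEquiv.coord_apply_smul, coe_projectionOnto_apply]
  exact sub_projection_mem _ z

theorem lineCoord_eq_iff {H : Submodule K E} {a z : E} {μ : K} (hH : IsCoatom H) (ha : a ∉ H) :
    lineCoord H a z = μ ↔ z - μ • a ∈ H := by
  refine ⟨fun h => h ▸ sub_lineCoord_smul_mem hH ha z, fun hμ => ?_⟩
  have h := H.sub_mem hμ (sub_lineCoord_smul_mem hH ha z)
  rw [sub_sub_sub_cancel_left, ← sub_smul] at h
  by_contra hne
  exact ha ((smul_mem_iff H (sub_ne_zero.mpr hne)).mp h)

theorem span_singleton_ne_of_mem_of_notMem {a x y : E} (hx : x ∈ K ∙ a) (hy : y ∉ K ∙ a) :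
    (K ∙ x) ≠ K ∙ y := fun h =>
  hy ((span_singleton_le_iff_mem y _).mp (h ▸ (span_singleton_le_iff_mem x _).mpr hx))

theorem map_add_of_span_singleton_ne {A : Type*} [AddCommGroup A] {S : Submodule K E}
    (f : E → A) (hS : ∀ a, ¬ S ≤ K ∙ a)
    (hf : ∀ a ∈ S, ∀ b ∈ S, (K ∙ a) ≠ (K ∙ b) → f (a + b) = f a + f b)
    {a b : E} (ha : a ∈ S) (hb : b ∈ S) : f (a + b) = f a + f b := by
  by_cases hab : (K ∙ a) = K ∙ b
  swap
  · exact hf a ha b hb hab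
  obtain ⟨w, hw, hwa⟩ := SetLike.not_le_iff_exists.mp (hS a)
  have hba : b ∈ K ∙ a := hab ▸ mem_span_singleton_self b
  have hbw : b + w ∉ K ∙ a := fun h => hwa (by simpa using sub_mem h hba)
  apply add_right_cancel (b := f w)
  calc f (a + b) + f w = f (a + (b + w)) := by
        rw [← add_assoc, hf _ (add_mem ha hb) w hw
          (span_singleton_ne_of_mem_of_notMem (add_mem (mem_span_singleton_self a) hba) hwa)]
    _ = f a + f b + f w := by
        rw [hf a ha _ (add_mem hb hw) (span_singleton_ne_of_mem_of_notMem
          (mem_span_singleton_self a) hbw), hf b hb w hw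
          (span_singleton_ne_of_mem_of_notMem hba hwa), add_assoc]

end Submodule

namespace Polarity

variable {K E : Type*} [DivisionRing K] [AddCommGroup E] [Module K E] (p : Polarity K E)

def orth (x : E) : Submodule K E := p.perp (K ∙ x)

theorem perp_bot : p.perp ⊥ = ⊤ := by
  refine eq_top_iff.mpr fun x _ => ?_
  rcases eq_or_ne x 0 with rfl | hx
  · exact zero_mem _
  · exact p.perp_antitone bot_le ((p.line_biperp x hx).symm ▸ mem_span_singleton_self x)

theorem perp_orth (x : E) : p.perp (p.orth x) = K ∙ x := by
  rcases eq_or_ne x 0 with rfl | hx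
  · rw [orth, span_zero_singleton, perp_bot, perp_top]
  · exact p.line_biperp x hx

theorem orth_zero : p.orth 0 = ⊤ := by
  rw [orth, span_zero_singleton, perp_bot]

variable {p}

theorem mem_orth_comm {x y : E} : x ∈ p.orth y ↔ y ∈ p.orth x := by
  suffices ∀ x y : E, x ∈ p.orth y → y ∈ p.orth x from ⟨this x y, this y x⟩
  intro x y hxy
  have := p.perp_antitone ((span_singleton_le_iff_mem x _).mpr hxy)
  exact this ((p.perp_orth y).symm ▸ mem_span_singleton_self y)

theorem mem_perp_iff {M : Submodule K E} {x : E} :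
    x ∈ p.perp M ↔ ∀ m ∈ M, x ∈ p.orth m := by
  refine ⟨fun hx m hm => p.perp_antitone ((span_singleton_le_iff_mem m M).mpr hm) hx,
    fun hx => ?_⟩
  have := p.perp_antitone fun m hm => mem_orth_comm.mp (hx m hm)
  exact this ((p.perp_orth x).symm ▸ mem_span_singleton_self x)

theorem ne_zero_of_notMem_orth {x y : E} (h : x ∉ p.orth y) : y ≠ 0 := by
  rintro rfl
  exact h (p.orth_zero ▸ trivial)

theorem orth_le_orth_iff {x y : E} : p.orth x ≤ p.orth y ↔ y ∈ K ∙ x := by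
  rw [← span_singleton_le_iff_mem]
  refine ⟨fun h => ?_, fun h => p.perp_antitone h⟩
  simpa only [perp_orth] using p.perp_antitone h

theorem orth_smul {ρ : K} (hρ : ρ ≠ 0) (x : E) : p.orth (ρ • x) = p.orth x := by
  rw [orth, orth, span_singleton_smul_eq (Ne.isUnit hρ)]

theorem isCoatom_orth {x : E} (hx : x ≠ 0) : IsCoatom (p.orth x) := by
  obtain ⟨v, hv⟩ : ∃ v, p.orth x ⊔ K ∙ v = ⊤ := p.line_perp_hyperplane x hx
  have hvx : v ∉ p.orth x := fun h => p.line_perp_ne_top x hx <| by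
    rwa [sup_eq_left.mpr ((span_singleton_le_iff_mem v _).mpr h)] at hv
  rw [← covBy_top_iff, ← hv, sup_comm]
  exact covBy_span_singleton_sup hvx

theorem orth_sup_orth_eq_top {x y : E} (h : (K ∙ x) ≠ K ∙ y) :
    p.orth x ⊔ p.orth y = ⊤ := by
  rcases eq_or_ne x 0 with rfl | hx
  · rw [orth_zero, top_sup_eq]
  rcases eq_or_ne y 0 with rfl | hy
  · rw [orth_zero, sup_top_eq]
  refine (isCoatom_orth hx).sup_eq_top_of_ne (isCoatom_orth hy) fun hxy => h ?_
  rw [← p.perp_orth, hxy, perp_orth]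

/-! ### Coordinates normalized at `e` -/

noncomputable def coord (p : Polarity K E) (e y : E) : E →ₗ[K] K := lineCoord (p.orth y) e

variable {e : E}

theorem coord_eq_iff {y z : E} {μ : K} (hy : e ∉ p.orth y) :
    p.coord e y z = μ ↔ z - μ • e ∈ p.orth y :=
  lineCoord_eq_iff (isCoatom_orth (ne_zero_of_notMem_orth hy)) hy

theorem sub_coord_smul_mem {y : E} (hy : e ∉ p.orth y) (z : E) :
    z - p.coord e y z • e ∈ p.orth y :=
  (coord_eq_iff hy).mp rfl

theorem coord_self {y : E} (hy : e ∉ p.orth y) : p.coord e y e = 1 :=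
  (coord_eq_iff hy).mpr (by simp)

theorem coord_eq_zero_iff {y z : E} (hy : e ∉ p.orth y) :
    p.coord e y z = 0 ↔ z ∈ p.orth y := by
  simpa using coord_eq_iff (μ := 0) hy

theorem notMem_orth_of_coord_eq_one (he : e ∉ p.orth e) {y : E} (hy : p.coord e e y = 1) :
    e ∉ p.orth y :=
  fun h => one_ne_zero (hy ▸ (coord_eq_zero_iff he).mpr (mem_orth_comm.mp h))

theorem coord_add_eq_one (he : e ∉ p.orth e) {y w : E} (hy : p.coord e e y = 1)
    (hw : w ∈ p.orth e) : p.coord e e (y + w) = 1 := by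
  rw [map_add, hy, (coord_eq_zero_iff he).mpr hw, add_zero]

theorem sub_mem_orth_of_coord_eq_one (he : e ∉ p.orth e) {x y : E} (hx : p.coord e e x = 1)
    (hy : p.coord e e y = 1) : y - x ∈ p.orth e :=
  (coord_eq_zero_iff he).mp (by rw [map_sub, hx, hy, sub_self])

theorem coord_add_of_mem_orth (he : e ∉ p.orth e) {y w t : E} (hy : p.coord e e y = 1)
    (hw : w ∈ p.orth e) (ht : t ∈ p.orth w) : p.coord e (y + w) t = p.coord e y t := by
  rw [coord_eq_iff (notMem_orth_of_coord_eq_one he (coord_add_eq_one he hy hw)), mem_orth_comm]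
  have hty := sub_coord_smul_mem (notMem_orth_of_coord_eq_one he hy) t
  exact add_mem (mem_orth_comm.mp hty)
    (mem_orth_comm.mp (sub_mem ht (smul_mem _ _ (mem_orth_comm.mp hw))))

theorem coord_apply_eq_of_coord_eq (he : e ∉ p.orth e) {x y y' : E} (hx : e ∉ p.orth x)
    (hy : p.coord e e y = 1) (hy' : p.coord e e y' = 1) (h : p.coord e y x = p.coord e y' x) :
    p.coord e x y = p.coord e x y' := by
  have h₁ := mem_orth_comm.mp (sub_coord_smul_mem (notMem_orth_of_coord_eq_one he hy) x)
  have h₂ := mem_orth_comm.mp (sub_coord_smul_mem (notMem_orth_of_coord_eq_one he hy') x)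
  rw [← h] at h₂
  have hxyy : x ∈ p.orth (y' - y) := by
    simpa using add_mem (mem_orth_comm.mp (sub_mem h₂ h₁))
      (smul_mem _ (p.coord e y x) (mem_orth_comm.mp (sub_mem_orth_of_coord_eq_one he hy hy')))
  rw [eq_comm, ← sub_eq_zero, ← map_sub, coord_eq_zero_iff hx]
  exact mem_orth_comm.mp hxyy

theorem coord_eq_of_coord_apply_eq (he : e ∉ p.orth e) {x x' z : E} (hx : p.coord e e x = 1)
    (hx' : p.coord e e x' = 1) (hz : p.coord e e z = 1) (h : p.coord e z x = p.coord e z x') :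
    p.coord e x z = p.coord e x' z := by
  have hwz : z ∈ p.orth (x' - x) := mem_orth_comm.mp
    ((coord_eq_zero_iff (notMem_orth_of_coord_eq_one he hz)).mp (by rw [map_sub, h, sub_self]))
  have := coord_add_of_mem_orth he hx (sub_mem_orth_of_coord_eq_one he hx hx') hwz
  rwa [add_sub_cancel, eq_comm] at this

theorem exists_chart_transfer (he : e ∉ p.orth e) {x y z w : E} (hx : p.coord e e x = 1)
    (hy : p.coord e e y = 1) (hz : p.coord e e z = 1) (hw : w ∈ p.orth e) (hwy : w ∈ p.orth y)
    (hwz : w ∉ p.orth z) :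
    ∃ x', p.coord e e x' = 1 ∧ p.coord e z x' = p.coord e y x ∧
      p.coord e x' z = p.coord e x y := by
  have hzw : p.coord e z w ≠ 0 :=
    fun h => hwz ((coord_eq_zero_iff (notMem_orth_of_coord_eq_one he hz)).mp h)
  -- Moving `x` along `w ⊥ e, y` changes neither `f_y x` nor `f_x y`; `t` adjusts `f_z x`.
  set t := (p.coord e y x - p.coord e z x) * (p.coord e z w)⁻¹
  have hx' := coord_add_eq_one he hx (smul_mem _ t hw)
  have hyx' : p.coord e y (x + t • w) = p.coord e y x := by
    rw [map_add, map_smul, (coord_eq_zero_iff (notMem_orth_of_coord_eq_one he hy)).mpr hwy,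
      smul_zero, add_zero]
  have hzx' : p.coord e z (x + t • w) = p.coord e y x := by
    rw [map_add, map_smul, smul_eq_mul, inv_mul_cancel_right₀ hzw]
    abel
  refine ⟨x + t • w, hx', hzx', ?_⟩
  rw [← coord_apply_eq_of_coord_eq he (notMem_orth_of_coord_eq_one he hx') hy hz
    (hyx'.trans hzx'.symm)]
  exact coord_add_of_mem_orth he hx (smul_mem _ t hw) (mem_orth_comm.mp (smul_mem _ t hwy))

theorem exists_chart_notMem (he : e ∉ p.orth e) {H : Submodule K E} (hH : H ≠ ⊤) :
    ∃ x, p.coord e e x = 1 ∧ x ∉ H := by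
  by_contra! hC
  refine hH (eq_top_iff.mpr fun z _ => ?_)
  have hz : p.coord e e (z + (1 - p.coord e e z) • e) = 1 := by
    rw [map_add, map_smul, coord_self he, smul_eq_mul, mul_one, add_sub_cancel]
  simpa using sub_mem (hC _ hz) (smul_mem _ (1 - p.coord e e z) (hC e (coord_self he)))

theorem exists_chart_notMem₂ (h2 : (2 : K) ≠ 0) (he : e ∉ p.orth e)
    {H₁ H₂ : Submodule K E} (h₁ : H₁ ≠ ⊤) (h₂ : H₂ ≠ ⊤) :
    ∃ x, p.coord e e x = 1 ∧ x ∉ H₁ ∧ x ∉ H₂ := by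
  obtain ⟨a, ha, ha₁⟩ := exists_chart_notMem he h₁
  obtain ⟨b, hb, hb₂⟩ := exists_chart_notMem he h₂
  by_cases ha₂ : a ∈ H₂
  swap
  · exact ⟨a, ha, ha₁, ha₂⟩
  by_cases hb₁ : b ∈ H₁
  swap
  · exact ⟨b, hb, hb₁, hb₂⟩
  refine ⟨(2 : K) • b - a, ?_, fun h => ha₁ ?_, fun h => hb₂ ?_⟩
  · rw [map_sub, map_smul, ha, hb]
    norm_num
  · simpa using sub_mem (smul_mem _ 2 hb₁) h
  · exact (smul_mem_iff _ h2).mp (by simpa using add_mem h ha₂)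

theorem coord_eq_coord_of_coord_eq (h2 : (2 : K) ≠ 0) (hdim : 3 ≤ Module.rank K E)
    (he : e ∉ p.orth e) {x y x' y' : E} (hx : p.coord e e x = 1) (hy : p.coord e e y = 1)
    (hx' : p.coord e e x' = 1) (hy' : p.coord e e y' = 1)
    (h : p.coord e y x = p.coord e y' x') : p.coord e x y = p.coord e x' y' := by
  have hcoatom : ∀ {y : E}, p.coord e e y = 1 → IsCoatom (p.orth y) := fun hy =>
    isCoatom_orth (ne_zero_of_notMem_orth (notMem_orth_of_coord_eq_one he hy))
  -- Transfer both pairs to pairs with the same second point `z`.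
  obtain ⟨w, ⟨hw, hwy⟩, hw0⟩ :=
    exists_ne_zero_mem_inf_of_isCoatom (hcoatom (coord_self he)) (hcoatom hy) hdim
  obtain ⟨w', ⟨hw', hwy'⟩, hw0'⟩ :=
    exists_ne_zero_mem_inf_of_isCoatom (hcoatom (coord_self he)) (hcoatom hy') hdim
  obtain ⟨z, hz, hzw, hzw'⟩ := exists_chart_notMem₂ h2 he
    (isCoatom_orth hw0).ne_top (isCoatom_orth hw0').ne_top
  obtain ⟨x₁, hx₁, h₁, h₁'⟩ :=
    exists_chart_transfer he hx hy hz hw hwy fun h => hzw (mem_orth_comm.mp h)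
  obtain ⟨x₂, hx₂, h₂, h₂'⟩ :=
    exists_chart_transfer he hx' hy' hz hw' hwy' fun h => hzw' (mem_orth_comm.mp h)
  rw [← h₁', ← h₂']
  exact coord_eq_of_coord_apply_eq he hx₁ hx₂ hz (by rw [h₁, h₂, h])

theorem span_singleton_ne_top (hdim : 3 ≤ Module.rank K E) (he : e ∉ p.orth e) :
    (K ∙ e) ≠ ⊤ := fun h =>
  not_le_span_singleton_of_isCoatom (isCoatom_orth (p := p) (ne_zero_of_notMem_orth he)) hdim e
    (h ▸ le_top)

theorem exists_ne_zero_mem_orth (hdim : 3 ≤ Module.rank K E) (he : e ∉ p.orth e) :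
    ∃ u ∈ p.orth e, u ≠ 0 := by
  obtain ⟨u, hu, hu0⟩ := SetLike.not_le_iff_exists.mp
    (not_le_span_singleton_of_isCoatom (isCoatom_orth (ne_zero_of_notMem_orth he)) hdim 0)
  exact ⟨u, hu, by simpa using hu0⟩

theorem notMem_span_of_mem_orth (he : e ∉ p.orth e) {w : E} (hw : w ∈ p.orth e)
    (hw0 : w ≠ 0) : w ∉ K ∙ e := by
  rintro hwe
  obtain ⟨ν, rfl⟩ := mem_span_singleton.mp hwe
  have hν : ν = 0 := by
    by_contra hν
    exact he ((smul_mem_iff _ hν).mp hw)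
  simp [hν] at hw0

theorem exists_chart_coord_eq (he : e ∉ p.orth e) {z : E} (hz : z ∉ K ∙ e) (μ : K) :
    ∃ y, p.coord e e y = 1 ∧ p.coord e y z = μ := by
  have hle : ¬ p.orth (z - μ • e) ≤ p.orth e := by
    rw [orth_le_orth_iff, mem_span_singleton]
    rintro ⟨ν, hν⟩
    have hν0 : ν ≠ 0 := by
      rintro rfl
      exact ne_zero_of_notMem_orth he (by simpa using hν.symm)
    have hze : z - μ • e = ν⁻¹ • e := by
      conv_rhs => rw [← hν, smul_smul, inv_mul_cancel₀ hν0, one_smul]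
    exact hz (mem_span_singleton.mpr ⟨ν⁻¹ + μ, by rw [add_smul, ← hze, sub_add_cancel]⟩)
  obtain ⟨h, hh, hhe⟩ := SetLike.not_le_iff_exists.mp hle
  have hc : p.coord e e h ≠ 0 := fun hc => hhe ((coord_eq_zero_iff he).mp hc)
  have hy : p.coord e e ((p.coord e e h)⁻¹ • h) = 1 := by
    rw [map_smul, smul_eq_mul, inv_mul_cancel₀ hc]
  refine ⟨_, hy, ?_⟩
  rw [coord_eq_iff (notMem_orth_of_coord_eq_one he hy), mem_orth_comm]
  exact smul_mem _ _ hh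

/-! ### The involution -/

-- The chosen pair is immaterial by `coord_eq_coord_of_coord_eq`.
open Classical in
noncomputable def conj (p : Polarity K E) (e : E) (μ : K) : K :=
  if h : ∃ xy : E × E, p.coord e e xy.1 = 1 ∧ p.coord e e xy.2 = 1 ∧ p.coord e xy.2 xy.1 = μ
  then p.coord e h.choose.1 h.choose.2 else 0

theorem conj_coord (h2 : (2 : K) ≠ 0) (hdim : 3 ≤ Module.rank K E) (he : e ∉ p.orth e)
    {x y : E} (hx : p.coord e e x = 1) (hy : p.coord e e y = 1) :
    p.conj e (p.coord e y x) = p.coord e x y := by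
  have h : ∃ xy : E × E, p.coord e e xy.1 = 1 ∧ p.coord e e xy.2 = 1 ∧
      p.coord e xy.2 xy.1 = p.coord e y x := ⟨(x, y), hx, hy, rfl⟩
  rw [conj, dif_pos h]
  obtain ⟨hx', hy', hxy⟩ := h.choose_spec
  exact coord_eq_coord_of_coord_eq h2 hdim he hx' hy' hx hy hxy

theorem conj_conj (h2 : (2 : K) ≠ 0) (hdim : 3 ≤ Module.rank K E) (he : e ∉ p.orth e)
    (μ : K) : p.conj e (p.conj e μ) = μ := by
  obtain ⟨x, hx, hxe⟩ := exists_chart_notMem he (span_singleton_ne_top hdim he)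
  obtain ⟨y, hy, rfl⟩ := exists_chart_coord_eq he hxe μ
  rw [conj_coord h2 hdim he hx hy, conj_coord h2 hdim he hy hx]

theorem conj_one (h2 : (2 : K) ≠ 0) (hdim : 3 ≤ Module.rank K E) (he : e ∉ p.orth e) :
    p.conj e 1 = 1 := by
  simpa only [coord_self he] using conj_coord h2 hdim he (coord_self he) (coord_self he)

theorem conj_zero (h2 : (2 : K) ≠ 0) (hdim : 3 ≤ Module.rank K E) (he : e ∉ p.orth e) :
    p.conj e 0 = 0 := by
  obtain ⟨x, hx, hxe⟩ := exists_chart_notMem he (span_singleton_ne_top hdim he)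
  obtain ⟨y, hy, hyx⟩ := exists_chart_coord_eq he hxe 0
  have hxy : p.coord e x y = 0 := by
    rw [coord_eq_zero_iff (notMem_orth_of_coord_eq_one he hx), mem_orth_comm,
      ← coord_eq_zero_iff (notMem_orth_of_coord_eq_one he hy)]
    exact hyx
  rw [← hyx, conj_coord h2 hdim he hx hy, hxy, hyx]

noncomputable def coordDiff (p : Polarity K E) (e w : E) : E →ₗ[K] K :=
  p.coord e (e + w) - p.coord e e

theorem coordDiff_apply_of_mem_orth (he : e ∉ p.orth e) {w t : E} (hw : w ∈ p.orth e)
    (ht : t ∈ p.orth w) : p.coordDiff e w t = 0 :=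
  sub_eq_zero.mpr (coord_add_of_mem_orth he (coord_self he) hw ht)

theorem coordDiff_eq_zero_iff (he : e ∉ p.orth e) {w x : E} (hw : w ∈ p.orth e) :
    p.coordDiff e w x = 0 ↔ x ∈ p.orth w := by
  refine ⟨fun h => ?_, coordDiff_apply_of_mem_orth he hw⟩
  have hew := coord_add_eq_one he (coord_self he) hw
  have h₁ := mem_orth_comm.mp (sub_coord_smul_mem he x)
  have h₂ := mem_orth_comm.mp (sub_coord_smul_mem (notMem_orth_of_coord_eq_one he hew) x)
  rw [sub_eq_zero.mp h] at h₂
  have := add_mem (mem_orth_comm.mp (by simpa using sub_mem h₂ h₁))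
    (smul_mem _ (p.coord e e x) (mem_orth_comm.mp hw))
  rwa [sub_add_cancel] at this

theorem coordDiff_add (hdim : 3 ≤ Module.rank K E) (he : e ∉ p.orth e) {a b : E}
    (ha : a ∈ p.orth e) (hb : b ∈ p.orth e) :
    p.coordDiff e (a + b) = p.coordDiff e a + p.coordDiff e b := by
  refine map_add_of_span_singleton_ne (p.coordDiff e)
    (not_le_span_singleton_of_isCoatom (isCoatom_orth (ne_zero_of_notMem_orth he)) hdim)
    (fun a ha b hb hab => ?_) ha hb
  -- The defect vanishes on `a^⊥` and on `b^⊥`, which span `E`.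
  rw [← sub_eq_zero, sub_add_eq_sub_sub, ← LinearMap.ker_eq_top, eq_top_iff,
    ← orth_sup_orth_eq_top hab]
  refine sup_le (fun t ht => ?_) (fun t ht => ?_) <;>
    simp only [LinearMap.mem_ker, LinearMap.sub_apply, coordDiff]
  · rw [show e + (a + b) = e + b + a by abel,
      coord_add_of_mem_orth he (coord_add_eq_one he (coord_self he) hb) ha ht,
      coord_add_of_mem_orth he (coord_self he) ha ht]
    abel
  · rw [← add_assoc, coord_add_of_mem_orth he (coord_add_eq_one he (coord_self he) ha) hb ht,
      coord_add_of_mem_orth he (coord_self he) hb ht]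
    abel

theorem coord_add_sub (hdim : 3 ≤ Module.rank K E) (he : e ∉ p.orth e) {y₁ y₂ y₃ : E}
    (h₁ : p.coord e e y₁ = 1) (h₂ : p.coord e e y₂ = 1) (h₃ : p.coord e e y₃ = 1) :
    p.coord e (y₁ + y₂ - y₃) = p.coord e y₁ + p.coord e y₂ - p.coord e y₃ := by
  have hw : ∀ {y : E}, p.coord e e y = 1 → y - e ∈ p.orth e :=
    sub_mem_orth_of_coord_eq_one he (coord_self he)
  have hD := coordDiff_add hdim he (sub_mem (add_mem (hw h₁) (hw h₂)) (hw h₃)) (hw h₃)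
  rw [sub_add_cancel, coordDiff_add hdim he (hw h₁) (hw h₂)] at hD
  simp only [coordDiff, add_sub_cancel] at hD
  rw [show y₁ + y₂ - y₃ = e + (y₁ - e + (y₂ - e) - (y₃ - e)) by abel, eq_sub_iff_add_eq,
    ← sub_eq_zero, ← sub_eq_zero.mpr hD.symm]
  abel

theorem conj_add (h2 : (2 : K) ≠ 0) (hdim : 3 ≤ Module.rank K E) (he : e ∉ p.orth e)
    (a b : K) : p.conj e (a + b) = p.conj e a + p.conj e b := by
  obtain ⟨x, hx, hxe⟩ := exists_chart_notMem he (span_singleton_ne_top hdim he)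
  obtain ⟨y₁, hy₁, rfl⟩ := exists_chart_coord_eq he hxe a
  obtain ⟨y₂, hy₂, rfl⟩ := exists_chart_coord_eq he hxe b
  obtain ⟨y₃, hy₃, hy₃x⟩ := exists_chart_coord_eq he hxe 0
  have hy : p.coord e e (y₁ + y₂ - y₃) = 1 := by
    rw [map_sub, map_add, hy₁, hy₂, hy₃, add_sub_cancel_right]
  have hsum : p.coord e (y₁ + y₂ - y₃) x = p.coord e y₁ x + p.coord e y₂ x := by
    rw [coord_add_sub hdim he hy₁ hy₂ hy₃, LinearMap.sub_apply, LinearMap.add_apply, hy₃x,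
      sub_zero]
  rw [← hsum, conj_coord h2 hdim he hx hy, map_sub, map_add, ← conj_coord h2 hdim he hx hy₁,
    ← conj_coord h2 hdim he hx hy₂, ← conj_coord h2 hdim he hx hy₃, hy₃x,
    conj_zero h2 hdim he, sub_zero]

theorem coordDiff_apply_of_chart (h2 : (2 : K) ≠ 0) (hdim : 3 ≤ Module.rank K E)
    (he : e ∉ p.orth e) {w x : E} (hw : w ∈ p.orth e) (hx : p.coord e e x = 1) :
    p.coordDiff e w x = p.conj e (p.coord e x w) := by
  have hew := coord_add_eq_one he (coord_self he) hw
  rw [coordDiff, LinearMap.sub_apply, ← conj_coord h2 hdim he hew hx, map_add,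
    coord_self (notMem_orth_of_coord_eq_one he hx), hx, conj_add h2 hdim he, conj_one h2 hdim he,
    add_sub_cancel_left]

theorem coordDiff_smul (h2 : (2 : K) ≠ 0) (hdim : 3 ≤ Module.rank K E) (he : e ∉ p.orth e)
    {w : E} (hw : w ∈ p.orth e) (ρ : K) (x : E) :
    p.coordDiff e (ρ • w) x = p.coordDiff e w x * p.conj e ρ := by
  rcases eq_or_ne w 0 with rfl | hw0
  · simp [coordDiff]
  obtain ⟨x₁, hx₁, hx₁w⟩ := exists_chart_coord_eq he (notMem_span_of_mem_orth he hw hw0) 1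
  have hρw : ρ • w ∈ p.orth e := smul_mem _ ρ hw
  have hx₁w' : x₁ ∉ p.orth w := fun h => one_ne_zero <|
    hx₁w ▸ (coord_eq_zero_iff (notMem_orth_of_coord_eq_one he hx₁)).mpr (mem_orth_comm.mp h)
  -- Both sides vanish on `w^⊥` and agree at `x₁ ∉ w^⊥`.
  suffices p.coordDiff e (ρ • w) - (p.coordDiff e w).smulRight (p.conj e ρ) = 0 by
    simpa [sub_eq_zero] using LinearMap.congr_fun this x
  rw [← LinearMap.ker_eq_top, eq_top_iff, ← (isCompl_span_singleton_of_isCoatom_of_notMem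
    (isCoatom_orth hw0) hx₁w').sup_eq_top]
  refine sup_le (fun t ht => ?_) ((span_singleton_le_iff_mem _ _).mpr ?_)
  · have ht' : t ∈ p.orth (ρ • w) :=
      orth_le_orth_iff.mpr (smul_mem _ ρ (mem_span_singleton_self w)) ht
    simp [coordDiff_apply_of_mem_orth he hρw ht', coordDiff_apply_of_mem_orth he hw ht]
  · simp [coordDiff_apply_of_chart h2 hdim he hρw hx₁,
      coordDiff_apply_of_chart h2 hdim he hw hx₁, hx₁w, conj_one h2 hdim he]

theorem conj_mul (h2 : (2 : K) ≠ 0) (hdim : 3 ≤ Module.rank K E) (he : e ∉ p.orth e)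
    (ρ μ : K) : p.conj e (ρ * μ) = p.conj e μ * p.conj e ρ := by
  obtain ⟨u, hu, hu0⟩ := exists_ne_zero_mem_orth hdim he
  obtain ⟨x, hx, rfl⟩ := exists_chart_coord_eq he (notMem_span_of_mem_orth he hu hu0) μ
  rw [← smul_eq_mul, ← map_smul, ← coordDiff_apply_of_chart h2 hdim he (smul_mem _ ρ hu) hx,
    coordDiff_smul h2 hdim he hu, coordDiff_apply_of_chart h2 hdim he hu hx]

theorem coordDiff_apply_self (he : e ∉ p.orth e) {w : E} (hw : w ∈ p.orth e) :
    p.coordDiff e w e = 0 := by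
  have hew := coord_add_eq_one he (coord_self he) hw
  rw [coordDiff, LinearMap.sub_apply, coord_self (notMem_orth_of_coord_eq_one he hew),
    coord_self he, sub_self]

theorem conj_coordDiff (h2 : (2 : K) ≠ 0) (hdim : 3 ≤ Module.rank K E) (he : e ∉ p.orth e)
    {w₁ w₂ : E} (hw₁ : w₁ ∈ p.orth e) (hw₂ : w₂ ∈ p.orth e) :
    p.conj e (p.coordDiff e w₂ w₁) = p.coordDiff e w₁ w₂ := by
  have hew := coord_add_eq_one he (coord_self he) hw₁
  have h := coordDiff_apply_of_chart h2 hdim he hw₂ hew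
  rw [map_add, coordDiff_apply_self he hw₂, zero_add] at h
  rw [h, conj_conj h2 hdim he, coordDiff, LinearMap.sub_apply, (coord_eq_zero_iff he).mpr hw₂,
    sub_zero]

/-! ### The Hermitian form -/

-- `B x y = f_y x` for chart points `y` (`form_of_coord_eq_one`), extended σ-semilinearly through
-- `y = f_e y • e + (y - f_e y • e)`.
noncomputable def form (p : Polarity K E) (e x y : E) : K :=
  p.coordDiff e (y - p.coord e e y • e) x + p.coord e e x * p.conj e (p.coord e e y)

theorem form_add_left (x x' y : E) : p.form e (x + x') y = p.form e x y + p.form e x' y := by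
  simp only [form, map_add, add_mul]
  abel

theorem form_smul_left (ρ : K) (x y : E) : p.form e (ρ • x) y = ρ * p.form e x y := by
  simp only [form, map_smul, smul_eq_mul, mul_add, mul_assoc]

theorem form_add_right (h2 : (2 : K) ≠ 0) (hdim : 3 ≤ Module.rank K E) (he : e ∉ p.orth e)
    (x y z : E) : p.form e x (y + z) = p.form e x y + p.form e x z := by
  have hyz : y + z - p.coord e e (y + z) • e =
      (y - p.coord e e y • e) + (z - p.coord e e z • e) := by
    rw [map_add, add_smul]
    abel
  rw [form, form, form, hyz, coordDiff_add hdim he (sub_coord_smul_mem he y)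
    (sub_coord_smul_mem he z), map_add, conj_add h2 hdim he, LinearMap.add_apply, mul_add]
  abel

theorem form_smul_right (h2 : (2 : K) ≠ 0) (hdim : 3 ≤ Module.rank K E) (he : e ∉ p.orth e)
    (ρ : K) (x y : E) : p.form e x (ρ • y) = p.form e x y * p.conj e ρ := by
  have hρy : ρ • y - p.coord e e (ρ • y) • e = ρ • (y - p.coord e e y • e) := by
    rw [map_smul, smul_eq_mul, mul_smul, smul_sub]
  rw [form, form, hρy, coordDiff_smul h2 hdim he (sub_coord_smul_mem he y), map_smul, smul_eq_mul,
    conj_mul h2 hdim he, add_mul, mul_assoc]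

theorem form_eq_coordDiff (he : e ∉ p.orth e) (x y : E) :
    p.form e x y = p.coordDiff e (y - p.coord e e y • e) (x - p.coord e e x • e) +
      p.coord e e x * p.conj e (p.coord e e y) := by
  rw [form, map_sub, map_smul, coordDiff_apply_self he (sub_coord_smul_mem he y), smul_zero,
    sub_zero]

theorem conj_form (h2 : (2 : K) ≠ 0) (hdim : 3 ≤ Module.rank K E) (he : e ∉ p.orth e)
    (x y : E) : p.conj e (p.form e x y) = p.form e y x := by
  rw [form_eq_coordDiff he, form_eq_coordDiff he, conj_add h2 hdim he,
    conj_coordDiff h2 hdim he (sub_coord_smul_mem he x) (sub_coord_smul_mem he y),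
    conj_mul h2 hdim he, conj_conj h2 hdim he]

theorem form_of_coord_eq_one (h2 : (2 : K) ≠ 0) (hdim : 3 ≤ Module.rank K E)
    (he : e ∉ p.orth e) {y : E} (hy : p.coord e e y = 1) (x : E) :
    p.form e x y = p.coord e y x := by
  rw [form, hy, one_smul, coordDiff, add_sub_cancel, conj_one h2 hdim he, mul_one,
    LinearMap.sub_apply, sub_add_cancel]

theorem form_eq_zero_iff (h2 : (2 : K) ≠ 0) (hdim : 3 ≤ Module.rank K E) (he : e ∉ p.orth e)
    {x m : E} : p.form e x m = 0 ↔ x ∈ p.orth m := by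
  by_cases hm : p.coord e e m = 0
  · rw [form, hm, zero_smul, sub_zero, conj_zero h2 hdim he, mul_zero, add_zero,
      coordDiff_eq_zero_iff he ((coord_eq_zero_iff he).mp hm)]
  set m' := (p.coord e e m)⁻¹ • m
  have hm' : p.coord e e m' = 1 := by rw [map_smul, smul_eq_mul, inv_mul_cancel₀ hm]
  have hconj : p.conj e (p.coord e e m) ≠ 0 := fun h => hm <| by
    rw [← conj_conj h2 hdim he (p.coord e e m), h, conj_zero h2 hdim he]
  rw [show m = p.coord e e m • m' from (smul_inv_smul₀ hm m).symm, form_smul_right h2 hdim he,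
    mul_eq_zero, or_iff_left hconj, form_of_coord_eq_one h2 hdim he hm',
    coord_eq_zero_iff (notMem_orth_of_coord_eq_one he hm'), orth_smul hm]

theorem eq_zero_of_forall_form_eq_zero (h2 : (2 : K) ≠ 0) (hdim : 3 ≤ Module.rank K E)
    (he : e ∉ p.orth e) {a : E} (ha : ∀ x, p.form e a x = 0) : a = 0 := by
  have ha : a ∈ p.perp ⊤ := mem_perp_iff.mpr fun m _ => (form_eq_zero_iff h2 hdim he).mp (ha m)
  rwa [p.perp_top, mem_bot] at ha

theorem coe_perp_eq (h2 : (2 : K) ≠ 0) (hdim : 3 ≤ Module.rank K E) (he : e ∉ p.orth e)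
    (M : Submodule K E) : (p.perp M : Set E) = {x | ∀ m ∈ M, p.form e x m = 0} := by
  ext x
  simp only [SetLike.mem_coe, Set.mem_ofPred_eq, mem_perp_iff, form_eq_zero_iff h2 hdim he]

end Polarity

/-- **Birkhoff–von Neumann, Hermitian case.** If `char K ≠ 2`, `dim E ≥ 3`, and
some point `Ke` is not isotropic for the polarity, then the polarity is induced
by a nondegenerate Hermitian form with respect to some involution on `K`. -/
theorem birkhoff_vonNeumann_hermitian {K E : Type*} [DivisionRing K] [AddCommGroup E]
    [Module K E] (p : Polarity K E) (h2 : (2 : K) ≠ 0) (hdim : 3 ≤ Module.rank K E)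
    (e : E) (he : e ∉ p.perp (Submodule.span K {e})) :
    ∃ (σ : K → K) (B : E → E → K),
      (∀ a b : K, σ (a + b) = σ a + σ b) ∧
      (∀ a b : K, σ (a * b) = σ b * σ a) ∧
      (∀ a : K, σ (σ a) = a) ∧
      (∀ x y z : E, B (x + y) z = B x z + B y z) ∧
      (∀ x y z : E, B x (y + z) = B x y + B x z) ∧
      (∀ (ρ : K) (x y : E), B (ρ • x) y = ρ * B x y) ∧
      (∀ (ρ : K) (x y : E), B x (ρ • y) = B x y * σ ρ) ∧
      (∀ x y : E, σ (B x y) = B y x) ∧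
      (∀ a : E, (∀ x : E, B a x = 0) → a = 0) ∧
      (∀ M : Submodule K E, (p.perp M : Set E) = {x : E | ∀ m ∈ M, B x m = 0}) := by
  have he : e ∉ p.orth e := he
  exact ⟨p.conj e, p.form e, p.conj_add h2 hdim he, p.conj_mul h2 hdim he,
    p.conj_conj h2 hdim he, p.form_add_left, p.form_add_right h2 hdim he, p.form_smul_left,
    p.form_smul_right h2 hdim he, p.conj_form h2 hdim he,
    fun _ => p.eq_zero_of_forall_form_eq_zero h2 hdim he, p.coe_perp_eq h2 hdim he⟩
end

section
/- (Birkhoff–von Neumann, symplectic case.) Suppose K has characteristic different from 2, E has dimension at least 3 over K (infinite dimension allowed), ⊥ is a polarity on E, and x ∈ (Kx)^⊥ for every x ∈ E. Then K is commutative, and there exists a nondegenerate K-bilinear form ⟨·,·⟩ : E × E → K with ⟨x, x⟩ = 0 for all x ∈ E (hence ⟨x, y⟩ = −⟨y, x⟩ for all x, y) such that for every subspace M of E, M^⊥ = {x ∈ E : ⟨x, m⟩ = 0 for all m ∈ M}. -/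
namespace BvNAux

open Submodule

variable {K E : Type*} [DivisionRing K] [AddCommGroup E] [Module K E]


/-- right scalar multiple of a functional -/
def rsl (φ : E →ₗ[K] K) (c : K) : E →ₗ[K] K where
  toFun e := φ e * c
  map_add' x y := by show φ (x + y) * c = φ x * c + φ y * c; rw [map_add, add_mul]
  map_smul' r x := by
    show φ (r • x) * c = r • (φ x * c)
    rw [map_smul, smul_eq_mul, smul_eq_mul, mul_assoc]

@[simp] lemma rsl_apply (φ : E →ₗ[K] K) (c : K) (e : E) : rsl φ c e = φ e * c := rfl

/-- There is a linear functional whose zero set is exactly the perp of the line through `x`. -/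
theorem polarity_exists_functional (p : Polarity K E) {x : E} (hx : x ≠ 0) :
    ∃ φ : E →ₗ[K] K, ∀ e : E, φ e = 0 ↔ e ∈ p.perp (Submodule.span K {x}) := by
  obtain ⟨w, hw⟩ := p.line_perp_hyperplane x hx
  set N := p.perp (Submodule.span K {x}) with hN
  have hNtop : N ≠ ⊤ := p.line_perp_ne_top x hx
  have hwN : w ∉ N := by
    intro hmem
    apply hNtop
    rw [← hw, sup_eq_left.mpr ((span_singleton_le_iff_mem w N).mpr hmem)]
  have hw0 : w ≠ 0 := fun h => hwN (h ▸ N.zero_mem)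
  have hcompl : IsCompl (span K {w}) N := by
    constructor
    · rw [disjoint_iff]
      ext z
      simp only [Submodule.mem_inf, Submodule.mem_bot]
      constructor
      · rintro ⟨hz1, hz2⟩
        obtain ⟨c, rfl⟩ := mem_span_singleton.mp hz1
        rcases eq_or_ne c 0 with rfl | hc
        · simp
        · exact absurd (by simpa [smul_smul, inv_mul_cancel₀ hc] using N.smul_mem c⁻¹ hz2) hwN
      · rintro rfl; simp
    · rw [codisjoint_iff, sup_comm, hw]
  set pr := (span K {w}).linearProjOfIsCompl N hcompl
  set ι := (LinearEquiv.toSpanNonzeroSingleton K E w hw0).symm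
  refine ⟨ι.toLinearMap ∘ₗ pr, fun e => ?_⟩
  have h1 : (ι.toLinearMap ∘ₗ pr) e = 0 ↔ pr e = 0 := by
    simp only [LinearMap.comp_apply, LinearEquiv.coe_coe, LinearEquiv.map_eq_zero_iff]
  rw [h1]
  exact Submodule.linearProjOfIsCompl_apply_eq_zero_iff hcompl

/-- Bundle of all data used throughout the proof. -/
structure Aux (K E : Type*) [DivisionRing K] [AddCommGroup E] [Module K E] where
  p : Polarity K E
  h2 : (2 : K) ≠ 0
  hdim : 3 ≤ Module.rank K E
  hiso : ∀ x : E, x ∈ p.perp (Submodule.span K {x})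
  f : E → (E →ₗ[K] K)
  hfker : ∀ x, x ≠ 0 → ∀ e : E, f x e = 0 ↔ e ∈ p.perp (Submodule.span K {x})
  u : E
  hu : u ≠ 0
  v : E
  hfuv : f u v ≠ 0

namespace Aux

variable (A : Aux K E)

/-- perp of the line through x -/
def H (x : E) : Submodule K E := A.p.perp (Submodule.span K {x})

lemma fker {x : E} (hx : x ≠ 0) (e : E) : A.f x e = 0 ↔ e ∈ A.H x := A.hfker x hx e

lemma Hne_top {x : E} (hx : x ≠ 0) : A.H x ≠ ⊤ := A.p.line_perp_ne_top x hx

lemma exists_fne {x : E} (hx : x ≠ 0) : ∃ e, A.f x e ≠ 0 := by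
  by_contra h
  push_neg at h
  exact A.Hne_top hx (Submodule.eq_top_iff'.mpr fun e => (A.fker hx e).mp (h e))

lemma fself {x : E} (hx : x ≠ 0) : A.f x x = 0 := (A.fker hx x).mpr (A.hiso x)

lemma mem_H_symm {x y : E} (hx : x ≠ 0) (hy : y ≠ 0) (h : y ∈ A.H x) : x ∈ A.H y := by
  have h1 : Submodule.span K {y} ≤ A.H x := (span_singleton_le_iff_mem y _).mpr h
  have h2 := A.p.perp_antitone h1
  rw [show A.H x = A.p.perp (Submodule.span K {x}) from rfl] at h2
  rw [A.p.line_biperp x hx] at h2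
  exact h2 (mem_span_singleton_self x)

lemma fsymm {x y : E} (hx : x ≠ 0) (hy : y ≠ 0) : A.f x y = 0 ↔ A.f y x = 0 := by
  rw [A.fker hx, A.fker hy]
  exact ⟨A.mem_H_symm hx hy, A.mem_H_symm hy hx⟩

lemma fsymm_ne {x y : E} (hx : x ≠ 0) (hy : y ≠ 0) : A.f x y ≠ 0 ↔ A.f y x ≠ 0 :=
  not_congr (A.fsymm hx hy)

/-- orthogonality propagates along linear combinations in the "point" slot -/
lemma perp_comb {a b c e : E} (ha : a ≠ 0) (hb : b ≠ 0) (hc : c ≠ 0)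
    (r t : K) (hcomb : c = r • a + t • b)
    (hea : A.f a e = 0) (heb : A.f b e = 0) : A.f c e = 0 := by
  rcases eq_or_ne e 0 with rfl | he
  · simp
  have h1 : a ∈ A.H e := A.mem_H_symm ha he ((A.fker ha e).mp hea)
  have h2 : b ∈ A.H e := A.mem_H_symm hb he ((A.fker hb e).mp heb)
  have h3 : c ∈ A.H e := by
    rw [hcomb]
    exact Submodule.add_mem _ (Submodule.smul_mem _ r h1) (Submodule.smul_mem _ t h2)
  exact (A.fker hc e).mpr (A.mem_H_symm he hc h3)


/-- one point comparison of functionals -/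
lemma onePoint (φ ψ : E →ₗ[K] K) {w : E} (hw : φ w ≠ 0)
    (h : ∀ e, φ e = 0 → ψ e = 0) (e : E) :
    ψ e = φ e * ((φ w)⁻¹ * ψ w) := by
  have h0 : φ (e - (φ e * (φ w)⁻¹) • w) = 0 := by
    rw [map_sub, map_smul, smul_eq_mul, mul_assoc, inv_mul_cancel₀ hw, mul_one, sub_self]
  have h1 := h _ h0
  rw [map_sub, map_smul, smul_eq_mul, sub_eq_zero] at h1
  rw [h1, mul_assoc]

/-- two point comparison of functionals -/
lemma twoPoint (φ ψ χ : E →ₗ[K] K) {p q : E}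
    (hp : φ p ≠ 0) (hp2 : ψ p = 0) (hq : φ q = 0) (hq2 : ψ q ≠ 0)
    (h : ∀ e, φ e = 0 → ψ e = 0 → χ e = 0) (e : E) :
    χ e = φ e * ((φ p)⁻¹ * χ p) + ψ e * ((ψ q)⁻¹ * χ q) := by
  have hφ : φ (e - (φ e * (φ p)⁻¹) • p - (ψ e * (ψ q)⁻¹) • q) = 0 := by
    rw [map_sub, map_sub, map_smul, map_smul, smul_eq_mul, smul_eq_mul,
      mul_assoc, inv_mul_cancel₀ hp, mul_one, hq, mul_zero, sub_zero, sub_self]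
  have hψ : ψ (e - (φ e * (φ p)⁻¹) • p - (ψ e * (ψ q)⁻¹) • q) = 0 := by
    rw [map_sub, map_sub, map_smul, map_smul, smul_eq_mul, smul_eq_mul, hp2,
      mul_zero, sub_zero, mul_assoc, inv_mul_cancel₀ hq2, mul_one, sub_self]
  have h1 := h _ hφ hψ
  rw [map_sub, map_sub, map_smul, map_smul, smul_eq_mul, smul_eq_mul, sub_sub,
    sub_eq_zero] at h1
  rw [h1, mul_assoc, mul_assoc]

/-- kernel inclusion of the chosen functionals forces proportional points -/
lemma smul_rep {x y : E} (hx : x ≠ 0) (hy : y ≠ 0)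
    (h : ∀ e, A.f x e = 0 → A.f y e = 0) : ∃ c : K, y = c • x := by
  have hle : A.H x ≤ A.H y := fun e he => (A.fker hy e).mp (h e ((A.fker hx e).mpr he))
  have h2 := A.p.perp_antitone hle
  rw [show A.H y = A.p.perp (Submodule.span K {y}) from rfl,
    show A.H x = A.p.perp (Submodule.span K {x}) from rfl,
    A.p.line_biperp x hx, A.p.line_biperp y hy] at h2
  obtain ⟨c, hc⟩ := mem_span_singleton.mp (h2 (mem_span_singleton_self y))
  exact ⟨c, hc.symm⟩

lemma dualPair {x y : E} (hx : x ≠ 0) (hy : y ≠ 0)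
    (hnp : ∀ c : K, y ≠ c • x) :
    ∃ pp qq : E, A.f x pp ≠ 0 ∧ A.f y pp = 0 ∧ A.f x qq = 0 ∧ A.f y qq ≠ 0 := by
  have h1 : ¬ ∀ e, A.f y e = 0 → A.f x e = 0 := by
    intro h
    obtain ⟨c, hc⟩ := A.smul_rep hy hx h
    have hc0 : c ≠ 0 := by rintro rfl; exact hx (by simpa using hc)
    exact hnp c⁻¹ (by rw [hc, smul_smul, inv_mul_cancel₀ hc0, one_smul])
  have h2 : ¬ ∀ e, A.f x e = 0 → A.f y e = 0 := by
    intro h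
    obtain ⟨c, hc⟩ := A.smul_rep hx hy h
    exact hnp c hc
  push_neg at h1 h2
  obtain ⟨pp, hyp, hxp⟩ := h1
  obtain ⟨qq, hxq, hyq⟩ := h2
  exact ⟨pp, qq, hxp, hyp, hxq, hyq⟩

lemma hv0 : A.v ≠ 0 := fun h => A.hfuv (by rw [h, map_zero])

/-- the normalized functional attached to a vector not orthogonal to `u` -/
noncomputable def g1 (w : E) : E →ₗ[K] K :=
  BvNAux.rsl (A.f w) ((A.f w A.u)⁻¹ * (-(A.f A.u w)))

open Classical in
/-- the globally normalized family of functionals -/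
noncomputable def g (z : E) : E →ₗ[K] K :=
  if z = 0 then 0 else if A.f A.u z = 0 then A.g1 (z + A.v) - A.g1 A.v else A.g1 z

@[simp] lemma g_zero : A.g 0 = 0 := by simp [g]

lemma g_of_U {z : E} (hz : A.f A.u z ≠ 0) : A.g z = A.g1 z := by
  have hz0 : z ≠ 0 := by rintro rfl; simp at hz
  simp [g, hz0, hz]

lemma g_of_Hu {z : E} (hz0 : z ≠ 0) (hz : A.f A.u z = 0) :
    A.g z = A.g1 (z + A.v) - A.g1 A.v := by
  simp [g, hz0, hz]

lemma g1_apply (w e : E) : A.g1 w e = A.f w e * ((A.f w A.u)⁻¹ * (-(A.f A.u w))) := rfl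

lemma g1_u {w : E} (hw : A.f A.u w ≠ 0) : A.g1 w A.u = -(A.f A.u w) := by
  have hw0 : w ≠ 0 := by rintro rfl; simp at hw
  have hwu : A.f w A.u ≠ 0 := (A.fsymm_ne A.hu hw0).mp hw
  rw [g1_apply, ← mul_assoc, mul_inv_cancel₀ hwu, one_mul]

lemma gN (z : E) : A.g z A.u = -(A.f A.u z) := by
  rcases eq_or_ne z 0 with rfl | hz0
  · simp
  by_cases hz : A.f A.u z = 0
  · rw [A.g_of_Hu hz0 hz]
    have h1 : A.f A.u (z + A.v) ≠ 0 := by rw [map_add, hz, zero_add]; exact A.hfuv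
    rw [LinearMap.sub_apply, A.g1_u h1, A.g1_u A.hfuv, map_add]
    abel
  · rw [A.g_of_U hz, A.g1_u hz]

lemma g_eq_rsl {z : E} (hz0 : z ≠ 0) : ∃ c : K, c ≠ 0 ∧ ∀ e, A.g z e = A.f z e * c := by
  by_cases hz : A.f A.u z = 0
  · -- the translated case
    have hfu_zv : A.f A.u (z + A.v) ≠ 0 := by rw [map_add, hz, zero_add]; exact A.hfuv
    have hzv0 : z + A.v ≠ 0 := fun h => hfu_zv (by rw [h, map_zero])
    have hvnp : ∀ c : K, A.v ≠ c • z := by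
      intro c h
      apply A.hfuv
      rw [h, map_smul, smul_eq_mul, hz, mul_zero]
    obtain ⟨pp, qq, hzp, hvp, hzq, hvq⟩ := A.dualPair hz0 A.hv0 hvnp
    have hkill : ∀ e, A.f z e = 0 → A.f A.v e = 0 → A.g1 (z + A.v) e = 0 := by
      intro e h1 h2
      have h3 : A.f (z + A.v) e = 0 :=
        A.perp_comb hz0 A.hv0 hzv0 1 1 (by rw [one_smul, one_smul]) h1 h2
      rw [g1_apply, h3, zero_mul]
    have hrep := twoPoint (A.f z) (A.f A.v) (A.g1 (z + A.v)) hzp hvp hzq hvq hkill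
    set α := (A.f z pp)⁻¹ * A.g1 (z + A.v) pp with hα
    set βv := (A.f A.v qq)⁻¹ * A.g1 (z + A.v) qq with hβ
    set cv := (A.f A.v A.u)⁻¹ * (-(A.f A.u A.v)) with hcv
    have hgz : ∀ e, A.g z e = A.f z e * α + A.f A.v e * (βv - cv) := by
      intro e
      rw [A.g_of_Hu hz0 hz, LinearMap.sub_apply, hrep e, g1_apply, mul_sub]
      abel
    have hfvu : A.f A.v A.u ≠ 0 := (A.fsymm_ne A.hu A.hv0).mp A.hfuv
    have hfzu : A.f z A.u = 0 := (A.fsymm hz0 A.hu).mpr hz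
    have hβc : βv - cv = 0 := by
      have h0 := hgz A.u
      rw [A.gN z, hz, neg_zero, hfzu, zero_mul, zero_add] at h0
      rcases mul_eq_zero.mp h0.symm with h | h
      · exact absurd h hfvu
      · exact h
    have hgz' : ∀ e, A.g z e = A.f z e * α := by
      intro e; rw [hgz e, hβc, mul_zero, add_zero]
    refine ⟨α, ?_, hgz'⟩
    intro hα0
    have hker : ∀ e, A.f A.v e = 0 → A.f (z + A.v) e = 0 := by
      intro e he
      have h1 : A.g1 (z + A.v) e = 0 := by
        rw [hrep e, hα0, mul_zero, he, zero_mul, zero_add]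
      have hc'' : (A.f (z + A.v) A.u)⁻¹ * (-(A.f A.u (z + A.v))) ≠ 0 :=
        mul_ne_zero (inv_ne_zero ((A.fsymm_ne A.hu hzv0).mp hfu_zv))
          (neg_ne_zero.mpr hfu_zv)
      rw [g1_apply] at h1
      rcases mul_eq_zero.mp h1 with h | h
      · exact h
      · exact absurd h hc''
    obtain ⟨c, hc⟩ := A.smul_rep A.hv0 hzv0 hker
    have hfc : A.f A.u A.v = c * A.f A.u A.v := by
      have h5 : A.f A.u (z + A.v) = c * A.f A.u A.v := by rw [hc, map_smul, smul_eq_mul]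
      rw [map_add, hz, zero_add] at h5
      exact h5
    have hc1 : c = 1 := mul_right_cancel₀ A.hfuv (hfc.symm.trans (one_mul _).symm)
    rw [hc1, one_smul] at hc
    exact hz0 (by have := hc; nth_rewrite 2 [show A.v = 0 + A.v by rw [zero_add]] at this; exact add_right_cancel this)
  · refine ⟨(A.f z A.u)⁻¹ * (-(A.f A.u z)), ?_, ?_⟩
    · have hfzu : A.f z A.u ≠ 0 := (A.fsymm_ne A.hu hz0).mp hz
      exact mul_ne_zero (inv_ne_zero hfzu) (neg_ne_zero.mpr hz)
    · intro e; rw [A.g_of_U hz]; rfl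

lemma g_ker {z : E} (hz0 : z ≠ 0) (e : E) : A.g z e = 0 ↔ A.f z e = 0 := by
  obtain ⟨c, hc, hgc⟩ := A.g_eq_rsl hz0
  rw [hgc e]
  constructor
  · intro h
    rcases mul_eq_zero.mp h with h | h
    · exact h
    · exact absurd h hc
  · intro h; rw [h, zero_mul]

lemma g_self (z : E) : A.g z z = 0 := by
  rcases eq_or_ne z 0 with rfl | hz
  · simp
  · exact (A.g_ker hz z).mpr (A.fself hz)

lemma f_smul {z : E} (hz0 : z ≠ 0) {l : K} (hl : l ≠ 0) :
    ∃ m : K, m ≠ 0 ∧ ∀ e, A.f (l • z) e = A.f z e * m := by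
  have hlz0 : l • z ≠ 0 := smul_ne_zero hl hz0
  have hHeq : A.H (l • z) = A.H z := by
    unfold H
    rw [Submodule.span_singleton_smul_eq (IsUnit.mk0 l hl) z]
  have hker : ∀ e, A.f z e = 0 → A.f (l • z) e = 0 := by
    intro e he
    rw [A.fker hlz0, hHeq, ← A.fker hz0]
    exact he
  obtain ⟨w, hw⟩ := A.exists_fne hz0
  have hlw : A.f (l • z) w ≠ 0 := by
    rw [Ne, A.fker hlz0, hHeq, ← A.fker hz0]; exact hw
  exact ⟨(A.f z w)⁻¹ * A.f (l • z) w, mul_ne_zero (inv_ne_zero hw) hlw,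
    fun e => onePoint (A.f z) (A.f (l • z)) hw hker e⟩

lemma g_smul_U {z : E} (hz : A.f A.u z ≠ 0) {l : K} (hl : l ≠ 0) (e : E) :
    A.g (l • z) e = A.g z e * ((A.f A.u z)⁻¹ * (l * A.f A.u z)) := by
  have hz0 : z ≠ 0 := by rintro rfl; simp at hz
  obtain ⟨m, hm, hfm⟩ := A.f_smul hz0 hl
  obtain ⟨c, hc, hgc⟩ := A.g_eq_rsl hz0
  have hlz0 : l • z ≠ 0 := smul_ne_zero hl hz0
  obtain ⟨c', hc', hgc'⟩ := A.g_eq_rsl hlz0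
  have hfzu : A.f z A.u ≠ 0 := (A.fsymm_ne A.hu hz0).mp hz
  have h1 : A.f z A.u * (m * c') = -(l * A.f A.u z) := by
    have h := A.gN (l • z)
    rw [hgc' A.u, hfm A.u, map_smul, smul_eq_mul, mul_assoc] at h
    exact h
  have h2 : A.f z A.u * (c * ((A.f A.u z)⁻¹ * (l * A.f A.u z))) = -(l * A.f A.u z) := by
    have hgzu : A.f z A.u * c = -(A.f A.u z) := by
      have h := A.gN z
      rw [hgc A.u] at h
      exact h
    calc A.f z A.u * (c * ((A.f A.u z)⁻¹ * (l * A.f A.u z)))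
        = (A.f z A.u * c) * ((A.f A.u z)⁻¹ * (l * A.f A.u z)) := by rw [mul_assoc]
      _ = -(A.f A.u z * ((A.f A.u z)⁻¹ * (l * A.f A.u z))) := by rw [hgzu, neg_mul]
      _ = -(l * A.f A.u z) := by rw [← mul_assoc, mul_inv_cancel₀ hz, one_mul]
  have h3 : m * c' = c * ((A.f A.u z)⁻¹ * (l * A.f A.u z)) :=
    mul_left_cancel₀ hfzu (h1.trans h2.symm)
  rw [hgc' e, hfm e, mul_assoc, h3, hgc e, mul_assoc]

/-- right-linear independence of a triple of functionals -/
def RI3 (φ ψ χ : E →ₗ[K] K) : Prop :=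
  ∀ a b c : K, (∀ e, φ e * a + ψ e * b + χ e * c = 0) → a = 0 ∧ b = 0 ∧ c = 0


lemma conj_shift {a x y : K} (ha : a ≠ 0) (h : a * x = y * a) : x * a⁻¹ = a⁻¹ * y := by
  calc x * a⁻¹ = a⁻¹ * (a * x) * a⁻¹ := by rw [← mul_assoc, inv_mul_cancel₀ ha, one_mul]
    _ = a⁻¹ * (y * a) * a⁻¹ := by rw [h]
    _ = a⁻¹ * y := by
        simp only [mul_assoc]
        rw [mul_inv_cancel₀ ha, mul_one]

lemma swap_inv {e f : K} (he : e ≠ 0) (hef : e + f ≠ 0) :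
    (e⁻¹ * f) * (e + f)⁻¹ = (e + f)⁻¹ * (f * e⁻¹) := by
  have h : (e + f) * (e⁻¹ * f) = f * e⁻¹ * (e + f) := by
    rw [add_mul, mul_add, mul_inv_cancel_left₀ he, inv_mul_cancel_right₀ he, mul_assoc]
  exact conj_shift hef h

lemma core_calc {Ee Ff Aa Bb Cc Dd : K}
    (hE : Ee ≠ 0) (hF : Ff ≠ 0) (hA : Aa ≠ 0) (hB : Bb ≠ 0) (hC : Cc ≠ 0) (hD : Dd ≠ 0)
    (hEF : Ee + Ff ≠ 0) (hS : Bb - Cc * (Dd⁻¹ * Aa) ≠ 0)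
    (hW : Dd⁻¹ * Aa * ((Bb - Cc * (Dd⁻¹ * Aa))⁻¹ * (Ee + Ff)) = -(Cc⁻¹ * Ff)) :
    Aa * (Bb⁻¹ * -Ee) = -(Dd * (Cc⁻¹ * -Ff)) := by
  have step1 : Cc * (Dd⁻¹ * Aa) * ((Bb - Cc * (Dd⁻¹ * Aa))⁻¹ * (Ee + Ff)) = -Ff := by
    calc Cc * (Dd⁻¹ * Aa) * ((Bb - Cc * (Dd⁻¹ * Aa))⁻¹ * (Ee + Ff))
        = Cc * (Dd⁻¹ * Aa * ((Bb - Cc * (Dd⁻¹ * Aa))⁻¹ * (Ee + Ff))) := by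
          rw [mul_assoc]
      _ = Cc * -(Cc⁻¹ * Ff) := by rw [hW]
      _ = -Ff := by rw [mul_neg, mul_inv_cancel_left₀ hC]
  have step2 : Cc * (Dd⁻¹ * Aa)
      = -(Ff * ((Ee + Ff)⁻¹ * (Bb - Cc * (Dd⁻¹ * Aa)))) := by
    calc Cc * (Dd⁻¹ * Aa)
        = Cc * (Dd⁻¹ * Aa) * ((Bb - Cc * (Dd⁻¹ * Aa))⁻¹ * (Ee + Ff))
            * ((Ee + Ff)⁻¹ * (Bb - Cc * (Dd⁻¹ * Aa))) := by
          simp only [mul_assoc]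
          rw [mul_inv_cancel_left₀ hEF, inv_mul_cancel₀ hS, mul_one]
      _ = -Ff * ((Ee + Ff)⁻¹ * (Bb - Cc * (Dd⁻¹ * Aa))) := by rw [step1]
      _ = -(Ff * ((Ee + Ff)⁻¹ * (Bb - Cc * (Dd⁻¹ * Aa)))) := by rw [neg_mul]
  have step4 : Cc * (Dd⁻¹ * Aa) - Ff * ((Ee + Ff)⁻¹ * (Cc * (Dd⁻¹ * Aa)))
      = -(Ff * ((Ee + Ff)⁻¹ * Bb)) := by
    nth_rewrite 1 [step2]
    rw [mul_sub, mul_sub, neg_sub]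
    abel
  have hone : Ee * ((Ee + Ff)⁻¹ * (Cc * (Dd⁻¹ * Aa)))
      + Ff * ((Ee + Ff)⁻¹ * (Cc * (Dd⁻¹ * Aa))) = Cc * (Dd⁻¹ * Aa) := by
    calc Ee * ((Ee + Ff)⁻¹ * (Cc * (Dd⁻¹ * Aa))) + Ff * ((Ee + Ff)⁻¹ * (Cc * (Dd⁻¹ * Aa)))
        = Ee * (Ee + Ff)⁻¹ * (Cc * (Dd⁻¹ * Aa)) + Ff * (Ee + Ff)⁻¹ * (Cc * (Dd⁻¹ * Aa)) := by
          rw [mul_assoc, mul_assoc]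
      _ = (Ee * (Ee + Ff)⁻¹ + Ff * (Ee + Ff)⁻¹) * (Cc * (Dd⁻¹ * Aa)) := by rw [add_mul]
      _ = ((Ee + Ff) * (Ee + Ff)⁻¹) * (Cc * (Dd⁻¹ * Aa)) := by rw [← add_mul]
      _ = Cc * (Dd⁻¹ * Aa) := by rw [mul_inv_cancel₀ hEF, one_mul]
  have step5 : Ee * ((Ee + Ff)⁻¹ * (Cc * (Dd⁻¹ * Aa))) = -(Ff * ((Ee + Ff)⁻¹ * Bb)) :=
    (eq_sub_of_add_eq hone).trans step4
  have hsw : ∀ t : K, Ee⁻¹ * (Ff * ((Ee + Ff)⁻¹ * t)) = (Ee + Ff)⁻¹ * (Ff * (Ee⁻¹ * t)) := by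
    intro t
    have h := congrArg (fun s => s * t) (swap_inv hE hEF)
    simpa only [mul_assoc] using h
  have step8 : Cc * (Dd⁻¹ * Aa) = -(Ff * (Ee⁻¹ * Bb)) := by
    calc Cc * (Dd⁻¹ * Aa)
        = (Ee + Ff) * (Ee⁻¹ * (Ee * ((Ee + Ff)⁻¹ * (Cc * (Dd⁻¹ * Aa))))) := by
          rw [inv_mul_cancel_left₀ hE, mul_inv_cancel_left₀ hEF]
      _ = (Ee + Ff) * (Ee⁻¹ * -(Ff * ((Ee + Ff)⁻¹ * Bb))) := by rw [step5]
      _ = -((Ee + Ff) * (Ee⁻¹ * (Ff * ((Ee + Ff)⁻¹ * Bb)))) := by rw [mul_neg, mul_neg]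
      _ = -((Ee + Ff) * ((Ee + Ff)⁻¹ * (Ff * (Ee⁻¹ * Bb)))) := by rw [hsw Bb]
      _ = -(Ff * (Ee⁻¹ * Bb)) := by rw [mul_inv_cancel_left₀ hEF]
  have hAa : Aa = Dd * (Cc⁻¹ * -(Ff * (Ee⁻¹ * Bb))) := by
    calc Aa = Dd * (Cc⁻¹ * (Cc * (Dd⁻¹ * Aa))) := by
          rw [inv_mul_cancel_left₀ hC, mul_inv_cancel_left₀ hD]
      _ = Dd * (Cc⁻¹ * -(Ff * (Ee⁻¹ * Bb))) := by rw [step8]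
  rw [hAa]
  simp only [mul_neg, neg_mul, neg_neg, mul_assoc]
  rw [mul_inv_cancel_left₀ hB, inv_mul_cancel₀ hE, mul_one]

lemma coreAS {y z : E} (hy : A.f A.u y ≠ 0) (hz : A.f A.u z ≠ 0)
    (hA : A.f y z ≠ 0) (hEF : A.f A.u (y + z) ≠ 0) (hAB : A.f y (A.u + z) ≠ 0)
    (hRI : RI3 (A.f A.u) (A.f y) (A.f z)) : A.g y z = -(A.g z y) := by
  have hy0 : y ≠ 0 := by rintro rfl; simp at hy
  have hz0 : z ≠ 0 := by rintro rfl; simp at hz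
  have hyz0 : y + z ≠ 0 := fun h => hEF (by rw [h, map_zero])
  have huz0 : A.u + z ≠ 0 := fun h => hAB (by rw [h, map_zero])
  have hB : A.f y A.u ≠ 0 := (A.fsymm_ne A.hu hy0).mp hy
  have hC : A.f z A.u ≠ 0 := (A.fsymm_ne A.hu hz0).mp hz
  have hD : A.f z y ≠ 0 := (A.fsymm_ne hy0 hz0).mp hA
  have hEFsum : A.f A.u (y + z) = A.f A.u y + A.f A.u z := map_add _ y z
  -- the plane functional for s = y + z
  set fs : E →ₗ[K] K := A.f y - rsl (A.f z) ((A.f z y)⁻¹ * A.f y z) with hfs_def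
  have hfs_apply : ∀ e, fs e = A.f y e - A.f z e * ((A.f z y)⁻¹ * A.f y z) := fun e => by
    rw [hfs_def, LinearMap.sub_apply, rsl_apply]
  have hfyyz : A.f y (y + z) = A.f y z := by rw [map_add, A.fself hy0, zero_add]
  have hfzyz : A.f z (y + z) = A.f z y := by rw [map_add, A.fself hz0, add_zero]
  have hfs_s : fs (y + z) = 0 := by
    rw [hfs_apply, hfyyz, hfzyz, mul_inv_cancel_left₀ hD, sub_self]
  have hfs_kill : ∀ e, A.f (y + z) e = 0 → fs e = 0 := by
    intro e he
    set e1 := e - (A.f y e * (A.f y z)⁻¹) • (y + z) with he1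
    have h1 : A.f y e1 = 0 := by
      rw [he1, map_sub, map_smul, smul_eq_mul, hfyyz, mul_assoc,
        inv_mul_cancel₀ hA, mul_one, sub_self]
    have h2 : A.f (y + z) e1 = 0 := by
      rw [he1, map_sub, map_smul, smul_eq_mul, A.fself hyz0, mul_zero, sub_zero]
      exact he
    have h3 : A.f z e1 = 0 :=
      A.perp_comb hy0 hyz0 hz0 (-1) 1
        (by rw [neg_smul, one_smul, one_smul]; abel) h1 h2
    have h4 : fs e1 = 0 := by rw [hfs_apply, h1, h3, zero_mul, sub_zero]
    have hdecomp : e = e1 + (A.f y e * (A.f y z)⁻¹) • (y + z) := by rw [he1]; abel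
    rw [hdecomp, map_add, map_smul, smul_eq_mul, h4, hfs_s, mul_zero, add_zero]
  have hSs : fs A.u ≠ 0 := by
    intro h0
    have hfszu : A.f (y + z) A.u ≠ 0 := (A.fsymm_ne A.hu hyz0).mp hEF
    have hall : ∀ e, fs e = 0 := by
      intro e
      set e1 := e - (A.f (y + z) e * (A.f (y + z) A.u)⁻¹) • A.u with he1
      have h1 : A.f (y + z) e1 = 0 := by
        rw [he1, map_sub, map_smul, smul_eq_mul, mul_assoc,
          inv_mul_cancel₀ hfszu, mul_one, sub_self]
      have h2 := hfs_kill _ h1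
      have hdecomp : e = e1 + (A.f (y + z) e * (A.f (y + z) A.u)⁻¹) • A.u := by
        rw [he1]; abel
      rw [hdecomp, map_add, map_smul, smul_eq_mul, h2, h0, mul_zero, add_zero]
    have hcontra := (hRI 0 1 (-((A.f z y)⁻¹ * A.f y z)) (fun e => by
      have h5 := hall e
      rw [hfs_apply] at h5
      rw [mul_zero, zero_add, mul_one, mul_neg, ← sub_eq_add_neg]
      exact h5)).2.1
    exact one_ne_zero hcontra
  -- the plane functional for t = u + z
  set ft : E →ₗ[K] K := A.f A.u - rsl (A.f z) ((A.f z A.u)⁻¹ * A.f A.u z) with hft_def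
  have hft_apply : ∀ e, ft e = A.f A.u e - A.f z e * ((A.f z A.u)⁻¹ * A.f A.u z) :=
    fun e => by rw [hft_def, LinearMap.sub_apply, rsl_apply]
  have hfuuz : A.f A.u (A.u + z) = A.f A.u z := by rw [map_add, A.fself A.hu, zero_add]
  have hfzuz : A.f z (A.u + z) = A.f z A.u := by rw [map_add, A.fself hz0, add_zero]
  have hft_t : ft (A.u + z) = 0 := by
    rw [hft_apply, hfuuz, hfzuz, mul_inv_cancel_left₀ hC, sub_self]
  have hft_kill : ∀ e, A.f (A.u + z) e = 0 → ft e = 0 := by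
    intro e he
    set e1 := e - (A.f A.u e * (A.f A.u z)⁻¹) • (A.u + z) with he1
    have h1 : A.f A.u e1 = 0 := by
      rw [he1, map_sub, map_smul, smul_eq_mul, hfuuz, mul_assoc,
        inv_mul_cancel₀ hz, mul_one, sub_self]
    have h2 : A.f (A.u + z) e1 = 0 := by
      rw [he1, map_sub, map_smul, smul_eq_mul, A.fself huz0, mul_zero, sub_zero]
      exact he
    have h3 : A.f z e1 = 0 :=
      A.perp_comb A.hu huz0 hz0 (-1) 1
        (by rw [neg_smul, one_smul, one_smul]; abel) h1 h2
    have h4 : ft e1 = 0 := by rw [hft_apply, h1, h3, zero_mul, sub_zero]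
    have hdecomp : e = e1 + (A.f A.u e * (A.f A.u z)⁻¹) • (A.u + z) := by rw [he1]; abel
    rw [hdecomp, map_add, map_smul, smul_eq_mul, h4, hft_t, mul_zero, add_zero]
  have hTt : ft y ≠ 0 := by
    intro h0
    have hftzy : A.f (A.u + z) y ≠ 0 := (A.fsymm_ne hy0 huz0).mp hAB
    have hall : ∀ e, ft e = 0 := by
      intro e
      set e1 := e - (A.f (A.u + z) e * (A.f (A.u + z) y)⁻¹) • y with he1
      have h1 : A.f (A.u + z) e1 = 0 := by
        rw [he1, map_sub, map_smul, smul_eq_mul, mul_assoc,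
          inv_mul_cancel₀ hftzy, mul_one, sub_self]
      have h2 := hft_kill _ h1
      have hdecomp : e = e1 + (A.f (A.u + z) e * (A.f (A.u + z) y)⁻¹) • y := by
        rw [he1]; abel
      rw [hdecomp, map_add, map_smul, smul_eq_mul, h2, h0, mul_zero, add_zero]
    have hcontra := (hRI 1 0 (-((A.f z A.u)⁻¹ * A.f A.u z)) (fun e => by
      have h5 := hall e
      rw [hft_apply] at h5
      rw [mul_one, mul_zero, add_zero, mul_neg, ← sub_eq_add_neg]
      exact h5)).1
    exact one_ne_zero hcontra
  -- the point P = u + (y + z)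
  set P := A.u + (y + z) with hP
  have hfuP : A.f A.u P ≠ 0 := by
    rw [hP, map_add, A.fself A.hu, zero_add]; exact hEF
  have hP0 : P ≠ 0 := fun h => hfuP (by rw [h, map_zero])
  set Q1 := (fs A.u)⁻¹ * A.f A.u (y + z) with hQ1
  set Q2 := (ft y)⁻¹ * A.f y (A.u + z) with hQ2
  set Rep1 : E →ₗ[K] K := A.f A.u - rsl fs Q1 with hRep1_def
  set Rep2 : E →ₗ[K] K := A.f y - rsl ft Q2 with hRep2_def
  have hRep1_apply : ∀ e, Rep1 e = A.f A.u e - fs e * Q1 := fun e => by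
    rw [hRep1_def, LinearMap.sub_apply, rsl_apply]
  have hRep2_apply : ∀ e, Rep2 e = A.f y e - ft e * Q2 := fun e => by
    rw [hRep2_def, LinearMap.sub_apply, rsl_apply]
  have hfsP : fs P = fs A.u := by rw [hP, map_add, hfs_s, add_zero]
  have hRep1P : Rep1 P = 0 := by
    rw [hRep1_apply, hfsP, hQ1, mul_inv_cancel_left₀ hSs, hP, map_add,
      A.fself A.hu, zero_add, sub_self]
  have hPalt : P = y + (A.u + z) := by rw [hP]; abel
  have hftP : ft P = ft y := by rw [hPalt, map_add, hft_t, add_zero]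
  have hfyP : A.f y P = A.f y (A.u + z) := by rw [hPalt, map_add, A.fself hy0, zero_add]
  have hRep2P : Rep2 P = 0 := by
    rw [hRep2_apply, hftP, hQ2, mul_inv_cancel_left₀ hTt, hfyP, sub_self]
  have hRep1_kill : ∀ e, A.f P e = 0 → Rep1 e = 0 := by
    intro e he
    set e1 := e - (A.f A.u e * (A.f A.u P)⁻¹) • P with he1
    have h1 : A.f A.u e1 = 0 := by
      rw [he1, map_sub, map_smul, smul_eq_mul, mul_assoc,
        inv_mul_cancel₀ hfuP, mul_one, sub_self]
    have h2 : A.f P e1 = 0 := by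
      rw [he1, map_sub, map_smul, smul_eq_mul, A.fself hP0, mul_zero, sub_zero]
      exact he
    have h3 : A.f (y + z) e1 = 0 :=
      A.perp_comb A.hu hP0 hyz0 (-1) 1
        (by rw [neg_smul, one_smul, one_smul, hP]; abel) h1 h2
    have h4 : fs e1 = 0 := hfs_kill _ h3
    have h5 : Rep1 e1 = 0 := by rw [hRep1_apply, h1, h4, zero_mul, sub_zero]
    have hdecomp : e = e1 + (A.f A.u e * (A.f A.u P)⁻¹) • P := by rw [he1]; abel
    rw [hdecomp, map_add, map_smul, smul_eq_mul, h5, hRep1P, mul_zero, add_zero]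
  have hfyP_ne : A.f y P ≠ 0 := by rw [hfyP]; exact hAB
  have hRep2_kill : ∀ e, A.f P e = 0 → Rep2 e = 0 := by
    intro e he
    set e1 := e - (A.f y e * (A.f y P)⁻¹) • P with he1
    have h1 : A.f y e1 = 0 := by
      rw [he1, map_sub, map_smul, smul_eq_mul, mul_assoc,
        inv_mul_cancel₀ hfyP_ne, mul_one, sub_self]
    have h2 : A.f P e1 = 0 := by
      rw [he1, map_sub, map_smul, smul_eq_mul, A.fself hP0, mul_zero, sub_zero]
      exact he
    have h3 : A.f (A.u + z) e1 = 0 :=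
      A.perp_comb hy0 hP0 huz0 (-1) 1
        (by rw [neg_smul, one_smul, one_smul, hPalt]; abel) h1 h2
    have h4 : ft e1 = 0 := hft_kill _ h3
    have h5 : Rep2 e1 = 0 := by rw [hRep2_apply, h1, h4, zero_mul, sub_zero]
    have hdecomp : e = e1 + (A.f y e * (A.f y P)⁻¹) • P := by rw [he1]; abel
    rw [hdecomp, map_add, map_smul, smul_eq_mul, h5, hRep2P, mul_zero, add_zero]
  obtain ⟨p0, hp0⟩ := A.exists_fne hP0
  have hRep2p0 : Rep2 p0 ≠ 0 := by
    intro h0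
    have hall : ∀ e, Rep2 e = 0 := by
      intro e
      set e1 := e - (A.f P e * (A.f P p0)⁻¹) • p0 with he1
      have h1 : A.f P e1 = 0 := by
        rw [he1, map_sub, map_smul, smul_eq_mul, mul_assoc,
          inv_mul_cancel₀ hp0, mul_one, sub_self]
      have h2 := hRep2_kill _ h1
      have hdecomp : e = e1 + (A.f P e * (A.f P p0)⁻¹) • p0 := by rw [he1]; abel
      rw [hdecomp, map_add, map_smul, smul_eq_mul, h2, h0, mul_zero, add_zero]
    have hcontra := (hRI (-Q2) 1 (((A.f z A.u)⁻¹ * A.f A.u z) * Q2) (fun e => by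
      have h5 := hall e
      rw [hRep2_apply, hft_apply] at h5
      have h6 : A.f A.u e * -Q2 + A.f y e * 1
          + A.f z e * ((A.f z A.u)⁻¹ * A.f A.u z * Q2)
          = A.f y e - (A.f A.u e - A.f z e * ((A.f z A.u)⁻¹ * A.f A.u z)) * Q2 := by
        noncomm_ring
      rw [h6, h5])).2.1
    exact one_ne_zero hcontra
  set ρ := (Rep2 p0)⁻¹ * Rep1 p0 with hρ
  have hMatch : ∀ e, Rep1 e - Rep2 e * ρ = 0 := by
    intro e
    set e1 := e - (A.f P e * (A.f P p0)⁻¹) • p0 with he1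
    have h1 : A.f P e1 = 0 := by
      rw [he1, map_sub, map_smul, smul_eq_mul, mul_assoc,
        inv_mul_cancel₀ hp0, mul_one, sub_self]
    have h2 : Rep1 e1 - Rep2 e1 * ρ = 0 := by
      rw [hRep1_kill _ h1, hRep2_kill _ h1, zero_mul, sub_zero]
    have h3 : Rep1 p0 - Rep2 p0 * ρ = 0 := by
      rw [hρ, mul_inv_cancel_left₀ hRep2p0, sub_self]
    have hdecomp : e = e1 + (A.f P e * (A.f P p0)⁻¹) • p0 := by rw [he1]; abel
    rw [hdecomp, map_add, map_add, map_smul, map_smul]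
    simp only [smul_eq_mul]
    have h7 : (Rep1 e1 + A.f P e * (A.f P p0)⁻¹ * Rep1 p0)
        - (Rep2 e1 + A.f P e * (A.f P p0)⁻¹ * Rep2 p0) * ρ
        = (Rep1 e1 - Rep2 e1 * ρ)
          + A.f P e * (A.f P p0)⁻¹ * (Rep1 p0 - Rep2 p0 * ρ) := by
      noncomm_ring
    rw [h7, h2, h3, mul_zero, add_zero]
  have hkey : ∀ e : E, A.f A.u e * (1 + Q2 * ρ) + A.f y e * (-(Q1 + ρ))
      + A.f z e * (((A.f z y)⁻¹ * A.f y z) * Q1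
        - ((A.f z A.u)⁻¹ * A.f A.u z) * (Q2 * ρ)) = 0 := by
    intro e
    have h5 := hMatch e
    rw [hRep1_apply, hRep2_apply, hfs_apply, hft_apply] at h5
    have h6 : A.f A.u e * (1 + Q2 * ρ) + A.f y e * (-(Q1 + ρ))
        + A.f z e * (((A.f z y)⁻¹ * A.f y z) * Q1
          - ((A.f z A.u)⁻¹ * A.f A.u z) * (Q2 * ρ))
        = (A.f A.u e - (A.f y e - A.f z e * ((A.f z y)⁻¹ * A.f y z)) * Q1)
          - (A.f y e - (A.f A.u e - A.f z e * ((A.f z A.u)⁻¹ * A.f A.u z)) * Q2) * ρ := by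
      noncomm_ring
    rw [h6, h5]
  obtain ⟨hc1, hc2, hc3⟩ := hRI _ _ _ hkey
  have hQ2ρ : Q2 * ρ = -1 := eq_neg_of_add_eq_zero_right hc1
  have hc3' : ((A.f z y)⁻¹ * A.f y z) * Q1 = -((A.f z A.u)⁻¹ * A.f A.u z) := by
    have h := sub_eq_zero.mp hc3
    rw [hQ2ρ, mul_neg, mul_one] at h
    exact h
  rw [hQ1, hfs_apply, hEFsum] at hc3'
  have hS' : A.f y A.u - A.f z A.u * ((A.f z y)⁻¹ * A.f y z) ≠ 0 :=
    (hfs_apply A.u) ▸ hSs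
  have hEF' : A.f A.u y + A.f A.u z ≠ 0 := hEFsum ▸ hEF
  have hgoal := core_calc hy hz hA hB hC hD hEF' hS' hc3'
  rw [A.g_of_U hy, A.g_of_U hz, g1_apply, g1_apply]
  exact hgoal


lemma strongAS {y z : E} (hy : A.f A.u y ≠ 0) (hz : A.f A.u z ≠ 0)
    (hA : A.f y z ≠ 0) (hEF : A.f A.u (y + z) ≠ 0)
    (hRI : RI3 (A.f A.u) (A.f y) (A.f z)) : A.g y z = -(A.g z y) := by
  by_cases hAB : A.f y (A.u + z) ≠ 0
  · exact A.coreAS hy hz hA hEF hAB hRI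
  push_neg at hAB
  have hy0 : y ≠ 0 := by rintro rfl; simp at hy
  have hz0 : z ≠ 0 := by rintro rfl; simp at hz
  have h2 : (2 : K) ≠ 0 := A.h2
  obtain ⟨my, hmy, hfy2⟩ := A.f_smul hy0 h2
  obtain ⟨mz, hmz, hfz2⟩ := A.f_smul hz0 h2
  have hu2y : A.f A.u ((2:K) • y) ≠ 0 := by
    rw [map_smul, smul_eq_mul]; exact mul_ne_zero h2 hy
  have hu2z : A.f A.u ((2:K) • z) ≠ 0 := by
    rw [map_smul, smul_eq_mul]; exact mul_ne_zero h2 hz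
  have hA2 : A.f ((2:K) • y) ((2:K) • z) ≠ 0 := by
    rw [hfy2, map_smul, smul_eq_mul]
    exact mul_ne_zero (mul_ne_zero h2 hA) hmy
  have hEF2 : A.f A.u ((2:K) • y + (2:K) • z) ≠ 0 := by
    rw [← smul_add, map_smul, smul_eq_mul]
    exact mul_ne_zero h2 hEF
  have hAB2 : A.f ((2:K) • y) (A.u + (2:K) • z) ≠ 0 := by
    rw [hfy2, map_add, map_smul, smul_eq_mul]
    have hBA : A.f y A.u + A.f y z = 0 := by rw [← map_add]; exact hAB
    have hBneg : A.f y A.u = -A.f y z := eq_neg_of_add_eq_zero_left hBA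
    have hsum : A.f y A.u + 2 * A.f y z ≠ 0 := by
      rw [hBneg, two_mul, neg_add_cancel_left]
      exact hA
    exact mul_ne_zero hsum hmy
  have hRI2 : RI3 (A.f A.u) (A.f ((2:K) • y)) (A.f ((2:K) • z)) := by
    intro a b c hrel
    have h := hRI a (my * b) (mz * c) (fun e => by
      have h := hrel e
      rw [hfy2, hfz2, mul_assoc, mul_assoc] at h
      exact h)
    obtain ⟨ha, hb, hc⟩ := h
    refine ⟨ha, ?_, ?_⟩
    · rcases mul_eq_zero.mp hb with h | h
      · exact absurd h hmy
      · exact h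
    · rcases mul_eq_zero.mp hc with h | h
      · exact absurd h hmz
      · exact h
  have hAS2 := A.coreAS hu2y hu2z hA2 hEF2 hAB2 hRI2
  have hconj_y : (A.f A.u y)⁻¹ * ((2:K) * A.f A.u y) = 2 := by
    rw [show (2:K) * A.f A.u y = A.f A.u y * 2 by rw [two_mul, mul_two],
      inv_mul_cancel_left₀ hy]
  have hconj_z : (A.f A.u z)⁻¹ * ((2:K) * A.f A.u z) = 2 := by
    rw [show (2:K) * A.f A.u z = A.f A.u z * 2 by rw [two_mul, mul_two],
      inv_mul_cancel_left₀ hz]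
  rw [A.g_smul_U hy h2 ((2:K) • z), hconj_y, A.g_smul_U hz h2 ((2:K) • y), hconj_z,
    map_smul, map_smul, smul_eq_mul, smul_eq_mul] at hAS2
  -- hAS2 : 2 * A.g y z * 2 = -(2 * A.g z y * 2)
  have hAS2' : 2 * A.g y z * 2 = 2 * -(A.g z y) * 2 := by
    rw [hAS2, mul_neg, neg_mul]
  exact mul_left_cancel₀ h2 (mul_right_cancel₀ h2 hAS2')

lemma asURI {y z : E} (hy : A.f A.u y ≠ 0) (hz : A.f A.u z ≠ 0)
    (hRI : RI3 (A.f A.u) (A.f y) (A.f z)) : A.g y z = -(A.g z y) := by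
  have hy0 : y ≠ 0 := by rintro rfl; simp at hy
  have hz0 : z ≠ 0 := by rintro rfl; simp at hz
  by_cases hA : A.f y z = 0
  · obtain ⟨c, hc, hgc⟩ := A.g_eq_rsl hy0
    obtain ⟨c', hc', hgc'⟩ := A.g_eq_rsl hz0
    rw [hgc z, hgc' y, hA, zero_mul, (A.fsymm hy0 hz0).mp hA, zero_mul, neg_zero]
  by_cases hEF : A.f A.u (y + z) ≠ 0
  · exact A.strongAS hy hz hA hEF hRI
  push_neg at hEF
  have hm1 : (-1 : K) ≠ 0 := neg_ne_zero.mpr one_ne_zero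
  have hFE : A.f A.u z = -A.f A.u y := by
    have h := hEF; rw [map_add] at h; exact eq_neg_of_add_eq_zero_right h
  have hEmF : A.f A.u (y + (-1:K) • z) ≠ 0 := by
    rw [map_add, map_smul, smul_eq_mul, neg_one_mul, hFE, neg_neg, ← two_mul]
    exact mul_ne_zero A.h2 hy
  have huz' : A.f A.u ((-1:K) • z) ≠ 0 := by
    rw [map_smul, smul_eq_mul, neg_one_mul]; exact neg_ne_zero.mpr hz
  have hA' : A.f y ((-1:K) • z) ≠ 0 := by
    rw [map_smul, smul_eq_mul, neg_one_mul]; exact neg_ne_zero.mpr hA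
  have hRI' : RI3 (A.f A.u) (A.f y) (A.f ((-1:K) • z)) := by
    obtain ⟨m, hm, hfm⟩ := A.f_smul hz0 hm1
    intro a b c hrel
    have h := hRI a b (m * c) (fun e => by
      have h := hrel e
      rw [hfm, mul_assoc] at h
      exact h)
    obtain ⟨ha, hb, hc⟩ := h
    refine ⟨ha, hb, ?_⟩
    rcases mul_eq_zero.mp hc with h | h
    · exact absurd h hm
    · exact h
  have hAS' := A.strongAS hy huz' hA' hEmF hRI'
  have hconj : (A.f A.u z)⁻¹ * ((-1:K) * A.f A.u z) = -1 := by
    rw [neg_one_mul, mul_neg, inv_mul_cancel₀ hz]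
  rw [A.g_smul_U hz hm1 y, hconj, mul_neg_one, map_smul, smul_eq_mul, neg_one_mul] at hAS'
  -- hAS' : -(A.g y z) = -(-(A.g z y))
  exact neg_inj.mp hAS'



lemma asTriv {y z : E} (hy0 : y ≠ 0) (hz0 : z ≠ 0) (hA : A.f y z = 0) :
    A.g y z = -(A.g z y) := by
  obtain ⟨c, hc, hgc⟩ := A.g_eq_rsl hy0
  obtain ⟨c', hc', hgc'⟩ := A.g_eq_rsl hz0
  rw [hgc z, hgc' y, hA, zero_mul, (A.fsymm hy0 hz0).mp hA, zero_mul, neg_zero]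

lemma not_top_exists {N : Submodule K E} (h : N ≠ ⊤) : ∃ x, x ∉ N := by
  by_contra hh
  push_neg at hh
  exact h (Submodule.eq_top_iff'.mpr hh)

lemma union_two {N1 N2 : Submodule K E} (h1 : N1 ≠ ⊤) (h2 : N2 ≠ ⊤) :
    ∃ x, x ∉ N1 ∧ x ∉ N2 := by
  obtain ⟨a, ha⟩ := not_top_exists h1
  obtain ⟨b, hb⟩ := not_top_exists h2
  by_cases hab : a ∈ N2
  · by_cases hba : b ∈ N1
    · refine ⟨a + b, fun h => ha ?_, fun h => hb ?_⟩
      · simpa using N1.sub_mem h hba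
      · simpa using N2.sub_mem h hab
    · exact ⟨b, hba, hb⟩
  · exact ⟨a, ha, hab⟩

lemma union_three (h2K : (2 : K) ≠ 0) {N1 N2 N3 : Submodule K E}
    (h1 : N1 ≠ ⊤) (h2 : N2 ≠ ⊤) (h3 : N3 ≠ ⊤) :
    ∃ x, x ∉ N1 ∧ x ∉ N2 ∧ x ∉ N3 := by
  by_contra hcon
  push_neg at hcon
  have hmem : ∀ c : E, c ∉ N3 → c ∈ N1 ∨ c ∈ N2 := by
    intro c hc
    by_cases hc1 : c ∈ N1
    · exact Or.inl hc1
    by_cases hc2 : c ∈ N2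
    · exact Or.inr hc2
    exact absurd (hcon c hc1 hc2) (by simpa using hc)
  obtain ⟨x0, hx1, hx2⟩ := union_two h1 h2
  by_cases hx3 : x0 ∈ N3
  case neg => exact (hmem x0 hx3).elim (fun h => hx1 h) (fun h => hx2 h)
  obtain ⟨y0, hy3⟩ := not_top_exists h3
  have hc2 : x0 + y0 ∉ N3 := fun h => hy3 (by simpa using N3.sub_mem h hx3)
  have hc3 : x0 - y0 ∉ N3 := fun h => hy3 (by simpa using N3.sub_mem hx3 h)
  have key : ∀ N : Submodule K E, x0 ∉ N → y0 ∈ N → x0 + y0 ∈ N ∨ x0 - y0 ∈ N → False := by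
    intro N hxN hyN hor
    rcases hor with h | h
    · exact hxN (by simpa using N.sub_mem h hyN)
    · exact hxN (by simpa using N.add_mem h hyN)
  rcases hmem y0 hy3 with hy1 | hy1
  · -- y0 ∈ N1 ; then x0+y0 and x0-y0 are in N2
    have hp : x0 + y0 ∈ N2 := by
      rcases hmem _ hc2 with h | h
      · exact absurd (by simpa using N1.sub_mem h hy1) hx1
      · exact h
    have hq : x0 - y0 ∈ N2 := by
      rcases hmem _ hc3 with h | h
      · exact absurd (by simpa using N1.add_mem h hy1) hx1
      · exact h
    have hsum : (2 : K) • x0 ∈ N2 := by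
      have h := N2.add_mem hp hq
      have heq : (x0 + y0) + (x0 - y0) = (2 : K) • x0 := by rw [two_smul]; abel
      rwa [heq] at h
    exact hx2 (by simpa [smul_smul, inv_mul_cancel₀ h2K] using N2.smul_mem (2 : K)⁻¹ hsum)
  · have hp : x0 + y0 ∈ N1 := by
      rcases hmem _ hc2 with h | h
      · exact h
      · exact absurd (by simpa using N2.sub_mem h hy1) hx2
    have hq : x0 - y0 ∈ N1 := by
      rcases hmem _ hc3 with h | h
      · exact h
      · exact absurd (by simpa using N2.add_mem h hy1) hx2
    have hsum : (2 : K) • x0 ∈ N1 := by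
      have h := N1.add_mem hp hq
      have heq : (x0 + y0) + (x0 - y0) = (2 : K) • x0 := by rw [two_smul]; abel
      rwa [heq] at h
    exact hx1 (by simpa [smul_smul, inv_mul_cancel₀ h2K] using N1.smul_mem (2 : K)⁻¹ hsum)

/-- points orthogonal to everything in `H x ⊓ H y` -/
def Zsub (x y : E) : Submodule K E :=
  ⨅ (e : E) (_ : e ≠ 0) (_ : e ∈ A.H x ⊓ A.H y), A.H e

lemma mem_Zsub {x y w : E} :
    w ∈ A.Zsub x y ↔ ∀ e : E, e ≠ 0 → e ∈ A.H x ⊓ A.H y → w ∈ A.H e := by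
  simp [Zsub, Submodule.mem_iInf]

lemma Zsub_ne_top {x y : E} (hx : x ≠ 0) (hy : y ≠ 0) : A.Zsub x y ≠ ⊤ := by
  have he0 : ∃ e0, e0 ≠ 0 ∧ e0 ∈ A.H x ⊓ A.H y := by
    by_contra h
    push_neg at h
    have hinj : Function.Injective ((A.f x).prod (A.f y)) := by
      rw [← LinearMap.ker_eq_bot]
      rw [Submodule.eq_bot_iff]
      intro w hw
      rw [LinearMap.mem_ker, LinearMap.prod_apply, Prod.mk.injEq] at hw
      by_contra hw0
      exact h w hw0 (Submodule.mem_inf.mpr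
        ⟨(A.fker hx w).mp hw.1, (A.fker hy w).mp hw.2⟩)
    have hrank := LinearMap.lift_rank_le_of_injective _ hinj
    have hKK : Module.rank K (K × K) = 2 := by
      rw [rank_prod', Module.rank_self, one_add_one_eq_two]
    rw [hKK] at hrank
    have h3 := (Cardinal.lift_le.mpr A.hdim).trans hrank
    simp only [Cardinal.lift_ofNat] at h3
    norm_num at h3
  obtain ⟨e0, he00, he0m⟩ := he0
  intro htop
  apply A.Hne_top he00
  rw [eq_top_iff]
  intro w _
  exact A.mem_Zsub.mp (htop ▸ Submodule.mem_top) e0 he00 he0m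

lemma mem_Zsub_self {y : E} (hy0 : y ≠ 0) : y ∈ A.Zsub A.u y := by
  rw [mem_Zsub]
  intro e he0 hem
  exact A.mem_H_symm hy0 he0 (Submodule.mem_inf.mp hem).2

lemma mem_Z_of_rel {y z : E} (hy0 : y ≠ 0) (hz0 : z ≠ 0) {a b : K}
    (hrel : ∀ e, A.f z e = A.f A.u e * a + A.f y e * b) : z ∈ A.Zsub A.u y := by
  rw [mem_Zsub]
  intro e he0 hem
  obtain ⟨h1, h2⟩ := Submodule.mem_inf.mp hem
  have h3 : A.f z e = 0 := by
    rw [hrel e, (A.fker A.hu e).mpr h1, (A.fker hy0 e).mpr h2, zero_mul, zero_mul, add_zero]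
  exact A.mem_H_symm hz0 he0 ((A.fker hz0 e).mp h3)

lemma notRI_rel {y z : E} (hy : A.f A.u y ≠ 0)
    (hnRI : ¬ RI3 (A.f A.u) (A.f y) (A.f z)) :
    ∃ a b : K, ∀ e, A.f z e = A.f A.u e * a + A.f y e * b := by
  have hy0 : y ≠ 0 := by rintro rfl; simp at hy
  rw [RI3] at hnRI
  push_neg at hnRI
  obtain ⟨a, b, c, hrel, hne⟩ := hnRI
  have hc : c ≠ 0 := by
    intro hc0
    have hb : b = 0 := by
      by_contra hb0
      have hker : ∀ e, A.f A.u e = 0 → A.f y e = 0 := by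
        intro e he
        have h := hrel e
        rw [hc0, mul_zero, add_zero, he, zero_mul, zero_add] at h
        rcases mul_eq_zero.mp h with hh | hh
        · exact hh
        · exact absurd hh hb0
      obtain ⟨c', hc'⟩ := A.smul_rep A.hu hy0 hker
      apply hy
      rw [hc', map_smul, smul_eq_mul, A.fself A.hu, mul_zero]
    have ha : a = 0 := by
      by_contra ha0
      obtain ⟨w, hw⟩ := A.exists_fne A.hu
      have h := hrel w
      rw [hc0, hb, mul_zero, mul_zero, add_zero, add_zero] at h
      rcases mul_eq_zero.mp h with hh | hh
      · exact hw hh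
      · exact ha0 hh
    exact hne ha hb hc0
  refine ⟨-(a * c⁻¹), -(b * c⁻¹), fun e => ?_⟩
  have h := hrel e
  have hneg : A.f z e * c = -(A.f A.u e * a + A.f y e * b) :=
    eq_neg_of_add_eq_zero_right h
  calc A.f z e = A.f z e * c * c⁻¹ := by rw [mul_inv_cancel_right₀ hc]
    _ = -(A.f A.u e * a + A.f y e * b) * c⁻¹ := by rw [hneg]
    _ = A.f A.u e * -(a * c⁻¹) + A.f y e * -(b * c⁻¹) := by noncomm_ring

lemma addKL {a b : E} (ha : A.f A.u a ≠ 0) (hb : A.f A.u b ≠ 0)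
    (hab : A.f a b ≠ 0) (hs : A.f A.u (a + b) ≠ 0)
    (hAS : A.g a b = -(A.g b a)) : ∀ e, A.g (a + b) e = A.g a e + A.g b e := by
  have ha0 : a ≠ 0 := by rintro rfl; simp at ha
  have hb0 : b ≠ 0 := by rintro rfl; simp at hb
  have hab0 : a + b ≠ 0 := fun h => hs (by rw [h, map_zero])
  have hA' : A.f a (a + b) = A.f a b := by rw [map_add, A.fself ha0, zero_add]
  have hB' : A.f a A.u ≠ 0 := (A.fsymm_ne A.hu ha0).mp ha
  have hC' : A.f b A.u ≠ 0 := (A.fsymm_ne A.hu hb0).mp hb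
  have hD' : A.f b a ≠ 0 := (A.fsymm_ne ha0 hb0).mp hab
  set ub := A.u - (A.f a A.u * (A.f a b)⁻¹) • (a + b) with hub
  have hfa_ub : A.f a ub = 0 := by
    rw [hub, map_sub, map_smul, smul_eq_mul, hA', mul_assoc,
      inv_mul_cancel₀ hab, mul_one, sub_self]
  have hfb_ab : A.f b (a + b) = A.f b a := by rw [map_add, A.fself hb0, add_zero]
  have hbeta : A.f b ub ≠ 0 := by
    intro h0
    rw [hub, map_sub, map_smul, smul_eq_mul, hfb_ab] at h0
    have hCeq : A.f b A.u = A.f a A.u * ((A.f a b)⁻¹ * A.f b a) := by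
      have h := sub_eq_zero.mp h0
      rw [h, mul_assoc]
    have hgab : A.g a b = A.f a b * ((A.f a A.u)⁻¹ * -(A.f A.u a)) := by
      rw [A.g_of_U ha, g1_apply]
    have hgba : A.g b a = A.f b a * ((A.f b A.u)⁻¹ * -(A.f A.u b)) := by
      rw [A.g_of_U hb, g1_apply]
    have hAS' := hAS
    rw [hgab, hgba, hCeq] at hAS'
    have hRHS : A.f b a * ((A.f a A.u * ((A.f a b)⁻¹ * A.f b a))⁻¹ * -(A.f A.u b))
        = A.f a b * ((A.f a A.u)⁻¹ * -(A.f A.u b)) := by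
      rw [mul_inv_rev, mul_inv_rev, inv_inv]
      simp only [mul_assoc]
      rw [mul_inv_cancel_left₀ hD']
    rw [hRHS] at hAS'
    simp only [mul_neg, neg_neg] at hAS'
    -- hAS' : -(A' * (B⁻¹ * Ea)) = A' * (B⁻¹ * Eb)
    have h8 : -((A.f a A.u)⁻¹ * A.f A.u a) = (A.f a A.u)⁻¹ * A.f A.u b := by
      apply mul_left_cancel₀ hab
      rw [mul_neg]
      exact hAS'
    have h9 : (A.f a A.u)⁻¹ * (A.f A.u a + A.f A.u b) = 0 := by
      rw [mul_add, ← h8, add_neg_cancel]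
    have h10 : A.f A.u a + A.f A.u b = 0 := by
      rcases mul_eq_zero.mp h9 with hh | hh
      · exact absurd hh (inv_ne_zero hB')
      · exact hh
    exact hs (by rw [map_add]; exact h10)
  intro e
  set c1 := A.f a e * (A.f a b)⁻¹ with hc1
  set e1 := e - c1 • (a + b) with he1
  have h1 : A.f a e1 = 0 := by
    rw [he1, map_sub, map_smul, smul_eq_mul, hA', hc1, mul_assoc,
      inv_mul_cancel₀ hab, mul_one, sub_self]
  set c2 := A.f b e1 * (A.f b ub)⁻¹ with hc2
  set e2 := e1 - c2 • ub with he2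
  have h2 : A.f b e2 = 0 := by
    rw [he2, map_sub, map_smul, smul_eq_mul, hc2, mul_assoc,
      inv_mul_cancel₀ hbeta, mul_one, sub_self]
  have h3 : A.f a e2 = 0 := by
    rw [he2, map_sub, map_smul, smul_eq_mul, h1, hfa_ub, mul_zero, sub_zero]
  have hgab_e2 : A.f (a + b) e2 = 0 :=
    A.perp_comb ha0 hb0 hab0 1 1 (by rw [one_smul, one_smul]) h3 h2
  have hD2 : A.g (a + b) e2 - (A.g a e2 + A.g b e2) = 0 := by
    rw [(A.g_ker hab0 e2).mpr hgab_e2, (A.g_ker ha0 e2).mpr h3,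
      (A.g_ker hb0 e2).mpr h2, add_zero, sub_zero]
  have hDab : A.g (a + b) (a + b) - (A.g a (a + b) + A.g b (a + b)) = 0 := by
    rw [A.g_self, map_add, A.g_self, zero_add, map_add, A.g_self, add_zero, hAS,
      neg_add_cancel, sub_zero]
  have hDu : A.g (a + b) A.u - (A.g a A.u + A.g b A.u) = 0 := by
    rw [A.gN, A.gN, A.gN, map_add]
    abel
  have hDub : A.g (a + b) ub - (A.g a ub + A.g b ub) = 0 := by
    rw [hub]
    simp only [map_sub, map_smul, smul_eq_mul]
    have hstep : A.g (a + b) A.u - A.f a A.u * (A.f a b)⁻¹ * A.g (a + b) (a + b)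
        - (A.g a A.u - A.f a A.u * (A.f a b)⁻¹ * A.g a (a + b)
          + (A.g b A.u - A.f a A.u * (A.f a b)⁻¹ * A.g b (a + b)))
        = (A.g (a + b) A.u - (A.g a A.u + A.g b A.u))
          - A.f a A.u * (A.f a b)⁻¹
            * (A.g (a + b) (a + b) - (A.g a (a + b) + A.g b (a + b))) := by
      noncomm_ring
    rw [hstep, hDu, hDab, mul_zero, sub_zero]
  set w := a + b with hw
  have hdecomp : e = e2 + c2 • ub + c1 • w := by rw [he2, he1]; abel
  have hfinal : A.g w e - (A.g a e + A.g b e) = 0 := by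
    rw [hdecomp]
    simp only [map_add, map_smul, smul_eq_mul]
    have hexp : A.g w e2 + c2 * A.g w ub + c1 * A.g w w
        - (A.g a e2 + c2 * A.g a ub + c1 * A.g a w
          + (A.g b e2 + c2 * A.g b ub + c1 * A.g b w))
        = (A.g w e2 - (A.g a e2 + A.g b e2))
          + c2 * (A.g w ub - (A.g a ub + A.g b ub))
          + c1 * (A.g w w - (A.g a w + A.g b w)) := by
      noncomm_ring
    rw [hexp, hD2, hDub, hDab, mul_zero, mul_zero, add_zero, add_zero]
  have := sub_eq_zero.mp hfinal
  exact this

lemma asUU {y z : E} (hy : A.f A.u y ≠ 0) (hz : A.f A.u z ≠ 0) :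
    A.g y z = -(A.g z y) := by
  have hy0 : y ≠ 0 := by rintro rfl; simp at hy
  have hz0 : z ≠ 0 := by rintro rfl; simp at hz
  by_cases hRI : RI3 (A.f A.u) (A.f y) (A.f z)
  · exact A.asURI hy hz hRI
  by_cases hA : A.f y z = 0
  · exact A.asTriv hy0 hz0 hA
  obtain ⟨aa, bb, hrel⟩ := A.notRI_rel hy hRI
  have hbb : bb ≠ 0 := by
    intro h0
    have hker : ∀ e, A.f A.u e = 0 → A.f z e = 0 := fun e he => by
      rw [hrel e, he, h0, zero_mul, mul_zero, add_zero]
    obtain ⟨c, hc⟩ := A.smul_rep A.hu hz0 hker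
    apply hz
    rw [hc, map_smul, smul_eq_mul, A.fself A.hu, mul_zero]
  have hzZ : z ∈ A.Zsub A.u y := A.mem_Z_of_rel hy0 hz0 hrel
  have hInt : ∀ e, e ≠ 0 → (e ∈ A.H A.u ⊓ A.H y ↔ e ∈ A.H A.u ⊓ A.H z) := by
    intro e he0
    constructor
    · intro hem
      obtain ⟨h1, h2⟩ := Submodule.mem_inf.mp hem
      refine Submodule.mem_inf.mpr ⟨h1, ?_⟩
      have h3 : A.f z e = 0 := by
        rw [hrel e, (A.fker A.hu e).mpr h1, (A.fker hy0 e).mpr h2, zero_mul,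
          zero_mul, add_zero]
      exact (A.fker hz0 e).mp h3
    · intro hem
      obtain ⟨h1, h2⟩ := Submodule.mem_inf.mp hem
      refine Submodule.mem_inf.mpr ⟨h1, ?_⟩
      have h1' : A.f A.u e = 0 := (A.fker A.hu e).mpr h1
      have h2' : A.f z e = 0 := (A.fker hz0 e).mpr h2
      have h3 : A.f y e * bb = 0 := by
        have h := hrel e
        rw [h1', h2', zero_mul, zero_add] at h
        exact h.symm
      have h4 : A.f y e = 0 := by
        rcases mul_eq_zero.mp h3 with hh | hh
        · exact hh
        · exact absurd hh hbb
      exact (A.fker hy0 e).mp h4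
  obtain ⟨s0, hs0u, hs0z, hs0Z⟩ :=
    union_three A.h2 (A.Hne_top A.hu) (A.Hne_top hz0) (A.Zsub_ne_top A.hu hy0)
  have hfus0 : A.f A.u s0 ≠ 0 := fun h => hs0u ((A.fker A.hu s0).mp h)
  have hs00 : s0 ≠ 0 := by rintro rfl; exact hs0u (Submodule.zero_mem _)
  have hl : ∃ l : K, l ≠ 0 ∧ A.f A.u z - l * A.f A.u s0 ≠ 0 := by
    by_cases h1 : A.f A.u z - 1 * A.f A.u s0 ≠ 0
    · exact ⟨1, one_ne_zero, h1⟩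
    push_neg at h1
    rw [one_mul] at h1
    have heq := sub_eq_zero.mp h1
    refine ⟨-1, neg_ne_zero.mpr one_ne_zero, ?_⟩
    rw [neg_one_mul, sub_neg_eq_add, ← heq, ← two_mul]
    exact mul_ne_zero A.h2 hz
  obtain ⟨l, hl0, hlz⟩ := hl
  set s := l • s0 with hs
  have hs0ne : s ≠ 0 := smul_ne_zero hl0 hs00
  have hfus : A.f A.u s ≠ 0 := by
    rw [hs, map_smul, smul_eq_mul]; exact mul_ne_zero hl0 hfus0
  have hfz_s : A.f z s ≠ 0 := by
    rw [hs, map_smul, smul_eq_mul]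
    exact mul_ne_zero hl0 (fun h => hs0z ((A.fker hz0 s0).mp h))
  have hfs_z : A.f s z ≠ 0 := (A.fsymm_ne hz0 hs0ne).mp hfz_s
  have hsZ : s ∉ A.Zsub A.u y := fun h => hs0Z (by
    have h2 := (A.Zsub A.u y).smul_mem l⁻¹ h
    rwa [hs, smul_smul, inv_mul_cancel₀ hl0, one_smul] at h2)
  have hfuzs : A.f A.u (z - s) ≠ 0 := by
    rw [map_sub, hs, map_smul, smul_eq_mul]; exact hlz
  have hzs0 : z - s ≠ 0 := fun h => hfuzs (by rw [h, map_zero])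
  have hRIys : RI3 (A.f A.u) (A.f y) (A.f s) := by
    by_contra hn
    obtain ⟨a', b', hrel'⟩ := A.notRI_rel hy hn
    exact hsZ (A.mem_Z_of_rel hy0 hs0ne hrel')
  have hRIyzs : RI3 (A.f A.u) (A.f y) (A.f (z - s)) := by
    by_contra hn
    obtain ⟨a', b', hrel'⟩ := A.notRI_rel hy hn
    have hmem := A.mem_Z_of_rel hy0 hzs0 hrel'
    exact hsZ (by
      have h := Submodule.sub_mem _ hzZ hmem
      simpa using h)
  have hRIszs : RI3 (A.f A.u) (A.f s) (A.f (z - s)) := by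
    by_contra hn
    obtain ⟨a', b', hrel'⟩ := A.notRI_rel hfus hn
    have hkill : ∀ e, A.f A.u e = 0 → A.f s e = 0 → A.f z e = 0 := by
      intro e h1 h2
      have h3 : A.f (z - s) e = 0 := by
        rw [hrel' e, h1, h2, zero_mul, zero_mul, add_zero]
      exact A.perp_comb hzs0 hs0ne hz0 1 1 (by rw [one_smul, one_smul]; abel) h3 h2
    have hnp : ∀ c : K, s ≠ c • A.u := by
      intro c h
      apply hfus
      rw [h, map_smul, smul_eq_mul, A.fself A.hu, mul_zero]
    obtain ⟨pp, qq, hup, hsp, huq, hsq⟩ := A.dualPair A.hu hs0ne hnp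
    have hzrep := fun e => twoPoint (A.f A.u) (A.f s) (A.f z) hup hsp huq hsq hkill e
    have hβ0 : (A.f s qq)⁻¹ * A.f z qq ≠ 0 := by
      intro h0
      have hker : ∀ e, A.f A.u e = 0 → A.f z e = 0 := fun e he => by
        rw [hzrep e, he, h0, zero_mul, mul_zero, add_zero]
      obtain ⟨c, hc⟩ := A.smul_rep A.hu hz0 hker
      apply hz
      rw [hc, map_smul, smul_eq_mul, A.fself A.hu, mul_zero]
    apply hsZ
    rw [mem_Zsub]
    intro e he0 hem
    obtain ⟨h1, h2⟩ := Submodule.mem_inf.mp ((hInt e he0).mp hem)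
    have h1' : A.f A.u e = 0 := (A.fker A.hu e).mpr h1
    have h2' : A.f z e = 0 := (A.fker hz0 e).mpr h2
    have h3 : A.f s e = 0 := by
      have h := hzrep e
      rw [h1', h2', zero_mul, zero_add] at h
      rcases mul_eq_zero.mp h.symm with hh | hh
      · exact hh
      · exact absurd hh hβ0
    exact A.mem_H_symm hs0ne he0 ((A.fker hs0ne e).mp h3)
  have hAS_ys : A.g y s = -(A.g s y) := A.asURI hy hfus hRIys
  have hAS_yzs : A.g y (z - s) = -(A.g (z - s) y) := A.asURI hy hfuzs hRIyzs
  have hAS_szs : A.g s (z - s) = -(A.g (z - s) s) := A.asURI hfus hfuzs hRIszs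
  have hfs_zs : A.f s (z - s) ≠ 0 := by
    rw [map_sub, A.fself hs0ne, sub_zero]; exact hfs_z
  have hfu_sum : A.f A.u (s + (z - s)) ≠ 0 := by
    rw [show s + (z - s) = z by abel]; exact hz
  have hadd := A.addKL hfus hfuzs hfs_zs hfu_sum hAS_szs
  have hgz : ∀ e, A.g z e = A.g s e + A.g (z - s) e := by
    intro e
    have h := hadd e
    rwa [show s + (z - s) = z by abel] at h
  have hfin : A.g z y = -(A.g y z) := by
    rw [hgz y, show A.g s y = -(A.g y s) by rw [hAS_ys, neg_neg],
      show A.g (z - s) y = -(A.g y (z - s)) by rw [hAS_yzs, neg_neg],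
      ← neg_add, ← map_add, show s + (z - s) = z by abel]
  rw [hfin, neg_neg]



lemma asUany {y z : E} (hy : A.f A.u y ≠ 0) (hz0 : z ≠ 0) : A.g y z = -(A.g z y) := by
  by_cases hz : A.f A.u z = 0
  case neg => exact A.asUU hy hz
  have hzv : A.f A.u (z + A.v) ≠ 0 := by rw [map_add, hz, zero_add]; exact A.hfuv
  have h1 := A.asUU hy hzv
  have h2 := A.asUU hy A.hfuv
  have hgz : A.g z y = A.g (z + A.v) y - A.g A.v y := by
    rw [A.g_of_Hu hz0 hz, A.g_of_U hzv, A.g_of_U A.hfuv, LinearMap.sub_apply]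
  rw [hgz, show A.g (z + A.v) y = -(A.g y (z + A.v)) by rw [h1, neg_neg],
    show A.g A.v y = -(A.g y A.v) by rw [h2, neg_neg], map_add]
  abel

lemma asAll {y z : E} (hy0 : y ≠ 0) (hz0 : z ≠ 0) : A.g y z = -(A.g z y) := by
  by_cases hy : A.f A.u y = 0
  case neg => exact A.asUany hy hz0
  have hyv : A.f A.u (y + A.v) ≠ 0 := by rw [map_add, hy, zero_add]; exact A.hfuv
  have h1 := A.asUany hyv hz0
  have h2 := A.asUany A.hfuv hz0
  have hgy : A.g y z = A.g (y + A.v) z - A.g A.v z := by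
    rw [A.g_of_Hu hy0 hy, A.g_of_U hyv, A.g_of_U A.hfuv, LinearMap.sub_apply]
  rw [hgy, h1, h2, map_add]
  abel

lemma gsmul_all (ρ : K) (x e : E) : A.g (ρ • x) e = ρ * A.g x e := by
  rcases eq_or_ne ρ 0 with rfl | hρ
  · simp
  rcases eq_or_ne x 0 with rfl | hx
  · simp
  rcases eq_or_ne e 0 with rfl | he
  · simp
  have h1 := A.asAll (smul_ne_zero hρ hx) he
  rw [h1, map_smul, smul_eq_mul, A.asAll hx he, mul_neg]

lemma gadd_all (y z x : E) : A.g (y + z) x = A.g y x + A.g z x := by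
  rcases eq_or_ne y 0 with rfl | hy0
  · simp
  rcases eq_or_ne z 0 with rfl | hz0
  · simp
  rcases eq_or_ne (y + z) 0 with hyz | hyz
  · rw [hyz]
    have hzx : A.g z x = -(A.g y x) := by
      have hz : z = (-1 : K) • y := by
        rw [neg_one_smul]; exact eq_neg_of_add_eq_zero_right hyz
      rw [hz, A.gsmul_all, neg_one_mul]
    rw [hzx]
    simp
  rcases eq_or_ne x 0 with rfl | hx
  · simp
  have h1 := A.asAll hyz hx
  rw [h1, map_add, show A.g y x = -(A.g x y) from A.asAll hy0 hx,
    show A.g z x = -(A.g x z) from A.asAll hz0 hx, neg_add]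


/-- the antisymmetry relation -/
def AS (y z : E) : Prop := A.g y z = -(A.g z y)


end Aux
end BvNAux


/-- **Birkhoff–von Neumann, symplectic case.** If `char K ≠ 2`, `dim E ≥ 3`, and
every point is isotropic for the polarity, then `K` is commutative and the
polarity is induced by a nondegenerate alternating bilinear form. -/
theorem birkhoff_vonNeumann_symplectic {K E : Type*} [DivisionRing K] [AddCommGroup E]
    [Module K E] (p : Polarity K E) (h2 : (2 : K) ≠ 0) (hdim : 3 ≤ Module.rank K E)
    (hiso : ∀ x : E, x ∈ p.perp (Submodule.span K {x})) :
    (∀ a b : K, a * b = b * a) ∧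
    ∃ B : E → E → K,
      (∀ x y z : E, B (x + y) z = B x z + B y z) ∧
      (∀ x y z : E, B x (y + z) = B x y + B x z) ∧
      (∀ (ρ : K) (x y : E), B (ρ • x) y = ρ * B x y) ∧
      (∀ (ρ : K) (x y : E), B x (ρ • y) = ρ * B x y) ∧
      (∀ a : E, (∀ x : E, B a x = 0) → a = 0) ∧
      (∀ x : E, B x x = 0) ∧
      (∀ x y : E, B x y = - B y x) ∧
      (∀ M : Submodule K E, (p.perp M : Set E) = {x : E | ∀ m ∈ M, B x m = 0}) := by
  classical
  have hnt : Nontrivial E := by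
    rcases subsingleton_or_nontrivial E with h | h
    · exfalso
      have h0 : Module.rank K E = 0 := rank_zero_iff.mpr h
      rw [h0] at hdim
      norm_num at hdim
    · exact h
  obtain ⟨u, hu⟩ := exists_ne (0 : E)
  have hfex : ∀ x : E, ∃ φ : E →ₗ[K] K,
      x ≠ 0 → ∀ e, φ e = 0 ↔ e ∈ p.perp (Submodule.span K {x}) := by
    intro x
    by_cases hx : x = 0
    · exact ⟨0, fun h => absurd hx h⟩
    · obtain ⟨φ, hφ⟩ := BvNAux.polarity_exists_functional p hx
      exact ⟨φ, fun _ => hφ⟩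
  choose f hf using hfex
  have hHu : p.perp (Submodule.span K {u}) ≠ ⊤ := p.line_perp_ne_top u hu
  obtain ⟨v, hv⟩ := BvNAux.Aux.not_top_exists hHu
  have hfuv : f u v ≠ 0 := fun h => hv ((hf u hu v).mp h)
  let A : BvNAux.Aux K E := ⟨p, h2, hdim, hiso, f, hf, u, hu, v, hfuv⟩
  constructor
  · -- commutativity of K
    intro a b
    obtain ⟨e0, he0⟩ := A.exists_fne hu
    have he00 : e0 ≠ 0 := by rintro rfl; simp at he0
    have hm : A.g A.u e0 ≠ 0 := fun h => he0 ((A.g_ker hu e0).mp h)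
    have key : ∀ r q : K, r * (q * A.g A.u e0) = q * (r * A.g A.u e0) := by
      intro r q
      rcases eq_or_ne r 0 with rfl | hr
      · simp
      rcases eq_or_ne q 0 with rfl | hq
      · simp
      have hq_u : q • A.u ≠ 0 := smul_ne_zero hq hu
      have hr_e : r • e0 ≠ 0 := smul_ne_zero hr he00
      have h3 := A.asAll hq_u hr_e
      rw [map_smul, smul_eq_mul, A.gsmul_all, map_smul, smul_eq_mul, A.gsmul_all,
        show A.g e0 A.u = -(A.g A.u e0) from A.asAll he00 hu] at h3
      rw [mul_neg, mul_neg, neg_neg] at h3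
      exact h3
    have h6 : (a * b) * A.g A.u e0 = (b * a) * A.g A.u e0 := by
      rw [mul_assoc, mul_assoc]
      exact key a b
    exact mul_right_cancel₀ hm h6
  refine ⟨fun x y => A.g y x, fun x y z => map_add _ x y, fun x y z => A.gadd_all y z x,
    fun ρ x y => by show A.g y (ρ • x) = ρ * A.g y x; rw [map_smul, smul_eq_mul], fun ρ x y => A.gsmul_all ρ y x,
    ?_, fun x => A.g_self x, ?_, ?_⟩
  · -- nondegeneracy
    intro a ha
    by_contra ha0
    apply A.Hne_top ha0
    rw [Submodule.eq_top_iff']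
    intro x
    rcases eq_or_ne x 0 with rfl | hx0
    · exact Submodule.zero_mem _
    have h1 : A.f x a = 0 := (A.g_ker hx0 a).mp (ha x)
    exact A.mem_H_symm hx0 ha0 ((A.fker hx0 a).mp h1)
  · -- antisymmetry
    intro x y
    rcases eq_or_ne x 0 with rfl | hx0
    · simp
    rcases eq_or_ne y 0 with rfl | hy0
    · simp
    exact A.asAll hy0 hx0
  · -- perp characterisation
    intro M
    ext x
    simp only [SetLike.mem_coe, Set.mem_setOf_eq]
    constructor
    · intro hx m hm
      rcases eq_or_ne m 0 with rfl | hm0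
      · simp
      have hle : p.perp M ≤ p.perp (Submodule.span K {m}) :=
        p.perp_antitone ((Submodule.span_singleton_le_iff_mem m M).mpr hm)
      have h1 : x ∈ A.H m := hle hx
      exact (A.g_ker hm0 x).mpr ((A.fker hm0 x).mpr h1)
    · intro hx
      rcases eq_or_ne x 0 with rfl | hx0
      · exact Submodule.zero_mem _
      have hle : M ≤ A.H x := by
        intro m hm
        rcases eq_or_ne m 0 with rfl | hm0
        · exact Submodule.zero_mem _
        have h2 : x ∈ A.H m := (A.fker hm0 x).mp ((A.g_ker hm0 x).mp (hx m hm))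
        exact A.mem_H_symm hm0 hx0 h2
      have h3 := p.perp_antitone hle
      have h4 : Submodule.span K {x} ≤ p.perp M := by
        rw [← p.line_biperp x hx0]
        exact h3
      exact h4 (Submodule.mem_span_singleton_self x)
end

section
/- If [x, x] = 0 for every x ∈ E, then g is the identity map of K, K is commutative, and [x, y] = −[y, x] for all x, y ∈ E. -/
/-!
Expanding `[x + y, x + y] = 0` makes the form skew-symmetric. Skew-symmetry moves a scalar from
the right argument to the left one, where it comes out on the left: `[x, y] g(ρ) = ρ [x, y]`.
By nondegeneracy and rescaling, `[x, y]` takes every value `c ∈ K`, so `c g(ρ) = ρ c` for all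
`c, ρ`; `c = 1` gives `g = id`, and then the same identity is commutativity.
-/

section AlternatingForm

variable {K E M : Type*}

theorem apply_eq_neg_apply_swap_of_alternating [Add E] [AddCommGroup M] (B : E → E → M)
    (haddl : ∀ x y z : E, B (x + y) z = B x z + B y z)
    (haddr : ∀ x y z : E, B x (y + z) = B x y + B x z)
    (halt : ∀ x : E, B x x = 0) (x y : E) :
    B x y = -B y x := by
  have h := halt (x + y)
  rw [haddl, haddr, haddr, halt, halt, zero_add, add_zero] at h
  exact eq_neg_of_add_eq_zero_left h

theorem apply_mul_eq_mul_apply_of_skew [Ring K] [SMul K E] (g : K → K) (B : E → E → K)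
    (hsl : ∀ (ρ : K) (x y : E), B (ρ • x) y = ρ * B x y)
    (hsr : ∀ (ρ : K) (x y : E), B x (ρ • y) = B x y * g ρ)
    (hskew : ∀ x y : E, B x y = -B y x) (ρ : K) (x y : E) :
    B x y * g ρ = ρ * B x y := by
  rw [← hsr, hskew, hsl, hskew y x, mul_neg, neg_neg]

theorem exists_apply_eq_one_of_nondegenerate [DivisionRing K] [AddCommGroup E] [Module K E]
    [Nontrivial E] (B : E → E → K)
    (hsl : ∀ (ρ : K) (x y : E), B (ρ • x) y = ρ * B x y)
    (hnd : ∀ a : E, (∀ x : E, B a x = 0) → a = 0) :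
    ∃ u x : E, B u x = 1 := by
  obtain ⟨a, ha⟩ := exists_ne (0 : E)
  obtain ⟨x, hx⟩ : ∃ x, B a x ≠ 0 := by
    by_contra! h
    exact ha (hnd a h)
  exact ⟨(B a x)⁻¹ • a, x, by rw [hsl, inv_mul_cancel₀ hx]⟩

end AlternatingForm

theorem alternating_sesquilinear_general {K E : Type*} [DivisionRing K] [AddCommGroup E] [Module K E]
    (hdim : 3 ≤ Module.rank K E)
    (g : K → K)
    (B : E → E → K)
    (haddl : ∀ x y z : E, B (x + y) z = B x z + B y z)
    (haddr : ∀ x y z : E, B x (y + z) = B x y + B x z)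
    (hsl : ∀ (ρ : K) (x y : E), B (ρ • x) y = ρ * B x y)
    (hsr : ∀ (ρ : K) (x y : E), B x (ρ • y) = B x y * g ρ)
    (hnd : ∀ a : E, (∀ x : E, B a x = 0) → a = 0)
    (halt : ∀ x : E, B x x = 0) :
    (∀ ρ : K, g ρ = ρ) ∧ (∀ a b : K, a * b = b * a) ∧ (∀ x y : E, B x y = - B y x) := by
  have hskew := apply_eq_neg_apply_swap_of_alternating B haddl haddr halt
  have : Nontrivial E := (rank_pos_iff_nontrivial (R := K)).mp (lt_of_lt_of_le (by norm_num) hdim)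
  obtain ⟨u, x, hux⟩ := exists_apply_eq_one_of_nondegenerate B hsl hnd
  have htwist (c ρ : K) : c * g ρ = ρ * c := by
    simpa only [hsl, hux, mul_one] using
      apply_mul_eq_mul_apply_of_skew g B hsl hsr hskew ρ (c • u) x
  have hgid (ρ : K) : g ρ = ρ := by simpa only [one_mul, mul_one] using htwist 1 ρ
  exact ⟨hgid, fun a b => by simpa only [hgid] using htwist a b, hskew⟩

/-- If a reflexive nondegenerate `g`-sesquilinear form on a space of dimension
at least 3 is alternating (`[x,x] = 0` for all `x`), then `g` is the identity,
`K` is commutative, and the form is skew-symmetric. -/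
theorem alternating_sesquilinear {K E : Type*} [DivisionRing K] [AddCommGroup E] [Module K E]
    (hdim : 3 ≤ Module.rank K E)
    (g : K → K) (hgbij : Function.Bijective g)
    (hgadd : ∀ a b : K, g (a + b) = g a + g b)
    (hgmul : ∀ a b : K, g (a * b) = g b * g a)
    (B : E → E → K)
    (haddl : ∀ x y z : E, B (x + y) z = B x z + B y z)
    (haddr : ∀ x y z : E, B x (y + z) = B x y + B x z)
    (hsl : ∀ (ρ : K) (x y : E), B (ρ • x) y = ρ * B x y)
    (hsr : ∀ (ρ : K) (x y : E), B x (ρ • y) = B x y * g ρ)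
    (hnd : ∀ a : E, (∀ x : E, B a x = 0) → a = 0)
    (hrefl : ∀ x y : E, B x y = 0 ↔ B y x = 0)
    (halt : ∀ x : E, B x x = 0) :
    (∀ ρ : K, g ρ = ρ) ∧ (∀ a b : K, a * b = b * a) ∧ (∀ x y : E, B x y = - B y x) :=
  alternating_sesquilinear_general hdim g B haddl haddr hsl hsr hnd halt
end

section
/- Suppose additionally that K has characteristic different from 2 and that some e ∈ E satisfies ε := [e, e] ≠ 0. Define ρ* := εg(ρ)ε⁻¹ for ρ ∈ K and ⟨x, y⟩ := [x, y]ε⁻¹ for x, y ∈ E. Then ρ ↦ ρ* is an involution on K (it is additive and satisfies (ρσ)* = σ*ρ* and ρ** = ρ), and ⟨·,·⟩ is a Hermitian form with respect to this involution: it is additive in each variable and satisfies ⟨ρx, y⟩ = ρ⟨x, y⟩, ⟨x, ρy⟩ = ⟨x, y⟩ρ*, and ⟨x, y⟩* = ⟨y, x⟩ for all ρ ∈ K and x, y ∈ E, and it is nondegenerate. -/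
/-- If a reflexive nondegenerate `g`-sesquilinear form has `ε := [e,e] ≠ 0` and
`char K ≠ 2`, then `ρ* := ε g(ρ) ε⁻¹` is an involution on `K` and
`⟨x,y⟩ := [x,y] ε⁻¹` is a nondegenerate Hermitian form with respect to it. -/
theorem sesquilinear_to_hermitian {K E : Type*} [DivisionRing K] [AddCommGroup E] [Module K E]
    (hdim : 3 ≤ Module.rank K E) (h2 : (2 : K) ≠ 0)
    (g : K → K) (hgbij : Function.Bijective g)
    (hgadd : ∀ a b : K, g (a + b) = g a + g b)
    (hgmul : ∀ a b : K, g (a * b) = g b * g a)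
    (B : E → E → K)
    (haddl : ∀ x y z : E, B (x + y) z = B x z + B y z)
    (haddr : ∀ x y z : E, B x (y + z) = B x y + B x z)
    (hsl : ∀ (ρ : K) (x y : E), B (ρ • x) y = ρ * B x y)
    (hsr : ∀ (ρ : K) (x y : E), B x (ρ • y) = B x y * g ρ)
    (hnd : ∀ a : E, (∀ x : E, B a x = 0) → a = 0)
    (hrefl : ∀ x y : E, B x y = 0 ↔ B y x = 0)
    (e : E) (ε : K) (hε : ε = B e e) (hεne : ε ≠ 0) :
    (∀ a b : K, ε * g (a + b) * ε⁻¹ = ε * g a * ε⁻¹ + ε * g b * ε⁻¹) ∧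
    (∀ a b : K, ε * g (a * b) * ε⁻¹ = (ε * g b * ε⁻¹) * (ε * g a * ε⁻¹)) ∧
    (∀ a : K, ε * g (ε * g a * ε⁻¹) * ε⁻¹ = a) ∧
    (∀ x y z : E, B (x + y) z * ε⁻¹ = B x z * ε⁻¹ + B y z * ε⁻¹) ∧
    (∀ x y z : E, B x (y + z) * ε⁻¹ = B x y * ε⁻¹ + B x z * ε⁻¹) ∧
    (∀ (ρ : K) (x y : E), B (ρ • x) y * ε⁻¹ = ρ * (B x y * ε⁻¹)) ∧
    (∀ (ρ : K) (x y : E), B x (ρ • y) * ε⁻¹ = (B x y * ε⁻¹) * (ε * g ρ * ε⁻¹)) ∧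
    (∀ x y : E, ε * g (B x y * ε⁻¹) * ε⁻¹ = B y x * ε⁻¹) ∧
    (∀ a : E, (∀ x : E, B a x * ε⁻¹ = 0) → a = 0) := by
  -- basic facts about g
  have hg0 : g 0 = 0 := by
    have h := hgadd 0 0
    rw [add_zero] at h
    exact left_eq_add.mp h
  have hg1 : g 1 = 1 := by
    obtain ⟨a, ha⟩ := hgbij.2 1
    have h := hgmul a 1
    rw [mul_one, ha, mul_one] at h
    exact h.symm
  have hgne : ∀ a : K, a ≠ 0 → g a ≠ 0 := fun a ha h => ha (hgbij.1 (h.trans hg0.symm))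
  have hginv : ∀ a : K, a ≠ 0 → g a⁻¹ = (g a)⁻¹ := by
    intro a ha
    have h : g a⁻¹ * g a = 1 := by rw [← hgmul, mul_inv_cancel₀ ha, hg1]
    exact eq_inv_of_mul_eq_one_left h
  -- basic facts about B
  have hB0l : ∀ y : E, B 0 y = 0 := by
    intro y
    have h := haddl 0 0 y
    rw [add_zero] at h
    exact left_eq_add.mp h
  have hB0r : ∀ y : E, B y 0 = 0 := by
    intro y
    have h := haddr y 0 0
    rw [add_zero] at h
    exact left_eq_add.mp h
  have hBnegl : ∀ x y : E, B (-x) y = -B x y := by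
    intro x y
    have h := haddl x (-x) y
    rw [add_neg_cancel, hB0l] at h
    exact (eq_neg_of_add_eq_zero_right h.symm)
  have hBnegr : ∀ x y : E, B y (-x) = -B y x := by
    intro x y
    have h := haddr y x (-x)
    rw [add_neg_cancel, hB0r] at h
    exact (eq_neg_of_add_eq_zero_right h.symm)
  have hBsubl : ∀ x z y : E, B (x - z) y = B x y - B z y := by
    intro x z y
    rw [sub_eq_add_neg, haddl, hBnegl, sub_eq_add_neg]
  have hBsubr : ∀ y x z : E, B y (x - z) = B y x - B y z := by
    intro y x z
    rw [sub_eq_add_neg, haddr, hBnegr, sub_eq_add_neg]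
  have hnd' : ∀ a : E, (∀ x : E, B x a = 0) → a = 0 :=
    fun a h => hnd a fun x => (hrefl x a).mp (h x)
  -- the inverse of g
  let gi : K → K := fun b => (hgbij.2 b).choose
  have hggi : ∀ b : K, g (gi b) = b := fun b => (hgbij.2 b).choose_spec
  -- step A: proportionality for each fixed nonzero vector
  have stepA : ∀ y : E, y ≠ 0 → ∃ μ : K, ∀ x, B y x = μ * g (B x y) := by
    intro y hy
    have hx1 : ∃ x1, B x1 y ≠ 0 := by
      by_contra h
      push_neg at h
      exact hy (hnd' y h)
    obtain ⟨x1, hx1⟩ := hx1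
    set x0 := (B x1 y)⁻¹ • x1 with hx0
    have hx0y : B x0 y = 1 := by rw [hx0, hsl, inv_mul_cancel₀ hx1]
    refine ⟨B y x0, fun x => ?_⟩
    have h0 : B (x - (B x y) • x0) y = 0 := by
      rw [hBsubl, hsl, hx0y, mul_one, sub_self]
    have h1 : B y (x - (B x y) • x0) = 0 := (hrefl _ _).mp h0
    rw [hBsubr, hsr] at h1
    exact sub_eq_zero.mp h1
  -- step B: the proportionality constant is the same for independent vectors
  have stepB : ∀ (y z : E) (μy μz : K), y ≠ 0 → (∀ ρ : K, z ≠ ρ • y) →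
      (∀ x, B y x = μy * g (B x y)) → (∀ x, B z x = μz * g (B x z)) → μy = μz := by
    intro y z μy μz hy hz hμy hμz
    have hyz : y + z ≠ 0 := by
      intro h
      exact hz (-1) ((eq_neg_of_add_eq_zero_right h).trans (neg_one_smul K y).symm)
    obtain ⟨μw, hμw⟩ := stepA (y + z) hyz
    have key : ∀ x, (μw - μy) * g (B x y) + (μw - μz) * g (B x z) = 0 := by
      intro x
      have h1 := hμw x
      rw [haddl, haddr, hgadd, hμy x, hμz x, mul_add] at h1
      have h2 : (μw - μy) * g (B x y) + (μw - μz) * g (B x z)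
          = (μw * g (B x y) + μw * g (B x z)) - (μy * g (B x y) + μz * g (B x z)) := by
        noncomm_ring
      rw [h2, ← h1, sub_self]
    have hall : ∀ x, B x (gi (gi (μw - μy)) • y + gi (gi (μw - μz)) • z) = 0 := by
      intro x
      rw [haddr, hsr, hsr, hggi, hggi]
      apply hgbij.1
      rw [hgadd, hgmul, hgmul, hggi, hggi, hg0]
      exact key x
    have hzero := hnd' _ hall
    have hb : gi (gi (μw - μz)) = 0 := by
      by_contra hb
      have h4 := eq_neg_of_add_eq_zero_right hzero
      have h3 : z = (-((gi (gi (μw - μz)))⁻¹ * gi (gi (μw - μy)))) • y := by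
        calc z = ((gi (gi (μw - μz)))⁻¹ * gi (gi (μw - μz))) • z := by
              rw [inv_mul_cancel₀ hb, one_smul]
          _ = (gi (gi (μw - μz)))⁻¹ • (gi (gi (μw - μz)) • z) := by rw [mul_smul]
          _ = (gi (gi (μw - μz)))⁻¹ • (-(gi (gi (μw - μy)) • y)) := by rw [h4]
          _ = (-((gi (gi (μw - μz)))⁻¹ * gi (gi (μw - μy)))) • y := by
              rw [smul_neg, ← mul_smul, neg_smul]
      exact hz _ h3
    have hbz : μw - μz = 0 := by
      have h5 : gi (μw - μz) = 0 := by rw [← hggi (gi (μw - μz)), hb, hg0]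
      rw [← hggi (μw - μz), h5, hg0]
    rw [hb, zero_smul, add_zero] at hzero
    have ha : gi (gi (μw - μy)) = 0 := by
      rcases smul_eq_zero.mp hzero with h | h
      · exact h
      · exact absurd h hy
    have hay : μw - μy = 0 := by
      have h5 : gi (μw - μy) = 0 := by rw [← hggi (gi (μw - μy)), ha, hg0]
      rw [← hggi (μw - μy), h5, hg0]
    rw [← sub_eq_zero.mp hbz, ← sub_eq_zero.mp hay]
  -- existence of an independent vector
  have windep : ∀ y : E, y ≠ 0 → ∃ w : E, (∀ ρ : K, w ≠ ρ • y) ∧ (∀ ρ : K, y ≠ ρ • w) := by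
    intro y hy
    have hw : ∃ w : E, ∀ ρ : K, w ≠ ρ • y := by
      by_contra h
      push_neg at h
      have h1 : Module.rank K E ≤ 1 := by
        rw [rank_le_one_iff]
        exact ⟨y, fun v => by obtain ⟨ρ, hρ⟩ := h v; exact ⟨ρ, hρ.symm⟩⟩
      have h2 := hdim.trans h1
      norm_num at h2
    obtain ⟨w, hw⟩ := hw
    refine ⟨w, hw, fun ρ hρ => ?_⟩
    have hρ0 : ρ ≠ 0 := by
      intro h
      rw [h, zero_smul] at hρ
      exact hy hρ
    exact hw ρ⁻¹ (by rw [hρ, ← mul_smul, inv_mul_cancel₀ hρ0, one_smul])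
  -- the main lemma
  have he0 : e ≠ 0 := by
    intro h
    rw [h] at hε
    rw [hB0l] at hε
    exact hεne hε
  obtain ⟨μe, hμe⟩ := stepA e he0
  have hgε : g ε ≠ 0 := hgne ε hεne
  have hμeval : μe = ε * (g ε)⁻¹ := by
    have h1 := hμe e
    rw [← hε] at h1
    rw [eq_mul_inv_iff_mul_eq₀ hgε]
    exact h1.symm
  have H : ∀ x y : E, B y x = ε * (g ε)⁻¹ * g (B x y) := by
    intro x y
    rcases eq_or_ne y 0 with hy | hy
    · rw [hy, hB0l, hB0r, hg0, mul_zero]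
    obtain ⟨μy, hμy⟩ := stepA y hy
    suffices hμ : μy = ε * (g ε)⁻¹ by rw [hμy x, hμ]
    rw [← hμeval]
    by_cases hcase : ∀ ρ : K, y ≠ ρ • e
    · exact (stepB e y μe μy he0 hcase hμe hμy).symm
    · push_neg at hcase
      obtain ⟨ρ₀, hρ₀⟩ := hcase
      obtain ⟨w, hwe, hew⟩ := windep e he0
      have hw0 : w ≠ 0 := fun h => hwe 0 (by rw [h, zero_smul])
      obtain ⟨μw, hμw⟩ := stepA w hw0
      have h1 : μe = μw := stepB e w μe μw he0 hwe hμe hμw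
      have hρ00 : ρ₀ ≠ 0 := by
        intro h
        rw [h, zero_smul] at hρ₀
        exact hy hρ₀
      have hyw : ∀ ρ : K, y ≠ ρ • w := by
        intro ρ hρ
        apply hew (ρ₀⁻¹ * ρ)
        rw [mul_smul, ← hρ, hρ₀, ← mul_smul, inv_mul_cancel₀ hρ00, one_smul]
      have h2 : μw = μy := stepB w y μw μy hw0 hyw hμw hμy
      exact (h1.trans h2).symm
  -- the Hermitian property in the stated form
  have h8 : ∀ x y : E, ε * g (B x y * ε⁻¹) * ε⁻¹ = B y x * ε⁻¹ := by
    intro x y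
    rw [hgmul, hginv ε hεne, H x y]
    simp [mul_assoc]
  refine ⟨?_, ?_, ?_, ?_, ?_, ?_, ?_, h8, ?_⟩
  · intro a b
    rw [hgadd, mul_add, add_mul]
  · intro a b
    rw [hgmul]
    simp [mul_assoc, inv_mul_cancel_left₀ hεne]
  · intro a
    rw [show ε * g a * ε⁻¹ = B e (a • e) * ε⁻¹ by rw [hsr, ← hε], h8 e (a • e),
      hsl, ← hε, mul_assoc, mul_inv_cancel₀ hεne, mul_one]
  · intro x y z
    rw [haddl, add_mul]
  · intro x y z
    rw [haddr, add_mul]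
  · intro ρ x y
    rw [hsl, mul_assoc]
  · intro ρ x y
    rw [hsr]
    simp [mul_assoc, inv_mul_cancel_left₀ hεne]
  · intro a h
    apply hnd
    intro x
    rcases mul_eq_zero.mp (h x) with h1 | h1
    · exact h1
    · exact absurd h1 (inv_ne_zero hεne)
end

section
/- (Uniqueness up to scaling of the form inducing a given orthogonality.) Suppose E has dimension at least 3 over K and K has characteristic different from 2. Let ρ ↦ ρ^# be another involution on K (additive, (ρσ)^# = σ^#ρ^#, ρ^## = ρ) and let [·,·] : E × E → K be a #-Hermitian nondegenerate form (additive in each variable, [ρx, y] = ρ[x, y], [x, ρy] = [x, y]ρ^#, [x, y]^# = [y, x], and [a, x] = 0 for all x implies a = 0) such that for all x, y ∈ E, [x, y] = 0 if and only if ⟨x, y⟩ = 0. Then there exists a nonzero λ ∈ K with λ* = λ such that ρ^# = λ⁻¹ρ*λ for all ρ ∈ K and [x, y] = ⟨x, y⟩λ for all x, y ∈ E. -/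
/-- **Uniqueness up to scaling** of the Hermitian form inducing a given
orthogonality: if `dim E ≥ 3`, `char K ≠ 2`, and a `#`-Hermitian nondegenerate
form `[·,·]` vanishes exactly where `⟨·,·⟩` does, then there is a nonzero
symmetric `λ` with `ρ^# = λ⁻¹ ρ* λ` and `[x,y] = ⟨x,y⟩ λ`. -/
theorem hermitian_unique_up_to_scaling {K E : Type*} [DivisionRing K] [AddCommGroup E]
    [Module K E] (h : HermitianSpace K E)
    (hdim : 3 ≤ Module.rank K E) (h2 : (2 : K) ≠ 0)
    (sharp : K → K)
    (hsadd : ∀ a b : K, sharp (a + b) = sharp a + sharp b)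
    (hsmul : ∀ a b : K, sharp (a * b) = sharp b * sharp a)
    (hss : ∀ a : K, sharp (sharp a) = a)
    (B : E → E → K)
    (haddl : ∀ x y z : E, B (x + y) z = B x z + B y z)
    (haddr : ∀ x y z : E, B x (y + z) = B x y + B x z)
    (hsl : ∀ (ρ : K) (x y : E), B (ρ • x) y = ρ * B x y)
    (hsr : ∀ (ρ : K) (x y : E), B x (ρ • y) = B x y * sharp ρ)
    (hherm : ∀ x y : E, sharp (B x y) = B y x)
    (hnd : ∀ a : E, (∀ x : E, B a x = 0) → a = 0)
    (hsame : ∀ x y : E, B x y = 0 ↔ h.form x y = 0) :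
    ∃ lam : K, lam ≠ 0 ∧ h.star lam = lam ∧
      (∀ ρ : K, sharp ρ = lam⁻¹ * h.star ρ * lam) ∧
      (∀ x y : E, B x y = h.form x y * lam) := by
  classical
  -- basic facts about the involutions
  have st0 : h.star 0 = 0 := by
    have h0 := h.star_add 0 0
    rw [add_zero] at h0
    exact (left_eq_add.mp h0)
  have sharp0 : sharp 0 = 0 := by
    have h0 := hsadd 0 0
    rw [add_zero] at h0
    exact (left_eq_add.mp h0)
  have st1 : h.star 1 = 1 := by
    have h1 := h.star_mul 1 1
    rw [one_mul] at h1
    have hne : h.star 1 ≠ 0 := by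
      intro hz
      have h2' := h.star_star 1
      rw [hz, st0] at h2'
      exact one_ne_zero h2'.symm
    have h3 : h.star 1 * 1 = h.star 1 * h.star 1 := by rw [mul_one]; exact h1
    exact (mul_left_cancel₀ hne h3).symm
  have sharp1 : sharp 1 = 1 := by
    have h1 := hsmul 1 1
    rw [one_mul] at h1
    have hne : sharp 1 ≠ 0 := by
      intro hz
      have h2' := hss 1
      rw [hz, sharp0] at h2'
      exact one_ne_zero h2'.symm
    have h3 : sharp 1 * 1 = sharp 1 * sharp 1 := by rw [mul_one]; exact h1
    exact (mul_left_cancel₀ hne h3).symm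
  -- zero lemmas for the forms
  have Fz_l : ∀ y : E, h.form 0 y = 0 := by
    intro y
    have h0 := h.form_add_left 0 0 y
    rw [add_zero] at h0
    exact (left_eq_add.mp h0)
  have Bz_l : ∀ y : E, B 0 y = 0 := by
    intro y
    have h0 := haddl 0 0 y
    rw [add_zero] at h0
    exact (left_eq_add.mp h0)
  -- subtraction lemmas
  have Fsub_r : ∀ x y z : E, h.form x (y - z) = h.form x y - h.form x z := by
    intro x y z
    have h1 := h.form_add_right x (y - z) z
    rw [sub_add_cancel] at h1
    exact eq_sub_of_add_eq h1.symm
  have Bsub_r : ∀ x y z : E, B x (y - z) = B x y - B x z := by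
    intro x y z
    have h1 := haddr x (y - z) z
    rw [sub_add_cancel] at h1
    exact eq_sub_of_add_eq h1.symm
  have Fsub_l : ∀ x y z : E, h.form (x - y) z = h.form x z - h.form y z := by
    intro x y z
    have h1 := h.form_add_left (x - y) y z
    rw [sub_add_cancel] at h1
    exact eq_sub_of_add_eq h1.symm
  -- the ring automorphism ψ t = sharp (star t); its nonvanishing
  have psine : ∀ a : K, a ≠ 0 → sharp (h.star a) ≠ 0 := by
    intro a ha hz
    apply ha
    have h1 : h.star a = 0 := by
      have := hss (h.star a)
      rw [hz, sharp0] at this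
      exact this.symm
    have := h.star_star a
    rw [h1, st0] at this
    exact this.symm
  -- existence of a "dual" vector with form = 1
  have hone : ∀ x : E, x ≠ 0 → ∃ y, h.form x y = 1 := by
    intro x hx
    obtain ⟨y, hy⟩ : ∃ y, h.form x y ≠ 0 := by
      by_contra hcon
      push_neg at hcon
      exact hx (h.nondeg x hcon)
    refine ⟨(h.star (h.form x y)⁻¹) • y, ?_⟩
    rw [h.form_smul_right, h.star_star]
    exact mul_inv_cancel₀ hy
  -- the core structure lemma: B x y = m * sharp (star (form x y))
  have hmain : ∀ x : E, x ≠ 0 →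
      ∃ m : K, m ≠ 0 ∧ ∀ y, B x y = m * sharp (h.star (h.form x y)) := by
    intro x hx
    obtain ⟨y₁, hy₁⟩ := hone x hx
    refine ⟨B x y₁, ?_, ?_⟩
    · intro hz
      have := (hsame x y₁).mp hz
      rw [hy₁] at this
      exact one_ne_zero this
    · intro y
      have hF0 : h.form x (y - (h.star (h.form x y)) • y₁) = 0 := by
        rw [Fsub_r, h.form_smul_right, hy₁, one_mul, h.star_star, sub_self]
      have hB0 : B x (y - (h.star (h.form x y)) • y₁) = 0 := (hsame _ _).mpr hF0
      rw [Bsub_r, sub_eq_zero] at hB0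
      rw [hB0, hsr]
  -- given two independent vectors, find y orthogonal to one but not the other
  have hpair : ∀ x x' : E, x' ≠ 0 → (∀ c : K, x ≠ c • x') →
      ∃ y, h.form x y ≠ 0 ∧ h.form x' y = 0 := by
    intro x x' hx' hind
    by_contra hcon
    push_neg at hcon
    have hkey : ∀ y, h.form x' y = 0 → h.form x y = 0 := by
      intro y hy
      by_contra hne
      exact (hcon y hne) hy
    obtain ⟨z, hz⟩ := hone x' hx'
    have hrel : ∀ y, h.form x y = h.form x z * h.form x' y := by
      intro y
      have h0 : h.form x' (y - (h.star (h.form x' y)) • z) = 0 := by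
        rw [Fsub_r, h.form_smul_right, hz, one_mul, h.star_star, sub_self]
      have h1 := hkey _ h0
      rw [Fsub_r, sub_eq_zero] at h1
      rw [h1, h.form_smul_right, h.star_star]
    have hall : ∀ y, h.form (x - (h.form x z) • x') y = 0 := by
      intro y
      rw [Fsub_l, h.form_smul_left, ← hrel, sub_self]
    have h2' := h.nondeg _ hall
    rw [sub_eq_zero] at h2'
    exact hind (h.form x z) h2'
  -- flipping the independence condition
  have hflip : ∀ x x' : E, x' ≠ 0 → (∀ c : K, x ≠ c • x') →
      (∀ c : K, x' ≠ c • x) := by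
    intro x x' hx' hind c hc
    by_cases hc0 : c = 0
    · rw [hc0, zero_smul] at hc
      exact hx' hc
    · apply hind c⁻¹
      rw [hc, smul_smul, inv_mul_cancel₀ hc0, one_smul]
  -- the multiplier is the same for independent vectors
  have hconst : ∀ x x' : E, x ≠ 0 → x' ≠ 0 → (∀ c : K, x ≠ c • x') →
      ∀ m m' : K,
      (∀ y, B x y = m * sharp (h.star (h.form x y))) →
      (∀ y, B x' y = m' * sharp (h.star (h.form x' y))) → m = m' := by
    intro x x' hx hx' hind m m' hmspec hm'spec
    have hind' := hflip x x' hx' hind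
    have hsum_ne : x + x' ≠ 0 := by
      intro hzz
      apply hind (-1)
      rw [neg_smul, one_smul]
      exact eq_neg_of_add_eq_zero_left hzz
    obtain ⟨m'', _, hm''spec⟩ := hmain (x + x') hsum_ne
    have hsplit : ∀ y, m'' * sharp (h.star (h.form x y + h.form x' y)) =
        m * sharp (h.star (h.form x y)) + m' * sharp (h.star (h.form x' y)) := by
      intro y
      have h1 := haddl x x' y
      rw [hm''spec y, hmspec y, hm'spec y, h.form_add_left] at h1
      exact h1
    obtain ⟨y, hy1, hy2⟩ := hpair x x' hx' hind
    have e1 := hsplit y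
    rw [hy2, add_zero, st0, sharp0, mul_zero, add_zero] at e1
    have hm''m : m'' = m := mul_right_cancel₀ (psine _ hy1) e1
    obtain ⟨y', hy1', hy2'⟩ := hpair x' x hx hind'
    have e2 := hsplit y'
    rw [hy2', zero_add, st0, sharp0, mul_zero, zero_add] at e2
    have hm''m' : m'' = m' := mul_right_cancel₀ (psine _ hy1') e2
    rw [← hm''m, hm''m']
  -- choose a nonzero vector e and a vector z outside its span
  have hnt : Nontrivial E := by
    rcases subsingleton_or_nontrivial E with hs | hnt
    · exfalso
      have hr0 : Module.rank K E = 0 := rank_subsingleton' K E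
      rw [hr0] at hdim
      exact absurd hdim (by norm_num)
    · exact hnt
  obtain ⟨e, he⟩ := exists_ne (0 : E)
  have hzout : ∃ z : E, ∀ c : K, z ≠ c • e := by
    by_contra hcon
    push_neg at hcon
    have h2' : Submodule.span K ({e} : Set E) = ⊤ := by
      apply le_antisymm le_top
      intro zz _
      obtain ⟨c, hc⟩ := hcon zz
      rw [hc]
      exact Submodule.smul_mem _ _ (Submodule.mem_span_singleton_self e)
    have h3' := rank_span_le (R := K) ({e} : Set E)
    rw [h2', Cardinal.mk_singleton] at h3'
    have h4' : Module.rank K E ≤ 1 := by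
      rw [← rank_top K E]
      exact h3'
    have h5' : (3 : Cardinal) ≤ 1 := hdim.trans h4'
    norm_num at h5'
  obtain ⟨z, hz⟩ := hzout
  have hzne : z ≠ 0 := by
    intro h0
    exact hz 0 (by rw [h0, zero_smul])
  -- define lam and show it works for all nonzero x
  obtain ⟨lam, hlam0, hlamspec⟩ := hmain e he
  have hkey : ∀ x : E, x ≠ 0 → ∀ y, B x y = lam * sharp (h.star (h.form x y)) := by
    intro x hx
    obtain ⟨m, hm0, hmspec⟩ := hmain x hx
    have hm : m = lam := by
      by_cases hce : ∀ c : K, x ≠ c • e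
      · exact hconst x e hx he hce m lam hmspec hlamspec
      · push_neg at hce
        obtain ⟨c, hc⟩ := hce
        have hxz : ∀ c' : K, x ≠ c' • z := by
          intro c' hc'
          by_cases h0 : c' = 0
          · rw [h0, zero_smul] at hc'
            exact hx hc'
          · have hzx : z = c'⁻¹ • x := by
              rw [hc', smul_smul, inv_mul_cancel₀ h0, one_smul]
            exact hz (c'⁻¹ * c) (by rw [hzx, hc, smul_smul])
        have hez : ∀ c' : K, e ≠ c' • z := by
          intro c' hc'
          by_cases h0 : c' = 0
          · rw [h0, zero_smul] at hc'
            exact he hc'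
          · have hze : z = c'⁻¹ • e := by
              rw [hc', smul_smul, inv_mul_cancel₀ h0, one_smul]
            exact hz c'⁻¹ hze
        obtain ⟨mz, hmz0, hmzspec⟩ := hmain z hzne
        have h1 : m = mz := hconst x z hx hzne hxz m mz hmspec hmzspec
        have h2' : lam = mz := hconst e z he hzne hez lam mz hlamspec hmzspec
        rw [h1, h2']
    intro y
    rw [← hm]
    exact hmspec y
  -- lam conjugates ψ into the identity: lam * ψ ρ = ρ * lam
  have hinner : ∀ ρ : K, lam * sharp (h.star ρ) = ρ * lam := by
    intro ρ
    by_cases h0 : ρ = 0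
    · rw [h0, st0, sharp0, mul_zero, zero_mul]
    · obtain ⟨y₁, hy₁⟩ := hone e he
      have h1 : B (ρ • e) y₁ = ρ * B e y₁ := hsl ρ e y₁
      rw [hkey (ρ • e) (smul_ne_zero h0 he) y₁, hkey e he y₁,
        h.form_smul_left, hy₁, mul_one, st1, sharp1, mul_one] at h1
      exact h1
  -- the formula for sharp
  have hsharp : ∀ ρ : K, sharp ρ = lam⁻¹ * h.star ρ * lam := by
    intro ρ
    have h1 := hinner (h.star ρ)
    rw [h.star_star] at h1
    rw [mul_assoc, ← h1, ← mul_assoc, inv_mul_cancel₀ hlam0, one_mul]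
  -- the formula for B
  have hBF : ∀ x y : E, B x y = h.form x y * lam := by
    intro x y
    by_cases hx : x = 0
    · rw [hx, Bz_l, Fz_l, zero_mul]
    · rw [hkey x hx y, hinner]
  -- lam is symmetric
  obtain ⟨y₁, hy₁⟩ := hone e he
  have H := hherm y₁ e
  rw [hBF y₁ e, hBF e y₁, hy₁, one_mul, hsmul, hsharp lam, hsharp (h.form y₁ e)] at H
  have hst : h.star (h.form y₁ e) = 1 := by rw [h.hermitian, hy₁]
  rw [hst, mul_one, inv_mul_cancel₀ hlam0, mul_one] at H
  have hstlam : h.star lam = lam := by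
    have h2' : h.star lam * lam = lam * lam := by
      have h3' := congrArg (fun t => lam * t) H
      simpa [← mul_assoc, mul_inv_cancel₀ hlam0] using h3'
    exact mul_right_cancel₀ hlam0 h2'
  exact ⟨lam, hlam0, hstlam, hsharp, hBF⟩
end

section
/- (Uniqueness part of the Fundamental Theorem of Projective Geometry.) The maps A and B induce the same map on one-dimensional subspaces, i.e. L·B(x) = L·A(x) as L-subspaces of F for every nonzero x ∈ E, if and only if there exists a nonzero λ ∈ L such that B(x) = λA(x) for all x ∈ E; and in that case h(ρ) = λg(ρ)λ⁻¹ for all ρ ∈ K. -/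
/-!
If every `B x` is a multiple `a_x • A x`, then for independent `x, z` the two expressions
`B (x + z) = a_{x+z} • (A x + A z)` and `B x + B z = a_x • A x + a_z • A z` force `a_x = a_z`,
because an injective map that is semilinear over a ring isomorphism preserves linear
independence. In dimension at least two, any two nonzero vectors are either independent or have
a common independent partner, so the factor is constant. Evaluating `B (ρ • x)` in two ways then
gives `h ρ * λ = λ * g ρ`.
-/

open Function Submodule

section

variable {K L E F : Type*} [DivisionRing K] [DivisionRing L]
  [AddCommGroup E] [Module K E] [AddCommGroup F] [Module L F] {σ τ : K →+* L}

theorem LinearIndependent.pair_map_of_surjective_injective {A : E →ₛₗ[σ] F}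
    (hσ : Surjective σ) (hA : Injective A) {x z : E} (h : LinearIndependent K ![x, z]) :
    LinearIndependent L ![A x, A z] := by
  have := h.map_of_surjective_injectiveₛ σ A.toAddMonoidHom hσ hA A.map_smulₛₗ
  rwa [← FinVec.map_eq] at this

namespace LinearMap

variable {A : E →ₛₗ[σ] F} {B : E →+ F}

theorem factor_eq_of_linearIndependent_pair (hσ : Surjective σ) (hA : Injective A)
    (hB : ∀ x, B x ∈ L ∙ A x) {x z : E} (hxz : LinearIndependent K ![x, z]) {a b : L}
    (ha : B x = a • A x) (hb : B z = b • A z) : a = b := by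
  obtain ⟨c, hc⟩ := mem_span_singleton.mp (hB (x + z))
  have key : a • A x + b • A z = c • A x + c • A z := by
    rw [← ha, ← hb, ← map_add, ← hc, map_add, smul_add]
  obtain ⟨hac, hbc⟩ := (hxz.pair_map_of_surjective_injective hσ hA).eq_of_pair key
  rw [hac, hbc]

theorem factor_eq_of_ne_zero (hσ : Surjective σ) (hA : Injective A) (hB : ∀ x, B x ∈ L ∙ A x)
    (hrank : 1 < Module.rank K E) {x y : E} (hx : x ≠ 0) (hy : y ≠ 0) {a b : L}
    (ha : B x = a • A x) (hb : B y = b • A y) : a = b := by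
  by_cases hxy : LinearIndependent K ![x, y]
  · exact factor_eq_of_linearIndependent_pair hσ hA hB hxy ha hb
  -- `y` is a multiple of `x`, so a partner `z` independent of `x` is also independent of `y`.
  obtain ⟨c, rfl⟩ : ∃ c : K, c • x = y := by
    simpa [LinearIndependent.pair_iff' hx] using hxy
  have hc : c ≠ 0 := by
    rintro rfl
    simp at hy
  obtain ⟨z, hxz⟩ := exists_linearIndependent_pair_of_one_lt_rank hrank hx
  have hyz : LinearIndependent K ![c • x, z] := by
    rwa [← one_smul K z, LinearIndependent.pair_smul_smul_iff hc.isUnit isUnit_one]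
  obtain ⟨d, hd⟩ := mem_span_singleton.mp (hB z)
  exact (factor_eq_of_linearIndependent_pair hσ hA hB hxz ha hd.symm).trans
    (factor_eq_of_linearIndependent_pair hσ hA hB hyz hb hd.symm).symm

theorem exists_forall_eq_smul_of_mem_span_singleton (hσ : Surjective σ) (hA : Injective A)
    (hB : ∀ x, B x ∈ L ∙ A x) (hrank : 1 < Module.rank K E) :
    ∃ lam : L, ∀ x, B x = lam • A x := by
  have : Nontrivial E := rank_pos_iff_nontrivial.mp (zero_lt_one.trans hrank)
  obtain ⟨x₀, hx₀⟩ := exists_ne (0 : E)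
  obtain ⟨lam, hlam⟩ := mem_span_singleton.mp (hB x₀)
  refine ⟨lam, fun x => ?_⟩
  rcases eq_or_ne x 0 with rfl | hx
  · simp
  obtain ⟨a, ha⟩ := mem_span_singleton.mp (hB x)
  rw [← ha, factor_eq_of_ne_zero hσ hA hB hrank hx hx₀ ha.symm hlam.symm]

theorem map_mul_eq_mul_map_of_forall_eq_smul {B : E →ₛₗ[τ] F} {lam : L}
    (hBA : ∀ x, B x = lam • A x) {x : E} (hx : A x ≠ 0) (ρ : K) : τ ρ * lam = lam * σ ρ :=
  smul_left_injective L hx <| by simp only [mul_smul, ← hBA, ← map_smulₛₗ]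

end LinearMap

end

theorem fundamental_theorem_uniqueness_general
    {K L E F : Type*} [DivisionRing K] [DivisionRing L]
    [AddCommGroup E] [Module K E] [AddCommGroup F] [Module L F]
    (hdim : 3 ≤ Module.rank K E)
    (g h : K ≃+* L)
    (A B : E → F)
    (hAbij : Function.Bijective A)
    (hAadd : ∀ x y : E, A (x + y) = A x + A y)
    (hBadd : ∀ x y : E, B (x + y) = B x + B y)
    (hAsmul : ∀ (ρ : K) (x : E), A (ρ • x) = g ρ • A x)
    (hBsmul : ∀ (ρ : K) (x : E), B (ρ • x) = h ρ • B x) :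
    ((∀ x : E, x ≠ 0 → Submodule.span L {B x} = Submodule.span L {A x}) ↔
      (∃ lam : L, lam ≠ 0 ∧ ∀ x : E, B x = lam • A x)) ∧
    (∀ lam : L, lam ≠ 0 → (∀ x : E, B x = lam • A x) →
      ∀ ρ : K, h ρ = lam * g ρ * lam⁻¹) := by
  let A' : E →ₛₗ[(g : K →+* L)] F := ⟨⟨A, hAadd⟩, hAsmul⟩
  let B' : E →ₛₗ[(h : K →+* L)] F := ⟨⟨B, hBadd⟩, hBsmul⟩
  have hrank : 1 < Module.rank K E := lt_of_lt_of_le (by norm_num) hdim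
  have : Nontrivial E := rank_pos_iff_nontrivial.mp (zero_lt_one.trans hrank)
  obtain ⟨x₀, hx₀⟩ := exists_ne (0 : E)
  have hAx₀ : A x₀ ≠ 0 := (map_ne_zero_iff A' hAbij.injective).mpr hx₀
  refine ⟨⟨fun hspan => ?_, ?_⟩, fun lam hlam hBA ρ => ?_⟩
  · have hB : ∀ x, (B' : E →+ F) x ∈ L ∙ A' x := fun x => by
      rcases eq_or_ne x 0 with rfl | hx
      · simp
      · exact hspan x hx ▸ mem_span_singleton_self (B x)
    obtain ⟨lam, hlam⟩ : ∃ lam : L, ∀ x, B x = lam • A x :=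
      LinearMap.exists_forall_eq_smul_of_mem_span_singleton g.surjective hAbij.injective hB hrank
    refine ⟨lam, fun hlam0 => hAx₀ ?_, hlam⟩
    simpa [hlam, hlam0, eq_comm (a := ⊥)] using hspan x₀ hx₀
  · rintro ⟨lam, hlam, hBA⟩ x -
    rw [hBA]
    exact span_singleton_smul_eq (IsUnit.mk0 lam hlam) _
  · rw [eq_mul_inv_iff_mul_eq₀ hlam]
    exact LinearMap.map_mul_eq_mul_map_of_forall_eq_smul (A := A') (B := B') hBA hAx₀ ρ

/-- **Uniqueness part of the Fundamental Theorem of Projective Geometry.** Two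
semilinear bijections `A` (w.r.t. `g`) and `B` (w.r.t. `h`) induce the same map
on one-dimensional subspaces iff `B = λ • A` for some nonzero `λ`, and in that
case `h(ρ) = λ g(ρ) λ⁻¹`. -/
theorem fundamental_theorem_uniqueness
    {K L E F : Type*} [DivisionRing K] [DivisionRing L]
    [AddCommGroup E] [Module K E] [AddCommGroup F] [Module L F]
    (hdim : 3 ≤ Module.rank K E)
    (g h : K ≃+* L)
    (A B : E → F)
    (hAbij : Function.Bijective A) (hBbij : Function.Bijective B)
    (hAadd : ∀ x y : E, A (x + y) = A x + A y)
    (hBadd : ∀ x y : E, B (x + y) = B x + B y)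
    (hAsmul : ∀ (ρ : K) (x : E), A (ρ • x) = g ρ • A x)
    (hBsmul : ∀ (ρ : K) (x : E), B (ρ • x) = h ρ • B x) :
    ((∀ x : E, x ≠ 0 → Submodule.span L {B x} = Submodule.span L {A x}) ↔
      (∃ lam : L, lam ≠ 0 ∧ ∀ x : E, B x = lam • A x)) ∧
    (∀ lam : L, lam ≠ 0 → (∀ x : E, B x = lam • A x) →
      ∀ ρ : K, h ρ = lam * g ρ * lam⁻¹) :=
  fundamental_theorem_uniqueness_general hdim g h A B hAbij hAadd hBadd hAsmul hBsmul
end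

section
/- Let e₀ be a minimal projection in A, let x ∈ A satisfy e₀x = x, and let y ∈ A satisfy y* = y, y(xx*) = (xx*)y, and ye₀ = e₀y. Suppose that (xx*)y² is a nonzero projection. Then (e₀ye₀)(xx*)(e₀ye₀) = e₀. -/
/-! By minimality of `e₀`, the nonzero projection `q = (xx*)y²`, which lies under `e₀`, equals `e₀`.
Since `y` commutes with `e₀` and `xx*`, the left-hand side collapses to `e₀ q e₀ = e₀`. -/

theorem mul_star_self_mul_eq_of_mul_eq {A : Type*} [Semigroup A] [StarMul A] {e x : A}
    (he : star e = e) (hx : e * x = x) : x * star x * e = x * star x := by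
  conv_lhs => rw [← he]
  rw [mul_assoc, ← star_mul, hx]

theorem Commute.mul_self_mul_eq_mul {A : Type*} [Semigroup A] {e y : A}
    (he : e * e = e) (hye : Commute y e) : e * y * e = e * y := by
  rw [mul_assoc, hye.eq, ← mul_assoc, he]

theorem Commute.corner_mul_corner_eq {A : Type*} [Semigroup A] {e y a : A}
    (he : e * e = e) (hye : Commute y e) (hya : Commute y a) :
    (e * y * e) * a * (e * y * e) = e * (a * (y * y)) * e := by
  rw [hye.mul_self_mul_eq_mul he]
  nth_rw 2 [hye.eq.symm]
  simp only [mul_assoc]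
  rw [hya.left_comm]

theorem minimal_projection_normalization_general {A : Type*} [Ring A] [StarRing A]
    (e₀ : A) (he₀_idem : e₀ * e₀ = e₀) (he₀_star : star e₀ = e₀)
    (hmin : ∀ p : A, p * p = p → star p = p → p * e₀ = p → e₀ * p = p →
      p = 0 ∨ p = e₀)
    (x : A) (hx : e₀ * x = x)
    (y : A)
    (hy_comm : y * (x * star x) = (x * star x) * y)
    (hy_e₀ : y * e₀ = e₀ * y)
    (hq_idem : (x * star x * (y * y)) * (x * star x * (y * y)) = x * star x * (y * y))
    (hq_star : star (x * star x * (y * y)) = x * star x * (y * y))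
    (hq_ne : x * star x * (y * y) ≠ 0) :
    (e₀ * y * e₀) * (x * star x) * (e₀ * y * e₀) = e₀ := by
  have hye : Commute y e₀ := hy_e₀
  have hqe : x * star x * (y * y) * e₀ = x * star x * (y * y) := by
    rw [mul_assoc, (hye.mul_left hye).eq, ← mul_assoc,
      mul_star_self_mul_eq_of_mul_eq he₀_star hx]
  have heq : e₀ * (x * star x * (y * y)) = x * star x * (y * y) := by
    simp only [← mul_assoc, hx]
  have hq : x * star x * (y * y) = e₀ :=
    (hmin _ hq_idem hq_star hqe heq).resolve_left hq_ne
  rw [hye.corner_mul_corner_eq he₀_idem hy_comm, hq, he₀_idem, he₀_idem]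

/-- A computation in a `*`-ring: if `e₀` is a minimal projection, `e₀x = x`,
`y* = y`, `y` commutes with `xx*` and with `e₀`, and `(xx*)y²` is a nonzero
projection, then `(e₀ye₀)(xx*)(e₀ye₀) = e₀`. -/
theorem minimal_projection_normalization {A : Type*} [Ring A] [StarRing A]
    (e₀ : A) (he₀_idem : e₀ * e₀ = e₀) (he₀_star : star e₀ = e₀) (he₀_ne : e₀ ≠ 0)
    (hmin : ∀ p : A, p * p = p → star p = p → p * e₀ = p → e₀ * p = p →
      p = 0 ∨ p = e₀)
    (x : A) (hx : e₀ * x = x)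
    (y : A) (hy_star : star y = y)
    (hy_comm : y * (x * star x) = (x * star x) * y)
    (hy_e₀ : y * e₀ = e₀ * y)
    (hq_idem : (x * star x * (y * y)) * (x * star x * (y * y)) = x * star x * (y * y))
    (hq_star : star (x * star x * (y * y)) = x * star x * (y * y))
    (hq_ne : x * star x * (y * y) ≠ 0) :
    (e₀ * y * e₀) * (x * star x) * (e₀ * y * e₀) = e₀ :=
  minimal_projection_normalization_general e₀ he₀_idem he₀_star hmin x hx y hy_comm hy_e₀ hq_idem
    hq_star hq_ne
end

section
/- (Existence and uniqueness of the support of a state.) Let m be a probability measure on L such that whenever m(a) = m(b) = 0 for a, b ∈ L, there exists c ∈ L with a ≤ c, b ≤ c, and m(c) = 0. Then there is a unique element s ∈ L such that for every x ∈ L, m(x) = 1 if and only if s ≤ x. -/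
/-!
Choose, by Zorn's lemma, a maximal orthogonal family `S` of nonzero null elements. By separability
`S` is countable, so it has a join `n`, and `m n = 0` by countable additivity. The hypothesis on
`m` makes `n` the greatest null element: for a null `c ≥ n`, orthomodularity writes `c` as the
orthogonal join of `n` and `d = c ∧ nᗮ`; `d` is null and orthogonal to `S`, so `d = 0` by
maximality, and `c = n`. Since `m x = 1 ↔ m xᗮ = 0 ↔ xᗮ ≤ n ↔ nᗮ ≤ x`, `nᗮ` is the support, and a
support is unique, being the least element of measure one.
-/

/-- A separable, countably orthocomplete, orthomodular orthocomplemented poset: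
a bounded partial order with an orthocomplementation `compl` in which every
sequence of pairwise-orthogonal elements has a least upper bound, the
orthomodular law holds, and every pairwise-orthogonal set of nonzero elements
is countable. -/
structure OrthomodularPoset (L : Type*) [PartialOrder L] [BoundedOrder L] where
  compl : L → L
  compl_compl : ∀ a : L, compl (compl a) = a
  compl_antitone : ∀ a b : L, a ≤ b → compl b ≤ compl a
  lub_compl : ∀ a : L, IsLUB {a, compl a} ⊤
  glb_compl : ∀ a : L, IsGLB {a, compl a} ⊥
  ortho_sup : ∀ f : ℕ → L, (∀ i j : ℕ, i ≠ j → f i ≤ compl (f j)) →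
    ∃ s : L, IsLUB (Set.range f) s
  orthomodular : ∀ a b : L, a ≤ b →
    ∃ c : L, IsGLB {b, compl a} c ∧ IsLUB {a, c} b
  separable : ∀ S : Set L, (∀ a ∈ S, a ≠ ⊥) →
    (∀ a ∈ S, ∀ b ∈ S, a ≠ b → a ≤ compl b) → S.Countable

/-- A probability measure on an orthomodular poset: a `[0,1]`-valued function
with `m(0) = 0`, `m(1) = 1`, that is countably additive on pairwise-orthogonal
sequences (whenever the least upper bound exists). -/
def IsProbMeasure {L : Type*} [PartialOrder L] [BoundedOrder L]
    (P : OrthomodularPoset L) (m : L → ℝ) : Prop :=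
  (∀ a : L, 0 ≤ m a ∧ m a ≤ 1) ∧ m ⊥ = 0 ∧ m ⊤ = 1 ∧
    ∀ f : ℕ → L, (∀ i j : ℕ, i ≠ j → f i ≤ P.compl (f j)) →
      ∀ s : L, IsLUB (Set.range f) s → HasSum (fun i => m (f i)) (m s)

def IsSupport {L : Type*} [PartialOrder L] [BoundedOrder L] (m : L → ℝ) (s : L) : Prop :=
  ∀ x : L, m x = 1 ↔ s ≤ x

namespace OrthomodularPoset

variable {L : Type*} [PartialOrder L] [BoundedOrder L] (P : OrthomodularPoset L)

def IsOrthogonalSet (S : Set L) : Prop :=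
  S.Pairwise fun a b => a ≤ P.compl b

theorem compl_bot : P.compl ⊥ = ⊤ :=
  top_le_iff.mp <| (P.lub_compl ⊥).2 <| by rintro x (rfl | rfl) <;> simp

theorem exists_maximal_isOrthogonalSet_subset (T : Set L) :
    ∃ S, Maximal (fun S => S ⊆ T ∧ P.IsOrthogonalSet S) S :=
  zorn_subset _ fun c hc hchain =>
    ⟨⋃₀ c, ⟨Set.sUnion_subset fun _ hs => (hc hs).1,
        hchain.pairwise_sUnion.mpr fun _ hs => (hc hs).2⟩,
      fun _ hs => Set.subset_sUnion_of_mem hs⟩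

variable {P}

theorem le_compl_comm {a b : L} : a ≤ P.compl b ↔ b ≤ P.compl a :=
  ⟨fun h => by simpa only [P.compl_compl] using P.compl_antitone _ _ h,
    fun h => by simpa only [P.compl_compl] using P.compl_antitone _ _ h⟩

theorem compl_le_comm {a b : L} : P.compl a ≤ b ↔ P.compl b ≤ a := by
  simpa only [P.compl_compl] using le_compl_comm (P := P) (a := P.compl a) (b := P.compl b)

theorem eq_bot_of_le_of_le_compl {a b : L} (hb : a ≤ b) (hb' : a ≤ P.compl b) : a = ⊥ :=
  le_bot_iff.mp <| (P.glb_compl b).2 <| by rintro x (rfl | rfl) <;> assumption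

theorem exists_orthogonal_seq_of_countable {S : Set L} (hS : S.Countable)
    (hSo : P.IsOrthogonalSet S) :
    ∃ f : ℕ → L, (∀ i j, i ≠ j → f i ≤ P.compl (f j)) ∧
      S ⊆ Set.range f ∧ Set.range f ⊆ insert ⊥ S := by
  have := hS.to_subtype
  obtain ⟨e, he⟩ := Countable.exists_injective_nat S
  let f : ℕ → L := Function.extend e Subtype.val fun _ => ⊥
  have hf_apply (x : S) : f (e x) = x := he.extend_apply _ _ x
  have hf_bot {i : ℕ} (hi : ¬∃ x, e x = i) : f i = ⊥ := Function.extend_apply' _ _ i hi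
  refine ⟨f, fun i j hij => ?_, fun x hx => ⟨e ⟨x, hx⟩, hf_apply _⟩, ?_⟩
  · by_cases hi : ∃ x, e x = i
    · by_cases hj : ∃ y, e y = j
      · obtain ⟨x, rfl⟩ := hi
        obtain ⟨y, rfl⟩ := hj
        rw [hf_apply, hf_apply]
        exact hSo x.2 y.2 (Subtype.coe_ne_coe.mpr (ne_of_apply_ne e hij))
      · rw [hf_bot hj, P.compl_bot]
        exact le_top
    · rw [hf_bot hi]
      exact bot_le
  · rintro _ ⟨i, rfl⟩
    by_cases hi : ∃ x, e x = i
    · obtain ⟨x, rfl⟩ := hi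
      exact Or.inr (hf_apply x ▸ x.2)
    · exact Or.inl (hf_bot hi)

end OrthomodularPoset

namespace IsProbMeasure

open OrthomodularPoset

variable {L : Type*} [PartialOrder L] [BoundedOrder L] {P : OrthomodularPoset L} {m : L → ℝ}

theorem nonneg (hm : IsProbMeasure P m) (a : L) : 0 ≤ m a := (hm.1 a).1

theorem apply_bot (hm : IsProbMeasure P m) : m ⊥ = 0 := hm.2.1

theorem apply_top (hm : IsProbMeasure P m) : m ⊤ = 1 := hm.2.2.1

theorem hasSum (hm : IsProbMeasure P m) {f : ℕ → L} (hf : ∀ i j, i ≠ j → f i ≤ P.compl (f j))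
    {s : L} (hs : IsLUB (Set.range f) s) : HasSum (fun i => m (f i)) (m s) :=
  hm.2.2.2 f hf s hs

theorem add_of_isLUB_pair (hm : IsProbMeasure P m) {a b s : L} (hab : a ≤ P.compl b)
    (hs : IsLUB {a, b} s) : m s = m a + m b := by
  let f : ℕ → L := fun n => if n = 0 then a else if n = 1 then b else ⊥
  have hf_orth : ∀ i j, i ≠ j → f i ≤ P.compl (f j) := by
    rintro (_ | _ | i) (_ | _ | j) hij <;> simp [f, P.compl_bot, hab, le_compl_comm.mp hab] at hij ⊢
  have hf_upper : upperBounds (Set.range f) = upperBounds {a, b} := by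
    ext u
    simp only [mem_upperBounds, Set.forall_mem_range, Set.mem_insert_iff, Set.mem_singleton_iff,
      forall_eq_or_imp, forall_eq]
    refine ⟨fun h => ⟨h 0, h 1⟩, fun h => ?_⟩
    rintro (_ | _ | n) <;> simp [f, h.1, h.2]
  have hf_sum : HasSum (fun i => m (f i)) (m a + m b) := by
    have h : HasSum (fun i => m (f i)) (∑ i ∈ Finset.range 2, m (f i)) :=
      hasSum_sum_of_ne_finset_zero fun n hn => by
        simp only [Finset.mem_range, not_lt] at hn
        simp [f, show n ≠ 0 by omega, show n ≠ 1 by omega, hm.apply_bot]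
    simpa [Finset.sum_range_succ, f] using h
  exact (hm.hasSum hf_orth ((isLUB_congr hf_upper).mpr hs)).unique hf_sum

theorem mono (hm : IsProbMeasure P m) {a b : L} (hab : a ≤ b) : m a ≤ m b := by
  obtain ⟨c, hc, hb⟩ := P.orthomodular a b hab
  have hac : a ≤ P.compl c := le_compl_comm.mp (hc.1 (by simp))
  linarith [hm.add_of_isLUB_pair hac hb, hm.nonneg c]

theorem apply_eq_one_iff (hm : IsProbMeasure P m) (a : L) : m a = 1 ↔ m (P.compl a) = 0 := by
  have h := hm.add_of_isLUB_pair (by rw [P.compl_compl]) (P.lub_compl a)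
  rw [hm.apply_top] at h
  constructor <;> intro <;> linarith

theorem le_of_maximal_isOrthogonalSet (hm : IsProbMeasure P m) {S : Set L}
    (hS : Maximal (fun S => S ⊆ {a | m a = 0} \ {⊥} ∧ P.IsOrthogonalSet S) S)
    {n c : L} (hn : n ∈ upperBounds S) (hnc : n ≤ c) (hc : m c = 0) : c ≤ n := by
  obtain ⟨d, hd, hc_lub⟩ := P.orthomodular n c hnc
  have hdc : d ≤ c := hd.1 (by simp)
  have hdn : d ≤ P.compl n := hd.1 (by simp)
  suffices d = ⊥ from hc_lub.2 (by rintro x (rfl | rfl) <;> simp [this])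
  by_contra hd_ne
  have hd_null : m d = 0 := le_antisymm (hc ▸ hm.mono hdc) (hm.nonneg d)
  have hd_orth : ∀ x ∈ S, d ≤ P.compl x := fun x hx => hdn.trans (P.compl_antitone _ _ (hn hx))
  have hdS : d ∈ S := hS.mem_of_prop_insert
    ⟨Set.insert_subset ⟨hd_null, hd_ne⟩ hS.1.1,
      hS.1.2.insert fun x hx _ => ⟨hd_orth x hx, le_compl_comm.mp (hd_orth x hx)⟩⟩
  exact hd_ne (eq_bot_of_le_of_le_compl (hn hdS) hdn)

theorem exists_isGreatest_null (hm : IsProbMeasure P m)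
    (hjoin : ∀ a b : L, m a = 0 → m b = 0 → ∃ c : L, a ≤ c ∧ b ≤ c ∧ m c = 0) :
    ∃ n, IsGreatest {a | m a = 0} n := by
  obtain ⟨S, hS⟩ := P.exists_maximal_isOrthogonalSet_subset ({a | m a = 0} \ {⊥})
  have hS_countable : S.Countable := P.separable S (fun a ha => (hS.1.1 ha).2) hS.1.2
  obtain ⟨f, hf_orth, hSf, hfS⟩ := exists_orthogonal_seq_of_countable hS_countable hS.1.2
  obtain ⟨n, hn⟩ := P.ortho_sup f hf_orth
  have hf_null (i : ℕ) : m (f i) = 0 :=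
    (hfS ⟨i, rfl⟩).elim (fun h => h ▸ hm.apply_bot) fun h => (hS.1.1 h).1
  have hn_null : m n = 0 :=
    (hm.hasSum hf_orth hn).unique (by simpa only [hf_null] using hasSum_zero)
  refine ⟨n, hn_null, fun a ha => ?_⟩
  obtain ⟨c, hnc, hac, hc⟩ := hjoin n a hn_null ha
  exact hac.trans (hm.le_of_maximal_isOrthogonalSet hS (fun x hx => hn.1 (hSf hx)) hnc hc)

theorem isSupport_compl (hm : IsProbMeasure P m) {n : L} (hn : IsGreatest {a | m a = 0} n) :
    IsSupport m (P.compl n) := fun x => by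
  rw [hm.apply_eq_one_iff, compl_le_comm]
  exact ⟨fun h => hn.2 h, fun h => le_antisymm ((hm.mono h).trans_eq hn.1) (hm.nonneg _)⟩

end IsProbMeasure

theorem IsSupport.eq {L : Type*} [PartialOrder L] [BoundedOrder L] {m : L → ℝ} {s t : L}
    (hs : IsSupport m s) (ht : IsSupport m t) : s = t :=
  le_antisymm ((hs t).mp ((ht t).mpr le_rfl)) ((ht s).mp ((hs s).mpr le_rfl))

/-- **Existence and uniqueness of the support of a state**: a probability
measure `m` such that any two null elements lie below a common null element has
a unique support. -/
theorem exists_unique_support {L : Type*} [PartialOrder L] [BoundedOrder L]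
    (P : OrthomodularPoset L) (m : L → ℝ) (hm : IsProbMeasure P m)
    (hjoin : ∀ a b : L, m a = 0 → m b = 0 → ∃ c : L, a ≤ c ∧ b ≤ c ∧ m c = 0) :
    ∃! s : L, ∀ x : L, m x = 1 ↔ s ≤ x := by
  obtain ⟨n, hn⟩ := hm.exists_isGreatest_null hjoin
  exact ⟨P.compl n, hm.isSupport_compl hn, fun t ht => IsSupport.eq ht (hm.isSupport_compl hn)⟩
end
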